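/- arXiv:2406.03938 — 8 statements merged into one kernel-verified Lean document; each statement's English description precedes it below -/
import Mathlib

section
/- Let n,m ≥ 1 and let u : {0,1}ⁿ × {0,1}ᵐ → ℝ be a payoff function. Suppose the two-team game has no STRICT pure Nash equilibrium, i.e., for every corner (x,y) ∈ {0,1}ⁿ × {0,1}ᵐ, either there exists i ∈ [n] with u(x,y) ≤ u(x̄ⁱ,y), or there exists j ∈ [m] with u(x,y) ≥ u(x,ȳʲ). Then for every solution (p(t),q(t)) of the Red Queen dynamics defined for all t ≥ 0 with values in (0,1)^{n+m}, ∫₀^∞ (H(p(t)) + H(q(t))) dt = ∞. -/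
open MeasureTheory

noncomputable section

/-- `p_{i,b}`: the probability that gene `i` takes allele `b`
(`b = false ↦ pᵢ`, `b = true ↦ 1 − pᵢ`). -/
def coord {n : ℕ} (p : Fin n → ℝ) (i : Fin n) (b : Bool) : ℝ :=
  if b then 1 - p i else p i

/-- `x` with its `i`-th bit flipped. -/
def bflip {n : ℕ} (x : Fin n → Bool) (i : Fin n) : Fin n → Bool :=
  Function.update x i (!x i)

/-- `K_{A,i}(x,y,p,q) = Π_{i'≠i} p_{i',x_{i'}} Π_j q_{j,y_j}`. -/
def KA {n m : ℕ} (p : Fin n → ℝ) (q : Fin m → ℝ) (i : Fin n)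
    (x : Fin n → Bool) (y : Fin m → Bool) : ℝ :=
  (∏ i' ∈ Finset.univ.erase i, coord p i' (x i')) * ∏ j, coord q j (y j)

/-- `K_{B,j}(x,y,p,q) = Π_i p_{i,x_i} Π_{j'≠j} q_{j',y_{j'}}`. -/
def KB {n m : ℕ} (p : Fin n → ℝ) (q : Fin m → ℝ) (j : Fin m)
    (x : Fin n → Bool) (y : Fin m → Bool) : ℝ :=
  (∏ i, coord p i (x i)) * ∏ j' ∈ Finset.univ.erase j, coord q j' (y j')

/-- The average payoff `û(p,q) = Σ_{x,y} P(x,y) u(x,y)` where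
`P(x,y) = Π_i p_{i,x_i} Π_j q_{j,y_j}`. -/
def uhat {n m : ℕ} (u : (Fin n → Bool) → (Fin m → Bool) → ℝ)
    (p : Fin n → ℝ) (q : Fin m → ℝ) : ℝ :=
  ∑ x : Fin n → Bool, ∑ y : Fin m → Bool,
    ((∏ i, coord p i (x i)) * ∏ j, coord q j (y j)) * u x y

/-- The average payoff conditioned on `xᵢ = b`:
`û_{i,b}(p,q) = Σ_{x : x_i = b} Σ_y K_{A,i}(x,y,p,q) u(x,y)`. -/
def uhatA {n m : ℕ} (u : (Fin n → Bool) → (Fin m → Bool) → ℝ)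
    (p : Fin n → ℝ) (q : Fin m → ℝ) (i : Fin n) (b : Bool) : ℝ :=
  ∑ x : Fin n → Bool, ∑ y : Fin m → Bool,
    if x i = b then KA p q i x y * u x y else 0

/-- The average payoff conditioned on `yⱼ = b`:
`û_{j,b}(p,q) = Σ_x Σ_{y : y_j = b} K_{B,j}(x,y,p,q) u(x,y)`. -/
def uhatB {n m : ℕ} (u : (Fin n → Bool) → (Fin m → Bool) → ℝ)
    (p : Fin n → ℝ) (q : Fin m → ℝ) (j : Fin m) (b : Bool) : ℝ :=
  ∑ x : Fin n → Bool, ∑ y : Fin m → Bool,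
    if y j = b then KB p q j x y * u x y else 0

/-- `(p,q)` is a solution of the Red Queen dynamics
`ṗᵢ = pᵢ(û_{i,0}(p,q) − û(p,q))`, `q̇ⱼ = −qⱼ(û_{j,0}(p,q) − û(p,q))`
for all times `t ≥ 0`. -/
def RQSolution {n m : ℕ} (u : (Fin n → Bool) → (Fin m → Bool) → ℝ)
    (p : ℝ → Fin n → ℝ) (q : ℝ → Fin m → ℝ) : Prop :=
  (∀ t, 0 ≤ t → ∀ i, HasDerivAt (fun s => p s i)
      (p t i * (uhatA u (p t) (q t) i false - uhat u (p t) (q t))) t) ∧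
  (∀ t, 0 ≤ t → ∀ j, HasDerivAt (fun s => q s j)
      (-(q t j * (uhatB u (p t) (q t) j false - uhat u (p t) (q t)))) t)

/-- `(p,q)` takes values in the open cube `(0,1)^{n+m}` at all times `t ≥ 0`. -/
def InteriorValues {n m : ℕ} (p : ℝ → Fin n → ℝ) (q : ℝ → Fin m → ℝ) : Prop :=
  ∀ t, 0 ≤ t → (∀ i, p t i ∈ Set.Ioo (0:ℝ) 1) ∧ (∀ j, q t j ∈ Set.Ioo (0:ℝ) 1)

/-- Binary Shannon entropy. -/
def binEnt (s : ℝ) : ℝ := -(s * Real.log s) - (1 - s) * Real.log (1 - s)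

/-- The entropy `H(p) = Σᵢ h(pᵢ)` of a population. -/
def ent {n : ℕ} (p : Fin n → ℝ) : ℝ := ∑ i, binEnt (p i)

/-- The state `(p,q)` is `γ`-near the corner `(x,y)`:
`p_{i,xᵢ} > 1 − γ` for all `i` and `q_{j,yⱼ} > 1 − γ` for all `j`. -/
def Near {n m : ℕ} (γ : ℝ) (x : Fin n → Bool) (y : Fin m → Bool)
    (p : Fin n → ℝ) (q : Fin m → ℝ) : Prop :=
  (∀ i, 1 - γ < coord p i (x i)) ∧ (∀ j, 1 - γ < coord q j (y j))


section Aux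
lemma binEnt_nonneg {s : ℝ} (h0 : 0 < s) (h1 : s < 1) : 0 ≤ binEnt s := by
  have l1 : Real.log s ≤ 0 := Real.log_nonpos h0.le h1.le
  have l2 : Real.log (1 - s) ≤ 0 := Real.log_nonpos (by linarith) (by linarith)
  unfold binEnt; nlinarith

lemma binEnt_pos {s : ℝ} (h0 : 0 < s) (h1 : s < 1) : 0 < binEnt s := by
  have l1 : Real.log s < 0 := Real.log_neg h0 h1
  have l2 : Real.log (1 - s) < 0 := Real.log_neg (by linarith) (by linarith)
  unfold binEnt; nlinarith

lemma binEnt_one_sub (s : ℝ) : binEnt (1 - s) = binEnt s := by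
  unfold binEnt; ring_nf

lemma binEnt_half : binEnt (1/2 : ℝ) = Real.log 2 := by
  unfold binEnt
  rw [show (1:ℝ) - 1/2 = 1/2 by norm_num, show (1:ℝ)/2 = 2⁻¹ by norm_num, Real.log_inv]
  ring

lemma hasDerivAt_binEnt {s : ℝ} (h0 : 0 < s) (h1 : s < 1) :
    HasDerivAt binEnt (Real.log (1 - s) - Real.log s) s := by
  have hs : s ≠ 0 := ne_of_gt h0
  have hs1 : (1:ℝ) - s ≠ 0 := by linarith
  have d1 : HasDerivAt (fun x : ℝ => x * Real.log x) (Real.log s + 1) s :=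
    Real.hasDerivAt_mul_log hs
  have inner : HasDerivAt (fun x : ℝ => 1 - x) (-1) s := by
    simpa using (hasDerivAt_const s (1:ℝ)).fun_sub (hasDerivAt_id s)
  have outer : HasDerivAt (fun y : ℝ => y * Real.log y) (Real.log (1 - s) + 1) (1 - s) :=
    Real.hasDerivAt_mul_log hs1
  have d2 : HasDerivAt (fun x : ℝ => (1 - x) * Real.log (1 - x))
      ((Real.log (1 - s) + 1) * (-1)) s := outer.comp s inner
  have h := (d1.fun_neg).fun_sub d2
  have hb : binEnt = fun x : ℝ => -(x * Real.log x) - (1 - x) * Real.log (1 - x) := rfl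
  rw [hb]
  convert h using 1
  exacts [rfl, rfl, by ring]

lemma mul_neg_log_le {s : ℝ} (h0 : 0 < s) : s * (-Real.log s) ≤ 1 - s := by
  have h2 : Real.log s⁻¹ ≤ s⁻¹ - 1 := Real.log_le_sub_one_of_pos (inv_pos.2 h0)
  rw [Real.log_inv] at h2
  have := mul_le_mul_of_nonneg_left h2 h0.le
  calc s * (-Real.log s) ≤ s * (s⁻¹ - 1) := this
    _ = 1 - s := by field_simp

lemma abs_dbinEnt_le_one {s : ℝ} (h0 : 0 < s) (h1 : s < 1) :
    s * (1 - s) * |Real.log (1 - s) - Real.log s| ≤ 1 := by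
  have l1 : Real.log s < 0 := Real.log_neg h0 h1
  have l2 : Real.log (1 - s) < 0 := Real.log_neg (by linarith) (by linarith)
  have b1 : s * (-Real.log s) ≤ 1 - s := mul_neg_log_le h0
  have b2 : (1 - s) * (-Real.log (1 - s)) ≤ s := by
    have := mul_neg_log_le (show (0:ℝ) < 1 - s by linarith)
    linarith
  have habs : |Real.log (1 - s) - Real.log s| ≤ (-Real.log s) + (-Real.log (1 - s)) := by
    rw [abs_le]; constructor <;> nlinarith
  have hnn : (0:ℝ) ≤ s * (1 - s) := by nlinarith
  calc s * (1 - s) * |Real.log (1 - s) - Real.log s|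
      ≤ s * (1 - s) * ((-Real.log s) + (-Real.log (1 - s))) :=
        mul_le_mul_of_nonneg_left habs hnn
    _ = (1 - s) * (s * (-Real.log s)) + s * ((1 - s) * (-Real.log (1 - s))) := by ring
    _ ≤ (1 - s) * (1 - s) + s * s := by nlinarith
    _ ≤ 1 := by nlinarith

lemma dbinEnt_key {s : ℝ} (h0 : 0 < s) (h1 : s < 1) :
    s * (1 - s) * (Real.log s - Real.log (1 - s)) ≤ binEnt s := by
  have l1 : Real.log s < 0 := Real.log_neg h0 h1
  have l2 : Real.log (1 - s) < 0 := Real.log_neg (by linarith) (by linarith)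
  unfold binEnt
  nlinarith [mul_nonneg (mul_nonneg h0.le (neg_nonneg.2 l1.le)) (by linarith : (0:ℝ) ≤ 2 - s),
    mul_nonneg (mul_nonneg (by linarith : (0:ℝ) ≤ 1 - s) (neg_nonneg.2 l2.le))
      (by linarith : (0:ℝ) ≤ 1 - s)]

lemma min_le_binEnt {s : ℝ} (h0 : 0 < s) (h1 : s < 1) :
    min s (1 - s) * Real.log 2 ≤ binEnt s := by
  rcases le_total s (1 - s) with h | h
  · rw [min_eq_left h]
    have hls : Real.log s ≤ Real.log (1/2 : ℝ) := Real.log_le_log h0 (by linarith)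
    rw [show (1:ℝ)/2 = 2⁻¹ by norm_num, Real.log_inv] at hls
    have l2 : Real.log (1 - s) < 0 := Real.log_neg (by linarith) (by linarith)
    unfold binEnt; nlinarith
  · rw [min_eq_right h]
    have hls : Real.log (1 - s) ≤ Real.log (1/2 : ℝ) :=
      Real.log_le_log (by linarith) (by linarith)
    rw [show (1:ℝ)/2 = 2⁻¹ by norm_num, Real.log_inv] at hls
    have l1 : Real.log s < 0 := Real.log_neg h0 h1
    unfold binEnt; nlinarith

section Comb
variable {n m : ℕ}

lemma coord_nonneg {p : Fin n → ℝ} (hp : ∀ i, p i ∈ Set.Icc (0:ℝ) 1) (i : Fin n) (b : Bool) :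
    0 ≤ coord p i b := by
  obtain ⟨h0, h1⟩ := hp i
  cases b <;> simp [coord] <;> linarith

lemma coord_le_one {p : Fin n → ℝ} (hp : ∀ i, p i ∈ Set.Icc (0:ℝ) 1) (i : Fin n) (b : Bool) :
    coord p i b ≤ 1 := by
  obtain ⟨h0, h1⟩ := hp i
  cases b <;> simp [coord] <;> linarith

lemma sum_boole_prod (f : Fin n → Bool → ℝ) (i : Fin n) (b : Bool) :
    (∑ x : Fin n → Bool, if x i = b then ∏ i' ∈ Finset.univ.erase i, f i' (x i') else 0)
      = ∏ i' ∈ Finset.univ.erase i, (f i' false + f i' true) := by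
  classical
  set g : Fin n → Bool → ℝ := fun i' b' => if i' = i then (if b' = b then 1 else 0) else f i' b'
    with hg
  have h1 : ∀ x : Fin n → Bool,
      (if x i = b then ∏ i' ∈ Finset.univ.erase i, f i' (x i') else 0)
        = ∏ i', g i' (x i') := by
    intro x
    rw [← Finset.mul_prod_erase Finset.univ (fun i' => g i' (x i')) (Finset.mem_univ i)]
    have h2 : ∏ i' ∈ Finset.univ.erase i, g i' (x i')
        = ∏ i' ∈ Finset.univ.erase i, f i' (x i') :=
      Finset.prod_congr rfl (fun i' hi' => by
        simp [hg, Finset.ne_of_mem_erase hi'])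
    rw [h2]
    have hgi : g i (x i) = if x i = b then 1 else 0 := by simp [hg]
    rw [hgi]
    by_cases h : x i = b
    · rw [if_pos h, if_pos h, one_mul]
    · rw [if_neg h, if_neg h, zero_mul]
  simp only [h1]
  rw [← Fintype.piFinset_univ, ← Finset.prod_univ_sum]
  rw [← Finset.mul_prod_erase Finset.univ _ (Finset.mem_univ i)]
  have hterm : (∑ b' : Bool, g i b') = 1 := by
    rw [Fintype.sum_bool, hg]; cases b <;> simp
  rw [hterm, one_mul]
  refine Finset.prod_congr rfl fun i' hi' => ?_
  rw [Fintype.sum_bool, hg]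
  simp [Finset.ne_of_mem_erase hi', add_comm]

lemma sum_prod_coord (q : Fin m → ℝ) :
    ∑ y : Fin m → Bool, ∏ j, coord q j (y j) = 1 := by
  classical
  rw [← Fintype.piFinset_univ, ← Finset.prod_univ_sum]
  apply Finset.prod_eq_one
  intro j _
  rw [Fintype.sum_bool]
  simp [coord]

lemma sum_KA_one (p : Fin n → ℝ) (q : Fin m → ℝ) (i : Fin n) (b : Bool) :
    (∑ x : Fin n → Bool, ∑ y : Fin m → Bool, if x i = b then KA p q i x y else 0) = 1 := by
  classical
  have h : ∀ x : Fin n → Bool, (∑ y : Fin m → Bool, if x i = b then KA p q i x y else 0)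
      = (if x i = b then ∏ i' ∈ Finset.univ.erase i, coord p i' (x i') else 0) := by
    intro x
    split_ifs with h
    · simp only [KA]
      rw [← Finset.mul_sum, sum_prod_coord, mul_one]
    · simp
  simp only [h, sum_boole_prod]
  apply Finset.prod_eq_one
  intro i' _
  simp [coord]

lemma sum_KB_one (p : Fin n → ℝ) (q : Fin m → ℝ) (j : Fin m) (b : Bool) :
    (∑ x : Fin n → Bool, ∑ y : Fin m → Bool, if y j = b then KB p q j x y else 0) = 1 := by
  classical
  have h : ∀ x : Fin n → Bool, (∑ y : Fin m → Bool, if y j = b then KB p q j x y else 0)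
      = (∏ i, coord p i (x i)) *
          (∑ y : Fin m → Bool, if y j = b then ∏ j' ∈ Finset.univ.erase j, coord q j' (y j') else 0) := by
    intro x
    rw [Finset.mul_sum]
    refine Finset.sum_congr rfl fun y _ => ?_
    split_ifs with h
    · simp [KB]
    · simp
  simp only [h, sum_boole_prod]
  rw [← Finset.sum_mul]
  rw [sum_prod_coord]
  rw [one_mul]
  apply Finset.prod_eq_one
  intro j' _
  simp [coord]

lemma KA_nonneg {p : Fin n → ℝ} {q : Fin m → ℝ} (hp : ∀ i, p i ∈ Set.Icc (0:ℝ) 1)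
    (hq : ∀ j, q j ∈ Set.Icc (0:ℝ) 1) (i : Fin n) (x : Fin n → Bool) (y : Fin m → Bool) :
    0 ≤ KA p q i x y :=
  mul_nonneg (Finset.prod_nonneg fun i' _ => coord_nonneg hp i' _)
    (Finset.prod_nonneg fun j _ => coord_nonneg hq j _)

lemma KB_nonneg {p : Fin n → ℝ} {q : Fin m → ℝ} (hp : ∀ i, p i ∈ Set.Icc (0:ℝ) 1)
    (hq : ∀ j, q j ∈ Set.Icc (0:ℝ) 1) (j : Fin m) (x : Fin n → Bool) (y : Fin m → Bool) :
    0 ≤ KB p q j x y :=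
  mul_nonneg (Finset.prod_nonneg fun i' _ => coord_nonneg hp i' _)
    (Finset.prod_nonneg fun j' _ => coord_nonneg hq j' _)

lemma uhat_eq_A (u : (Fin n → Bool) → (Fin m → Bool) → ℝ) (p : Fin n → ℝ) (q : Fin m → ℝ)
    (i : Fin n) :
    uhat u p q = p i * uhatA u p q i false + (1 - p i) * uhatA u p q i true := by
  classical
  unfold uhat uhatA
  rw [Finset.mul_sum, Finset.mul_sum, ← Finset.sum_add_distrib]
  refine Finset.sum_congr rfl fun x _ => ?_
  rw [Finset.mul_sum, Finset.mul_sum, ← Finset.sum_add_distrib]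
  refine Finset.sum_congr rfl fun y _ => ?_
  rw [← Finset.mul_prod_erase Finset.univ (fun i'' => coord p i'' (x i'')) (Finset.mem_univ i)]
  cases h : x i <;> simp [h, KA, coord] <;> ring

lemma uhat_eq_B (u : (Fin n → Bool) → (Fin m → Bool) → ℝ) (p : Fin n → ℝ) (q : Fin m → ℝ)
    (j : Fin m) :
    uhat u p q = q j * uhatB u p q j false + (1 - q j) * uhatB u p q j true := by
  classical
  unfold uhat uhatB
  rw [Finset.mul_sum, Finset.mul_sum, ← Finset.sum_add_distrib]
  refine Finset.sum_congr rfl fun x _ => ?_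
  rw [Finset.mul_sum, Finset.mul_sum, ← Finset.sum_add_distrib]
  refine Finset.sum_congr rfl fun y _ => ?_
  rw [← Finset.mul_prod_erase Finset.univ (fun j' => coord q j' (y j')) (Finset.mem_univ j)]
  cases h : y j <;> simp [h, KB, coord] <;> ring

end Comb

section Near
variable {n m : ℕ}

lemma one_sub_sum_le_prod {ι : Type*} (s : Finset ι) (a : ι → ℝ)
    (h0 : ∀ k ∈ s, 0 ≤ a k) (h1 : ∀ k ∈ s, a k ≤ 1) :
    1 - ∑ k ∈ s, (1 - a k) ≤ ∏ k ∈ s, a k := by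
  classical
  revert h0 h1
  induction s using Finset.induction_on with
  | empty => intro _ _; simp
  | @insert j s hj ih =>
    intro h0 h1
    have h0' : ∀ k ∈ s, 0 ≤ a k := fun k hk => h0 k (Finset.mem_insert_of_mem hk)
    have h1' : ∀ k ∈ s, a k ≤ 1 := fun k hk => h1 k (Finset.mem_insert_of_mem hk)
    have ih' := ih h0' h1'
    rw [Finset.sum_insert hj, Finset.prod_insert hj]
    have haj0 : 0 ≤ a j := h0 j (Finset.mem_insert_self j s)
    have haj1 : a j ≤ 1 := h1 j (Finset.mem_insert_self j s)
    have hs0 : 0 ≤ ∑ k ∈ s, (1 - a k) := Finset.sum_nonneg fun k hk => by linarith [h1' k hk]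
    nlinarith [mul_le_mul_of_nonneg_left ih' haj0]

lemma abs_uhatA_le (u : (Fin n → Bool) → (Fin m → Bool) → ℝ) {p : Fin n → ℝ} {q : Fin m → ℝ}
    (hp : ∀ i, p i ∈ Set.Icc (0:ℝ) 1) (hq : ∀ j, q j ∈ Set.Icc (0:ℝ) 1)
    {M : ℝ} (hM : ∀ x y, |u x y| ≤ M) (i : Fin n) (b : Bool) :
    |uhatA u p q i b| ≤ M := by
  have key : |uhatA u p q i b| ≤ ∑ x : Fin n → Bool, ∑ y : Fin m → Bool,
      (if x i = b then KA p q i x y else 0) * M := by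
    rw [uhatA]
    refine (Finset.abs_sum_le_sum_abs _ _).trans (Finset.sum_le_sum fun x _ => ?_)
    refine (Finset.abs_sum_le_sum_abs _ _).trans (Finset.sum_le_sum fun y _ => ?_)
    by_cases h : x i = b
    · rw [if_pos h, if_pos h, abs_mul, abs_of_nonneg (KA_nonneg hp hq i x y)]
      exact mul_le_mul_of_nonneg_left (hM x y) (KA_nonneg hp hq i x y)
    · rw [if_neg h, if_neg h, abs_zero, zero_mul]
  calc |uhatA u p q i b| ≤ _ := key
    _ = M := by
        simp only [← Finset.sum_mul]
        rw [sum_KA_one, one_mul]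

lemma abs_uhatB_le (u : (Fin n → Bool) → (Fin m → Bool) → ℝ) {p : Fin n → ℝ} {q : Fin m → ℝ}
    (hp : ∀ i, p i ∈ Set.Icc (0:ℝ) 1) (hq : ∀ j, q j ∈ Set.Icc (0:ℝ) 1)
    {M : ℝ} (hM : ∀ x y, |u x y| ≤ M) (j : Fin m) (b : Bool) :
    |uhatB u p q j b| ≤ M := by
  have key : |uhatB u p q j b| ≤ ∑ x : Fin n → Bool, ∑ y : Fin m → Bool,
      (if y j = b then KB p q j x y else 0) * M := by
    rw [uhatB]
    refine (Finset.abs_sum_le_sum_abs _ _).trans (Finset.sum_le_sum fun x _ => ?_)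
    refine (Finset.abs_sum_le_sum_abs _ _).trans (Finset.sum_le_sum fun y _ => ?_)
    by_cases h : y j = b
    · rw [if_pos h, if_pos h, abs_mul, abs_of_nonneg (KB_nonneg hp hq j x y)]
      exact mul_le_mul_of_nonneg_left (hM x y) (KB_nonneg hp hq j x y)
    · rw [if_neg h, if_neg h, abs_zero, zero_mul]
  calc |uhatB u p q j b| ≤ _ := key
    _ = M := by
        simp only [← Finset.sum_mul]
        rw [sum_KB_one, one_mul]

lemma uhatA_near (u : (Fin n → Bool) → (Fin m → Bool) → ℝ) {p : Fin n → ℝ} {q : Fin m → ℝ}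
    (hp : ∀ i, p i ∈ Set.Icc (0:ℝ) 1) (hq : ∀ j, q j ∈ Set.Icc (0:ℝ) 1)
    {M : ℝ} (hM : ∀ x y, |u x y| ≤ M) (x : Fin n → Bool) (y : Fin m → Bool)
    (i : Fin n) (b : Bool) :
    |uhatA u p q i b - u (Function.update x i b) y| ≤
      2 * M * ((∑ i' ∈ Finset.univ.erase i, (1 - coord p i' (x i')))
        + ∑ j, (1 - coord q j (y j))) := by
  classical
  set xb := Function.update x i b with hxb
  set z0 : (Fin n → Bool) × (Fin m → Bool) := (xb, y) with hz0
  set F : (Fin n → Bool) × (Fin m → Bool) → ℝ :=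
    fun z => if z.1 i = b then KA p q i z.1 z.2 * u z.1 z.2 else 0 with hF
  set G : (Fin n → Bool) × (Fin m → Bool) → ℝ :=
    fun z => if z.1 i = b then KA p q i z.1 z.2 else 0 with hG
  have hxbi : xb i = b := Function.update_self i b x
  have hsum : uhatA u p q i b = ∑ z, F z := by
    rw [uhatA, Fintype.sum_prod_type]
  have hGsum : (∑ z, G z) = 1 := by
    rw [hG, Fintype.sum_prod_type]
    exact sum_KA_one p q i b
  have hG0 : ∀ z, 0 ≤ G z := by
    intro z
    by_cases h : z.1 i = b
    · rw [hG]; dsimp only; rw [if_pos h]; exact KA_nonneg hp hq i _ _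
    · rw [hG]; dsimp only; rw [if_neg h]
  have hM0 : 0 ≤ M := le_trans (abs_nonneg _) (hM x y)
  set w := KA p q i xb y with hw
  have hFz0 : F z0 = w * u xb y := by rw [hF]; dsimp only; rw [if_pos hxbi]
  have hGz0 : G z0 = w := by rw [hG]; dsimp only; rw [if_pos hxbi]
  have hGrest : (∑ z ∈ Finset.univ.erase z0, G z) = 1 - w := by
    have := Finset.sum_erase_add Finset.univ G (Finset.mem_univ z0)
    rw [hGsum] at this
    rw [← hGz0]; linarith
  have hw1 : w ≤ 1 := by
    have h0 : 0 ≤ ∑ z ∈ Finset.univ.erase z0, G z :=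
      Finset.sum_nonneg fun z _ => hG0 z
    rw [hGrest] at h0; linarith
  have hw0 : 0 ≤ w := KA_nonneg hp hq i _ _
  have hR : |∑ z ∈ Finset.univ.erase z0, F z| ≤ (1 - w) * M := by
    calc |∑ z ∈ Finset.univ.erase z0, F z|
        ≤ ∑ z ∈ Finset.univ.erase z0, |F z| := Finset.abs_sum_le_sum_abs _ _
      _ ≤ ∑ z ∈ Finset.univ.erase z0, G z * M := by
          refine Finset.sum_le_sum fun z _ => ?_
          by_cases h : z.1 i = b
          · rw [hF, hG]; dsimp only; rw [if_pos h, if_pos h, abs_mul,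
              abs_of_nonneg (KA_nonneg hp hq i _ _)]
            exact mul_le_mul_of_nonneg_left (hM _ _) (KA_nonneg hp hq i _ _)
          · rw [hF, hG]; dsimp only; rw [if_neg h, if_neg h, abs_zero, zero_mul]
      _ = (1 - w) * M := by rw [← Finset.sum_mul, hGrest]
  have hsplit : uhatA u p q i b = (∑ z ∈ Finset.univ.erase z0, F z) + w * u xb y := by
    rw [hsum, ← Finset.sum_erase_add Finset.univ F (Finset.mem_univ z0), hFz0]
  have habs : |uhatA u p q i b - u xb y| ≤ 2 * M * (1 - w) := by
    have hu : |u xb y| ≤ M := hM xb y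
    have h1 : |(w - 1) * u xb y| ≤ (1 - w) * M := by
      rw [abs_mul, abs_of_nonpos (by linarith : w - 1 ≤ 0)]
      have := abs_nonneg (u xb y)
      nlinarith
    calc |uhatA u p q i b - u xb y|
        = |(∑ z ∈ Finset.univ.erase z0, F z) + (w - 1) * u xb y| := by
          rw [hsplit]; ring_nf
      _ ≤ |∑ z ∈ Finset.univ.erase z0, F z| + |(w - 1) * u xb y| := abs_add_le _ _
      _ ≤ (1 - w) * M + (1 - w) * M := add_le_add hR h1
      _ = 2 * M * (1 - w) := by ring
  have hE : 1 - w ≤ (∑ i' ∈ Finset.univ.erase i, (1 - coord p i' (x i')))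
      + ∑ j, (1 - coord q j (y j)) := by
    set A := ∏ i' ∈ Finset.univ.erase i, coord p i' (x i') with hA
    set B := ∏ j, coord q j (y j) with hB
    have hwAB : w = A * B := by
      rw [hw, KA, hA, hB]
      congr 1
      refine Finset.prod_congr rfl fun i' hi' => ?_
      rw [hxb, Function.update_of_ne (Finset.ne_of_mem_erase hi')]
    have hP1 : 1 - (∑ i' ∈ Finset.univ.erase i, (1 - coord p i' (x i'))) ≤ A :=
      one_sub_sum_le_prod _ _ (fun k _ => coord_nonneg hp k _) (fun k _ => coord_le_one hp k _)
    have hP2 : 1 - (∑ j, (1 - coord q j (y j))) ≤ B :=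
      one_sub_sum_le_prod _ _ (fun k _ => coord_nonneg hq k _) (fun k _ => coord_le_one hq k _)
    have hA1 : A ≤ 1 := Finset.prod_le_one (fun k _ => coord_nonneg hp k _)
      (fun k _ => coord_le_one hp k _)
    have hB1 : B ≤ 1 := Finset.prod_le_one (fun k _ => coord_nonneg hq k _)
      (fun k _ => coord_le_one hq k _)
    have hA0 : 0 ≤ A := Finset.prod_nonneg fun k _ => coord_nonneg hp k _
    have hB0 : 0 ≤ B := Finset.prod_nonneg fun k _ => coord_nonneg hq k _
    rw [hwAB]
    nlinarith [mul_nonneg (by linarith : (0:ℝ) ≤ 1 - A) (by linarith : (0:ℝ) ≤ 1 - B)]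
  calc |uhatA u p q i b - u (Function.update x i b) y|
      ≤ 2 * M * (1 - w) := habs
    _ ≤ _ := by
      apply mul_le_mul_of_nonneg_left hE (by linarith : (0:ℝ) ≤ 2 * M)

lemma uhatB_near (u : (Fin n → Bool) → (Fin m → Bool) → ℝ) {p : Fin n → ℝ} {q : Fin m → ℝ}
    (hp : ∀ i, p i ∈ Set.Icc (0:ℝ) 1) (hq : ∀ j, q j ∈ Set.Icc (0:ℝ) 1)
    {M : ℝ} (hM : ∀ x y, |u x y| ≤ M) (x : Fin n → Bool) (y : Fin m → Bool)
    (j : Fin m) (b : Bool) :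
    |uhatB u p q j b - u x (Function.update y j b)| ≤
      2 * M * ((∑ i, (1 - coord p i (x i)))
        + ∑ j' ∈ Finset.univ.erase j, (1 - coord q j' (y j'))) := by
  classical
  set yb := Function.update y j b with hyb
  set z0 : (Fin n → Bool) × (Fin m → Bool) := (x, yb) with hz0
  set F : (Fin n → Bool) × (Fin m → Bool) → ℝ :=
    fun z => if z.2 j = b then KB p q j z.1 z.2 * u z.1 z.2 else 0 with hF
  set G : (Fin n → Bool) × (Fin m → Bool) → ℝ :=
    fun z => if z.2 j = b then KB p q j z.1 z.2 else 0 with hG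
  have hybj : yb j = b := Function.update_self j b y
  have hsum : uhatB u p q j b = ∑ z, F z := by
    rw [uhatB, Fintype.sum_prod_type]
  have hGsum : (∑ z, G z) = 1 := by
    rw [hG, Fintype.sum_prod_type]
    exact sum_KB_one p q j b
  have hG0 : ∀ z, 0 ≤ G z := by
    intro z
    by_cases h : z.2 j = b
    · rw [hG]; dsimp only; rw [if_pos h]; exact KB_nonneg hp hq j _ _
    · rw [hG]; dsimp only; rw [if_neg h]
  have hM0 : 0 ≤ M := le_trans (abs_nonneg _) (hM x y)
  set w := KB p q j x yb with hw
  have hFz0 : F z0 = w * u x yb := by rw [hF]; dsimp only; rw [if_pos hybj]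
  have hGz0 : G z0 = w := by rw [hG]; dsimp only; rw [if_pos hybj]
  have hGrest : (∑ z ∈ Finset.univ.erase z0, G z) = 1 - w := by
    have := Finset.sum_erase_add Finset.univ G (Finset.mem_univ z0)
    rw [hGsum] at this
    rw [← hGz0]; linarith
  have hw1 : w ≤ 1 := by
    have h0 : 0 ≤ ∑ z ∈ Finset.univ.erase z0, G z :=
      Finset.sum_nonneg fun z _ => hG0 z
    rw [hGrest] at h0; linarith
  have hw0 : 0 ≤ w := KB_nonneg hp hq j _ _
  have hR : |∑ z ∈ Finset.univ.erase z0, F z| ≤ (1 - w) * M := by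
    calc |∑ z ∈ Finset.univ.erase z0, F z|
        ≤ ∑ z ∈ Finset.univ.erase z0, |F z| := Finset.abs_sum_le_sum_abs _ _
      _ ≤ ∑ z ∈ Finset.univ.erase z0, G z * M := by
          refine Finset.sum_le_sum fun z _ => ?_
          by_cases h : z.2 j = b
          · rw [hF, hG]; dsimp only; rw [if_pos h, if_pos h, abs_mul,
              abs_of_nonneg (KB_nonneg hp hq j _ _)]
            exact mul_le_mul_of_nonneg_left (hM _ _) (KB_nonneg hp hq j _ _)
          · rw [hF, hG]; dsimp only; rw [if_neg h, if_neg h, abs_zero, zero_mul]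
      _ = (1 - w) * M := by rw [← Finset.sum_mul, hGrest]
  have hsplit : uhatB u p q j b = (∑ z ∈ Finset.univ.erase z0, F z) + w * u x yb := by
    rw [hsum, ← Finset.sum_erase_add Finset.univ F (Finset.mem_univ z0), hFz0]
  have habs : |uhatB u p q j b - u x yb| ≤ 2 * M * (1 - w) := by
    have hu : |u x yb| ≤ M := hM x yb
    have h1 : |(w - 1) * u x yb| ≤ (1 - w) * M := by
      rw [abs_mul, abs_of_nonpos (by linarith : w - 1 ≤ 0)]
      have := abs_nonneg (u x yb)
      nlinarith
    calc |uhatB u p q j b - u x yb|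
        = |(∑ z ∈ Finset.univ.erase z0, F z) + (w - 1) * u x yb| := by
          rw [hsplit]; ring_nf
      _ ≤ |∑ z ∈ Finset.univ.erase z0, F z| + |(w - 1) * u x yb| := abs_add_le _ _
      _ ≤ (1 - w) * M + (1 - w) * M := add_le_add hR h1
      _ = 2 * M * (1 - w) := by ring
  have hE : 1 - w ≤ (∑ i, (1 - coord p i (x i)))
      + ∑ j' ∈ Finset.univ.erase j, (1 - coord q j' (y j')) := by
    set A := ∏ i, coord p i (x i) with hA
    set B := ∏ j' ∈ Finset.univ.erase j, coord q j' (y j') with hB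
    have hwAB : w = A * B := by
      rw [hw, KB, hA, hB]
      congr 1
      refine Finset.prod_congr rfl fun j' hj' => ?_
      rw [hyb, Function.update_of_ne (Finset.ne_of_mem_erase hj')]
    have hP1 : 1 - (∑ i, (1 - coord p i (x i))) ≤ A :=
      one_sub_sum_le_prod _ _ (fun k _ => coord_nonneg hp k _) (fun k _ => coord_le_one hp k _)
    have hP2 : 1 - (∑ j' ∈ Finset.univ.erase j, (1 - coord q j' (y j'))) ≤ B :=
      one_sub_sum_le_prod _ _ (fun k _ => coord_nonneg hq k _) (fun k _ => coord_le_one hq k _)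
    have hA1 : A ≤ 1 := Finset.prod_le_one (fun k _ => coord_nonneg hp k _)
      (fun k _ => coord_le_one hp k _)
    have hB1 : B ≤ 1 := Finset.prod_le_one (fun k _ => coord_nonneg hq k _)
      (fun k _ => coord_le_one hq k _)
    have hA0 : 0 ≤ A := Finset.prod_nonneg fun k _ => coord_nonneg hp k _
    have hB0 : 0 ≤ B := Finset.prod_nonneg fun k _ => coord_nonneg hq k _
    rw [hwAB]
    nlinarith [mul_nonneg (by linarith : (0:ℝ) ≤ 1 - A) (by linarith : (0:ℝ) ≤ 1 - B)]
  calc |uhatB u p q j b - u x (Function.update y j b)|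
      ≤ 2 * M * (1 - w) := habs
    _ ≤ _ := by
      apply mul_le_mul_of_nonneg_left hE (by linarith : (0:ℝ) ≤ 2 * M)

lemma uhatA_diff (u : (Fin n → Bool) → (Fin m → Bool) → ℝ) (p : Fin n → ℝ) (q : Fin m → ℝ)
    (i : Fin n) :
    p i * (uhatA u p q i false - uhat u p q)
      = p i * (1 - p i) * (uhatA u p q i false - uhatA u p q i true) := by
  rw [uhat_eq_A u p q i]; ring

lemma uhatB_diff (u : (Fin n → Bool) → (Fin m → Bool) → ℝ) (p : Fin n → ℝ) (q : Fin m → ℝ)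
    (j : Fin m) :
    q j * (uhatB u p q j false - uhat u p q)
      = q j * (1 - q j) * (uhatB u p q j false - uhatB u p q j true) := by
  rw [uhat_eq_B u p q j]; ring

end Near

lemma lintegral_top_of_frequently (H : ℝ → ℝ) (L ε : ℝ) (hL : 0 < L) (hε : 0 < ε)
    (hlip : ∀ a ∈ Set.Ici (0:ℝ), ∀ b ∈ Set.Ici (0:ℝ), |H b - H a| ≤ L * |b - a|)
    (hocc : ∀ T : ℝ, 0 ≤ T → ∃ t, T ≤ t ∧ ε ≤ H t) :
    ∫⁻ t in Set.Ioi (0:ℝ), ENNReal.ofReal (H t) = ⊤ := by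
  set r := ε / (2 * L) with hr
  have hr0 : 0 < r := by positivity
  set δ : ENNReal := ENNReal.ofReal (ε / 2) * ENNReal.ofReal r with hδ
  have hδ0 : δ ≠ 0 := by
    rw [hδ]
    refine mul_ne_zero ?_ ?_ <;> simp [ENNReal.ofReal_eq_zero] <;> linarith
  have hδtop : δ ≠ ⊤ := by
    rw [hδ]; exact ENNReal.mul_ne_top ENNReal.ofReal_ne_top ENNReal.ofReal_ne_top
  have bump : ∀ t : ℝ, 0 ≤ t → ε ≤ H t →
      δ ≤ ∫⁻ s in Set.Ioc t (t + r), ENNReal.ofReal (H s) := by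
    intro t ht hHt
    have hlow : ∀ s ∈ Set.Ioc t (t + r), ENNReal.ofReal (ε / 2) ≤ ENNReal.ofReal (H s) := by
      intro s hs
      apply ENNReal.ofReal_le_ofReal
      have hs0 : 0 ≤ s := le_trans ht hs.1.le
      have hl := hlip t (Set.mem_Ici.2 ht) s (Set.mem_Ici.2 hs0)
      have habs : |s - t| ≤ r := by
        rw [abs_of_nonneg (by linarith [hs.1.le] : (0:ℝ) ≤ s - t)]
        linarith [hs.2]
      have hLr : L * |s - t| ≤ L * r := mul_le_mul_of_nonneg_left habs hL.le
      have hrr : L * r = ε / 2 := by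
        rw [hr]; field_simp
      have : |H s - H t| ≤ ε / 2 := by
        calc |H s - H t| ≤ L * |s - t| := hl
          _ ≤ L * r := hLr
          _ = ε / 2 := hrr
      have := abs_le.1 this
      linarith [this.1]
    calc δ = ∫⁻ _ in Set.Ioc t (t + r), ENNReal.ofReal (ε / 2) := by
          rw [MeasureTheory.setLIntegral_const, Real.volume_Ioc,
            show t + r - t = r by ring, hδ]
      _ ≤ _ := by
          refine MeasureTheory.lintegral_mono_ae ?_
          rw [MeasureTheory.ae_restrict_iff' measurableSet_Ioc]
          exact MeasureTheory.ae_of_all _ hlow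
  have main : ∀ N : ℕ, ∃ S : ℝ, 0 ≤ S ∧
      (N : ENNReal) * δ ≤ ∫⁻ s in Set.Ioc (0:ℝ) S, ENNReal.ofReal (H s) := by
    intro N
    induction N with
    | zero => exact ⟨0, le_refl 0, by simp⟩
    | succ k ih =>
      obtain ⟨S, hS0, hS⟩ := ih
      obtain ⟨t, ht, hHt⟩ := hocc (S + 1) (by linarith)
      have ht0 : 0 ≤ t := by linarith
      have hbump := bump t ht0 hHt
      have hdisj : Disjoint (Set.Ioc (0:ℝ) S) (Set.Ioc t (t + r)) := by
        rw [Set.Ioc_disjoint_Ioc]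
        calc min S (t + r) ≤ S := min_le_left _ _
          _ ≤ t := by linarith
          _ ≤ max 0 t := le_max_right _ _
      have hsub : Set.Ioc (0:ℝ) S ∪ Set.Ioc t (t + r) ⊆ Set.Ioc 0 (t + r) := by
        intro s hs
        rcases hs with hs | hs
        · exact ⟨hs.1, by linarith [hs.2]⟩
        · exact ⟨by linarith [hs.1], hs.2⟩
      refine ⟨t + r, by linarith, ?_⟩
      calc ((k + 1 : ℕ) : ENNReal) * δ = (k : ENNReal) * δ + δ := by
            push_cast
            rw [add_mul, one_mul]
        _ ≤ (∫⁻ s in Set.Ioc (0:ℝ) S, ENNReal.ofReal (H s))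
              + ∫⁻ s in Set.Ioc t (t + r), ENNReal.ofReal (H s) := add_le_add hS hbump
        _ = ∫⁻ s in Set.Ioc (0:ℝ) S ∪ Set.Ioc t (t + r), ENNReal.ofReal (H s) :=
            (MeasureTheory.lintegral_union measurableSet_Ioc hdisj).symm
        _ ≤ _ := MeasureTheory.lintegral_mono_set hsub
  by_contra hne
  have hXlt : (∫⁻ t in Set.Ioi (0:ℝ), ENNReal.ofReal (H t)) < ⊤ := lt_top_iff_ne_top.2 hne
  obtain ⟨N, hN⟩ := ENNReal.exists_nat_gt
    (show (∫⁻ t in Set.Ioi (0:ℝ), ENNReal.ofReal (H t)) / δ ≠ ⊤ from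
      (ENNReal.div_lt_top hne hδ0).ne)
  have hXN : (∫⁻ t in Set.Ioi (0:ℝ), ENNReal.ofReal (H t)) < (N : ENNReal) * δ :=
    (ENNReal.div_lt_iff (Or.inl hδ0) (Or.inl hδtop)).1 hN
  obtain ⟨S, hS0, hS⟩ := main N
  have : (N : ENNReal) * δ ≤ ∫⁻ t in Set.Ioi (0:ℝ), ENNReal.ofReal (H t) :=
    le_trans hS (MeasureTheory.lintegral_mono_set (fun s hs => hs.1))
  exact absurd (lt_of_lt_of_le hXN this) (lt_irrefl _)

lemma core {H c D : ℝ → ℝ} {T K : ℝ} (hT : 0 ≤ T) (hK : 0 ≤ K)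
    (hH0 : ∀ t, 0 ≤ t → 0 ≤ H t)
    (hHcont : ∀ t, 0 ≤ t → ContinuousAt H t)
    (hc : ∀ t, 0 ≤ t → c t ∈ Set.Ioo (0:ℝ) 1)
    (hhalf : ∀ t, T ≤ t → 1/2 ≤ c t)
    (hcd : ∀ t, T ≤ t → HasDerivAt c (c t * (1 - c t) * D t) t)
    (hcH : ∀ t, T ≤ t → binEnt (c t) ≤ H t)
    (hDK : ∀ t, T ≤ t → D t ≤ K * H t) :
    ∫⁻ t in Set.Ioi (0:ℝ), ENNReal.ofReal (H t) = ⊤ := by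
  by_cases hfin : (∫⁻ t in Set.Ioi (0:ℝ), ENNReal.ofReal (H t)) = ⊤
  · exact hfin
  exfalso
  set X := ∫⁻ t in Set.Ioi (0:ℝ), ENNReal.ofReal (H t) with hX
  set I : ℝ → ℝ := fun t => ∫ s in T..t, H s with hIdef
  have hXR0 : 0 ≤ X.toReal := ENNReal.toReal_nonneg
  have hIB : ∀ t, T ≤ t → I t ≤ X.toReal := by
    intro t ht
    have hcont : ContinuousOn H (Set.Icc T t) := fun s hs =>
      (hHcont s (le_trans hT hs.1)).continuousWithinAt
    have hint : MeasureTheory.IntegrableOn H (Set.Ioc T t) :=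
      (hcont.integrableOn_Icc).mono_set Set.Ioc_subset_Icc_self
    have hIt : I t = ∫ s in Set.Ioc T t, H s := intervalIntegral.integral_of_le ht
    have h0I : 0 ≤ᵐ[volume.restrict (Set.Ioc T t)] H := by
      have h0I' : ∀ᵐ s ∂(volume.restrict (Set.Ioc T t)), 0 ≤ H s := by
        rw [MeasureTheory.ae_restrict_iff' measurableSet_Ioc]
        exact MeasureTheory.ae_of_all _ fun s hs => hH0 s (le_trans hT hs.1.le)
      exact h0I'
    have hofReal : ENNReal.ofReal (I t) = ∫⁻ s in Set.Ioc T t, ENNReal.ofReal (H s) := by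
      rw [hIt]
      exact MeasureTheory.ofReal_integral_eq_lintegral_ofReal hint h0I
    have hle : (∫⁻ s in Set.Ioc T t, ENNReal.ofReal (H s)) ≤ X :=
      MeasureTheory.lintegral_mono_set (fun s hs => lt_of_le_of_lt hT hs.1)
    have hIt0 : 0 ≤ I t :=
      intervalIntegral.integral_nonneg ht (fun s hs => hH0 s (le_trans hT hs.1))
    have h2 : ENNReal.ofReal (I t) ≤ X := hofReal ▸ hle
    calc I t = (ENNReal.ofReal (I t)).toReal := (ENNReal.toReal_ofReal hIt0).symm
      _ ≤ X.toReal := ENNReal.toReal_mono hfin h2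
  have hIderiv : ∀ t, T < t → HasDerivAt I (H t) t := by
    intro t ht
    have h1 : IntervalIntegrable H volume T t := by
      apply ContinuousOn.intervalIntegrable
      intro s hs
      rw [Set.uIcc_of_le ht.le] at hs
      exact (hHcont s (le_trans hT hs.1)).continuousWithinAt
    have hopen : ContinuousOn H (Set.Ioi (0:ℝ)) := fun s hs =>
      (hHcont s (le_of_lt hs)).continuousWithinAt
    have h2 : StronglyMeasurableAtFilter H (nhds t) volume :=
      hopen.stronglyMeasurableAtFilter isOpen_Ioi t (lt_of_le_of_lt hT ht)
    exact intervalIntegral.integral_hasDerivAt_right h1 h2 (hHcont t (le_trans hT ht.le))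
  set g : ℝ → ℝ := fun t => binEnt (c t) with hgdef
  set F : ℝ → ℝ := fun t => g t * Real.exp (K * I t) with hFdef
  have hgd : ∀ t, T ≤ t → HasDerivAt g
      ((Real.log (1 - c t) - Real.log (c t)) * (c t * (1 - c t) * D t)) t := by
    intro t ht
    exact (hasDerivAt_binEnt (hc t (le_trans hT ht)).1 (hc t (le_trans hT ht)).2).comp t (hcd t ht)
  have hFmono : ∀ b, T < b → F T ≤ F b := by
    intro b hb
    have hIcont : ContinuousOn I (Set.Icc T b) := by
      have hint : MeasureTheory.IntegrableOn H (Set.Icc T b) :=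
        ContinuousOn.integrableOn_Icc
          (fun s hs => (hHcont s (le_trans hT hs.1)).continuousWithinAt)
      have hprim := intervalIntegral.continuousOn_primitive (a := T) (b := b) (f := H) hint
      apply hprim.congr
      intro s hs
      rw [hIdef]
      exact intervalIntegral.integral_of_le hs.1
    have hgcont : ContinuousOn g (Set.Icc T b) := fun s hs =>
      ((hgd s hs.1).continuousAt).continuousWithinAt
    have hFcont : ContinuousOn F (Set.Icc T b) :=
      hgcont.mul (Real.continuous_exp.comp_continuousOn (continuousOn_const.mul hIcont))
    have hFd : ∀ t ∈ Set.Ioo T b, HasDerivAt F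
        ((Real.log (1 - c t) - Real.log (c t)) * (c t * (1 - c t) * D t) * Real.exp (K * I t)
          + g t * (Real.exp (K * I t) * (K * H t))) t := by
      intro t ht
      exact (hgd t ht.1.le).mul (((hIderiv t ht.1).const_mul K).exp)
    have hmono : MonotoneOn F (Set.Icc T b) := by
      apply monotoneOn_of_deriv_nonneg (convex_Icc T b) hFcont
      · intro t ht
        rw [interior_Icc] at ht
        exact ((hFd t ht).differentiableAt).differentiableWithinAt
      · intro t ht
        rw [interior_Icc] at ht
        rw [(hFd t ht).deriv]
        have htT : T ≤ t := ht.1.le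
        have h0t : 0 ≤ t := le_trans hT htT
        have hs0 : 0 < c t := (hc t h0t).1
        have hs1 : c t < 1 := (hc t h0t).2
        have hhf := hhalf t htT
        have hlog : Real.log (1 - c t) ≤ Real.log (c t) :=
          Real.log_le_log (by linarith) (by linarith)
        have hclc : 0 ≤ c t * (1 - c t) := by nlinarith
        have hw0 : 0 ≤ c t * (1 - c t) * (Real.log (c t) - Real.log (1 - c t)) := by
          apply mul_nonneg hclc
          linarith
        have hKH0 : 0 ≤ K * H t := mul_nonneg hK (hH0 t h0t)
        have hDle := hDK t htT
        have main : 0 ≤ (Real.log (1 - c t) - Real.log (c t)) * (c t * (1 - c t) * D t)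
            + binEnt (c t) * (K * H t) := by
          set w := c t * (1 - c t) * (Real.log (c t) - Real.log (1 - c t)) with hwdef
          have h1 : (Real.log (1 - c t) - Real.log (c t)) * (c t * (1 - c t) * D t)
              = -(w * D t) := by rw [hwdef]; ring
          rw [h1]
          have h2 : w * D t ≤ w * (K * H t) := mul_le_mul_of_nonneg_left hDle hw0
          have h3 : w ≤ binEnt (c t) := by
            have hkey := dbinEnt_key hs0 hs1
            rw [hwdef]; linarith
          have h4 : w * (K * H t) ≤ binEnt (c t) * (K * H t) :=
            mul_le_mul_of_nonneg_right h3 hKH0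
          linarith
        have hrw : (Real.log (1 - c t) - Real.log (c t)) * (c t * (1 - c t) * D t)
              * Real.exp (K * I t) + g t * (Real.exp (K * I t) * (K * H t))
            = Real.exp (K * I t)
              * ((Real.log (1 - c t) - Real.log (c t)) * (c t * (1 - c t) * D t)
                + binEnt (c t) * (K * H t)) := by
          rw [hgdef]; ring
        rw [hrw]
        exact mul_nonneg (Real.exp_pos _).le main
    exact hmono (Set.mem_Icc.2 ⟨le_rfl, hb.le⟩) (Set.mem_Icc.2 ⟨hb.le, le_rfl⟩) hb.le
  set ε : ℝ := binEnt (c T) / Real.exp (K * X.toReal) with hεdef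
  have hgT : 0 < binEnt (c T) := binEnt_pos (hc T hT).1 (hc T hT).2
  have hepos : 0 < Real.exp (K * X.toReal) := Real.exp_pos _
  have hε0 : 0 < ε := div_pos hgT hepos
  have hHlow : ∀ t, T ≤ t → ε ≤ H t := by
    intro t ht
    have hFT : F T = binEnt (c T) := by
      rw [hFdef]
      show g T * Real.exp (K * I T) = binEnt (c T)
      have : I T = 0 := by rw [hIdef]; exact intervalIntegral.integral_same
      rw [this, mul_zero, Real.exp_zero, mul_one, hgdef]
    have hkey : binEnt (c T) ≤ g t * Real.exp (K * X.toReal) := by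
      rcases eq_or_lt_of_le ht with heq | hlt
      · subst heq
        show binEnt (c T) ≤ g T * Real.exp (K * X.toReal)
        have h1 : (1:ℝ) ≤ Real.exp (K * X.toReal) := by
          rw [show (1:ℝ) = Real.exp 0 from (Real.exp_zero).symm]
          exact Real.exp_le_exp.2 (mul_nonneg hK hXR0)
        have h2 : g T = binEnt (c T) := rfl
        rw [h2]
        nlinarith [h1, hgT.le]
      · have hFTb := hFmono t hlt
        have hIt := hIB t ht
        have heK : Real.exp (K * I t) ≤ Real.exp (K * X.toReal) :=
          Real.exp_le_exp.2 (mul_le_mul_of_nonneg_left hIt hK)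
        have hgt0 : 0 ≤ g t :=
          binEnt_nonneg (hc t (le_trans hT ht)).1 (hc t (le_trans hT ht)).2
        calc binEnt (c T) = F T := hFT.symm
          _ ≤ F t := hFTb
          _ = g t * Real.exp (K * I t) := rfl
          _ ≤ g t * Real.exp (K * X.toReal) := mul_le_mul_of_nonneg_left heK hgt0
    have h6 : ε ≤ g t := by
      rw [hεdef, div_le_iff₀ hepos]
      exact hkey
    exact le_trans h6 (hcH t ht)
  have htop : (⊤ : ENNReal) ≤ X := by
    calc (⊤ : ENNReal) = ENNReal.ofReal ε * volume (Set.Ioi T) := by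
          rw [Real.volume_Ioi, ENNReal.mul_top]
          simp only [ne_eq, ENNReal.ofReal_eq_zero, not_le]
          linarith
      _ = ∫⁻ _ in Set.Ioi T, ENNReal.ofReal ε := (MeasureTheory.setLIntegral_const _ _).symm
      _ ≤ ∫⁻ t in Set.Ioi T, ENNReal.ofReal (H t) := by
          refine MeasureTheory.lintegral_mono_ae ?_
          rw [MeasureTheory.ae_restrict_iff' measurableSet_Ioi]
          exact MeasureTheory.ae_of_all _ fun s hs =>
            ENNReal.ofReal_le_ofReal (hHlow s (le_of_lt hs))
      _ ≤ X := MeasureTheory.lintegral_mono_set fun s hs => lt_of_le_of_lt hT hs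
  exact hfin (top_le_iff.1 htop)

end Aux

/-- (Theorem 2(ii).) If the two-team game has no strict pure
Nash equilibrium, then every Red Queen trajectory with values in `(0,1)^{n+m}`
satisfies Property 3: `∫₀^∞ (H(p(t)) + H(q(t))) dt = ∞`. -/
theorem stmt2 {n m : ℕ} (hn : 1 ≤ n) (hm : 1 ≤ m)
    (u : (Fin n → Bool) → (Fin m → Bool) → ℝ)
    (hNoStrictNash : ∀ (x : Fin n → Bool) (y : Fin m → Bool),
      (∃ i, u x y ≤ u (bflip x i) y) ∨ (∃ j, u x (bflip y j) ≤ u x y))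
    (p : ℝ → Fin n → ℝ) (q : ℝ → Fin m → ℝ)
    (hsol : RQSolution u p q) (hint : InteriorValues p q) :
    (∫⁻ t in Set.Ioi (0:ℝ),
      ENNReal.ofReal (ent (p t) + ent (q t))) = ⊤ := by
  classical
  obtain ⟨hsolp, hsolq⟩ := hsol
  set M : ℝ := ∑ x : Fin n → Bool, ∑ y : Fin m → Bool, |u x y| with hMdef
  have hMb : ∀ x y, |u x y| ≤ M := by
    intro x y
    rw [hMdef]
    calc |u x y| ≤ ∑ y' : Fin m → Bool, |u x y'| :=
          Finset.single_le_sum (f := fun y' => |u x y'|)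
            (fun y' _ => abs_nonneg _) (Finset.mem_univ y)
      _ ≤ ∑ x' : Fin n → Bool, ∑ y' : Fin m → Bool, |u x' y'| :=
          Finset.single_le_sum
            (f := fun x' => ∑ y' : Fin m → Bool, |u x' y'|)
            (fun x' _ => Finset.sum_nonneg fun y' _ => abs_nonneg _) (Finset.mem_univ x)
  have hM0 : 0 ≤ M := le_trans (abs_nonneg _) (hMb (fun _ => false) (fun _ => false))
  have hpI : ∀ t, 0 ≤ t → ∀ i, p t i ∈ Set.Ioo (0:ℝ) 1 := fun t ht => (hint t ht).1
  have hqI : ∀ t, 0 ≤ t → ∀ j, q t j ∈ Set.Ioo (0:ℝ) 1 := fun t ht => (hint t ht).2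
  have hpIcc : ∀ t, 0 ≤ t → ∀ i, p t i ∈ Set.Icc (0:ℝ) 1 :=
    fun t ht i => ⟨(hpI t ht i).1.le, (hpI t ht i).2.le⟩
  have hqIcc : ∀ t, 0 ≤ t → ∀ j, q t j ∈ Set.Icc (0:ℝ) 1 :=
    fun t ht j => ⟨(hqI t ht j).1.le, (hqI t ht j).2.le⟩
  set H : ℝ → ℝ := fun t => ent (p t) + ent (q t) with hHdef
  show (∫⁻ t in Set.Ioi (0:ℝ), ENNReal.ofReal (H t)) = ⊤
  have hH0 : ∀ t, 0 ≤ t → 0 ≤ H t := by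
    intro t ht
    have h1 : 0 ≤ ent (p t) :=
      Finset.sum_nonneg fun i _ => (binEnt_nonneg (hpI t ht i).1 (hpI t ht i).2)
    have h2 : 0 ≤ ent (q t) :=
      Finset.sum_nonneg fun j _ => (binEnt_nonneg (hqI t ht j).1 (hqI t ht j).2)
    have h3 : H t = ent (p t) + ent (q t) := rfl
    rw [h3]; linarith
  set V : ℝ → ℝ := fun t =>
    (∑ i, (Real.log (1 - p t i) - Real.log (p t i)) *
      (p t i * (uhatA u (p t) (q t) i false - uhat u (p t) (q t))))
    + ∑ j, (Real.log (1 - q t j) - Real.log (q t j)) *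
      (-(q t j * (uhatB u (p t) (q t) j false - uhat u (p t) (q t)))) with hVdef
  have hHd : ∀ t, 0 ≤ t → HasDerivAt H (V t) t := by
    intro t ht
    have h1 : HasDerivAt (fun s => ent (p s))
        (∑ i, (Real.log (1 - p t i) - Real.log (p t i)) *
          (p t i * (uhatA u (p t) (q t) i false - uhat u (p t) (q t)))) t := by
      apply HasDerivAt.fun_sum
      intro i _
      exact (hasDerivAt_binEnt (hpI t ht i).1 (hpI t ht i).2).comp t (hsolp t ht i)
    have h2 : HasDerivAt (fun s => ent (q s))
        (∑ j, (Real.log (1 - q t j) - Real.log (q t j)) *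
          (-(q t j * (uhatB u (p t) (q t) j false - uhat u (p t) (q t))))) t := by
      apply HasDerivAt.fun_sum
      intro j _
      exact (hasDerivAt_binEnt (hqI t ht j).1 (hqI t ht j).2).comp t (hsolq t ht j)
    exact h1.add h2
  have hHcont : ∀ t, 0 ≤ t → ContinuousAt H t := fun t ht => (hHd t ht).continuousAt
  set L : ℝ := 2 * M * ((n : ℝ) + (m : ℝ)) + 1 with hLdef
  have hL0 : 0 < L := by
    have h1 : (0:ℝ) ≤ (n:ℝ) + (m:ℝ) := by positivity
    nlinarith
  have hVb : ∀ t, 0 ≤ t → |V t| ≤ L := by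
    intro t ht
    have hterm1 : ∀ i : Fin n, |(Real.log (1 - p t i) - Real.log (p t i)) *
        (p t i * (uhatA u (p t) (q t) i false - uhat u (p t) (q t)))| ≤ 2 * M := by
      intro i
      rw [uhatA_diff u (p t) (q t) i]
      have h0 := (hpI t ht i).1
      have h1 := (hpI t ht i).2
      have hkey := abs_dbinEnt_le_one h0 h1
      have hd : |uhatA u (p t) (q t) i false - uhatA u (p t) (q t) i true| ≤ 2 * M := by
        have ha := abs_uhatA_le u (hpIcc t ht) (hqIcc t ht) hMb i false
        have hb := abs_uhatA_le u (hpIcc t ht) (hqIcc t ht) hMb i true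
        have habs : |uhatA u (p t) (q t) i false - uhatA u (p t) (q t) i true|
            ≤ |uhatA u (p t) (q t) i false| + |uhatA u (p t) (q t) i true| := by
          rw [sub_eq_add_neg]
          refine (abs_add_le _ _).trans ?_
          rw [abs_neg]
        linarith
      rw [abs_mul, abs_mul, abs_of_nonneg (show (0:ℝ) ≤ p t i * (1 - p t i) by nlinarith)]
      nlinarith [mul_le_mul hkey hd (abs_nonneg _) zero_le_one,
        abs_nonneg (Real.log (1 - p t i) - Real.log (p t i)),
        abs_nonneg (uhatA u (p t) (q t) i false - uhatA u (p t) (q t) i true)]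
    have hterm2 : ∀ j : Fin m, |(Real.log (1 - q t j) - Real.log (q t j)) *
        (-(q t j * (uhatB u (p t) (q t) j false - uhat u (p t) (q t))))| ≤ 2 * M := by
      intro j
      rw [uhatB_diff u (p t) (q t) j]
      have h0 := (hqI t ht j).1
      have h1 := (hqI t ht j).2
      have hkey := abs_dbinEnt_le_one h0 h1
      have hd : |uhatB u (p t) (q t) j false - uhatB u (p t) (q t) j true| ≤ 2 * M := by
        have ha := abs_uhatB_le u (hpIcc t ht) (hqIcc t ht) hMb j false
        have hb := abs_uhatB_le u (hpIcc t ht) (hqIcc t ht) hMb j true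
        have habs : |uhatB u (p t) (q t) j false - uhatB u (p t) (q t) j true|
            ≤ |uhatB u (p t) (q t) j false| + |uhatB u (p t) (q t) j true| := by
          rw [sub_eq_add_neg]
          refine (abs_add_le _ _).trans ?_
          rw [abs_neg]
        linarith
      rw [abs_mul, abs_neg, abs_mul, abs_of_nonneg (show (0:ℝ) ≤ q t j * (1 - q t j) by nlinarith)]
      nlinarith [mul_le_mul hkey hd (abs_nonneg _) zero_le_one,
        abs_nonneg (Real.log (1 - q t j) - Real.log (q t j)),
        abs_nonneg (uhatB u (p t) (q t) j false - uhatB u (p t) (q t) j true)]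
    have hsum1 : |∑ i, (Real.log (1 - p t i) - Real.log (p t i)) *
        (p t i * (uhatA u (p t) (q t) i false - uhat u (p t) (q t)))| ≤ (n:ℝ) * (2*M) := by
      calc |∑ i, (Real.log (1 - p t i) - Real.log (p t i)) *
          (p t i * (uhatA u (p t) (q t) i false - uhat u (p t) (q t)))|
          ≤ ∑ i, |(Real.log (1 - p t i) - Real.log (p t i)) *
            (p t i * (uhatA u (p t) (q t) i false - uhat u (p t) (q t)))| :=
            Finset.abs_sum_le_sum_abs _ _
        _ ≤ ∑ _i : Fin n, 2*M := Finset.sum_le_sum (fun i _ => hterm1 i)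
        _ = (n:ℝ) * (2*M) := by
            rw [Finset.sum_const, Finset.card_univ, Fintype.card_fin, nsmul_eq_mul]
    have hsum2 : |∑ j, (Real.log (1 - q t j) - Real.log (q t j)) *
        (-(q t j * (uhatB u (p t) (q t) j false - uhat u (p t) (q t))))| ≤ (m:ℝ) * (2*M) := by
      calc |∑ j, (Real.log (1 - q t j) - Real.log (q t j)) *
          (-(q t j * (uhatB u (p t) (q t) j false - uhat u (p t) (q t))))|
          ≤ ∑ j, |(Real.log (1 - q t j) - Real.log (q t j)) *
            (-(q t j * (uhatB u (p t) (q t) j false - uhat u (p t) (q t))))| :=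
            Finset.abs_sum_le_sum_abs _ _
        _ ≤ ∑ _j : Fin m, 2*M := Finset.sum_le_sum (fun j _ => hterm2 j)
        _ = (m:ℝ) * (2*M) := by
            rw [Finset.sum_const, Finset.card_univ, Fintype.card_fin, nsmul_eq_mul]
    have hVt : V t = (∑ i, (Real.log (1 - p t i) - Real.log (p t i)) *
        (p t i * (uhatA u (p t) (q t) i false - uhat u (p t) (q t))))
      + ∑ j, (Real.log (1 - q t j) - Real.log (q t j)) *
        (-(q t j * (uhatB u (p t) (q t) j false - uhat u (p t) (q t)))) := rfl
    rw [hVt]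
    calc |(∑ i, (Real.log (1 - p t i) - Real.log (p t i)) *
        (p t i * (uhatA u (p t) (q t) i false - uhat u (p t) (q t))))
      + ∑ j, (Real.log (1 - q t j) - Real.log (q t j)) *
        (-(q t j * (uhatB u (p t) (q t) j false - uhat u (p t) (q t))))|
        ≤ _ + _ := abs_add_le _ _
      _ ≤ (n:ℝ) * (2*M) + (m:ℝ) * (2*M) := add_le_add hsum1 hsum2
      _ ≤ L := by rw [hLdef]; nlinarith
  have hLip : ∀ a ∈ Set.Ici (0:ℝ), ∀ b ∈ Set.Ici (0:ℝ), |H b - H a| ≤ L * |b - a| := by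
    intro a ha b hb
    have key := Convex.norm_image_sub_le_of_norm_hasDerivWithin_le
      (f := H) (f' := V) (s := Set.Ici (0:ℝ))
      (fun x hx => (hHd x hx).hasDerivWithinAt)
      (fun x hx => by simpa [Real.norm_eq_abs] using hVb x hx)
      (convex_Ici 0) ha hb
    simpa [Real.norm_eq_abs] using key
  by_cases hlog2 : ∃ T, 0 ≤ T ∧ ∀ t, T ≤ t → H t < Real.log 2
  swap
  · push_neg at hlog2
    refine lintegral_top_of_frequently H L (Real.log 2) hL0 (Real.log_pos one_lt_two) hLip ?_
    intro T hT
    obtain ⟨t, ht, hHt⟩ := hlog2 T hT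
    exact ⟨t, ht, hHt⟩
  obtain ⟨T, hT0, hTlt⟩ := hlog2
  have hlog2pos : 0 < Real.log 2 := Real.log_pos one_lt_two
  have hpne : ∀ t, T ≤ t → ∀ i, p t i ≠ 1/2 := by
    intro t ht i hc2
    have h0t : 0 ≤ t := le_trans hT0 ht
    have h3 : binEnt (p t i) ≤ ent (p t) :=
      Finset.single_le_sum
        (fun i' _ => binEnt_nonneg (hpI t h0t i').1 (hpI t h0t i').2) (Finset.mem_univ i)
    have h4 : 0 ≤ ent (q t) :=
      Finset.sum_nonneg fun j _ => binEnt_nonneg (hqI t h0t j).1 (hqI t h0t j).2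
    have h5 : H t = ent (p t) + ent (q t) := rfl
    have h6 : binEnt (p t i) = Real.log 2 := by rw [hc2]; exact binEnt_half
    have h7 := hTlt t ht
    rw [h5] at h7
    linarith
  have hqne : ∀ t, T ≤ t → ∀ j, q t j ≠ 1/2 := by
    intro t ht j hc2
    have h0t : 0 ≤ t := le_trans hT0 ht
    have h3 : binEnt (q t j) ≤ ent (q t) :=
      Finset.single_le_sum
        (fun j' _ => binEnt_nonneg (hqI t h0t j').1 (hqI t h0t j').2) (Finset.mem_univ j)
    have h4 : 0 ≤ ent (p t) :=
      Finset.sum_nonneg fun i _ => binEnt_nonneg (hpI t h0t i).1 (hpI t h0t i).2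
    have h5 : H t = ent (p t) + ent (q t) := rfl
    have h6 : binEnt (q t j) = Real.log 2 := by rw [hc2]; exact binEnt_half
    have h7 := hTlt t ht
    rw [h5] at h7
    linarith
  set x : Fin n → Bool := fun i => decide (p T i < 1/2) with hxdef
  set y : Fin m → Bool := fun j => decide (q T j < 1/2) with hydef
  have hpc : ∀ t, T ≤ t → ∀ i, 1/2 < coord (p t) i (x i) := by
    intro t ht i
    have hcont : ContinuousOn (fun s => p s i) (Set.Icc T t) := fun s hs =>
      ((hsolp s (le_trans hT0 hs.1) i).continuousAt).continuousWithinAt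
    by_cases hcase : p T i < 1/2
    · have hxi : x i = true := by rw [hxdef]; simp only [decide_eq_true_eq]; exact hcase
      have hpT : p t i < 1/2 := by
        rcases lt_or_ge (p t i) (1/2) with h | h
        · exact h
        · exfalso
          obtain ⟨s, hs, hps⟩ := intermediate_value_Icc ht hcont ⟨hcase.le, h⟩
          exact hpne s hs.1 i hps
      rw [hxi]
      simp only [coord, if_true]
      linarith
    · have hxi : x i = false := by rw [hxdef]; simp only [decide_eq_false_iff_not]; exact hcase
      push_neg at hcase
      have hTi : 1/2 < p T i := lt_of_le_of_ne hcase (Ne.symm (hpne T le_rfl i))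
      have hpT : 1/2 < p t i := by
        rcases lt_or_ge (1/2) (p t i) with h | h
        · exact h
        · exfalso
          obtain ⟨s, hs, hps⟩ := intermediate_value_Icc' ht hcont ⟨h, hTi.le⟩
          exact hpne s hs.1 i hps
      rw [hxi]
      simpa [coord] using hpT
  have hqc : ∀ t, T ≤ t → ∀ j, 1/2 < coord (q t) j (y j) := by
    intro t ht j
    have hcont : ContinuousOn (fun s => q s j) (Set.Icc T t) := fun s hs =>
      ((hsolq s (le_trans hT0 hs.1) j).continuousAt).continuousWithinAt
    by_cases hcase : q T j < 1/2
    · have hyj : y j = true := by rw [hydef]; simp only [decide_eq_true_eq]; exact hcase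
      have hqT : q t j < 1/2 := by
        rcases lt_or_ge (q t j) (1/2) with h | h
        · exact h
        · exfalso
          obtain ⟨s, hs, hqs⟩ := intermediate_value_Icc ht hcont ⟨hcase.le, h⟩
          exact hqne s hs.1 j hqs
      rw [hyj]
      simp only [coord, if_true]
      linarith
    · have hyj : y j = false := by rw [hydef]; simp only [decide_eq_false_iff_not]; exact hcase
      push_neg at hcase
      have hTj : 1/2 < q T j := lt_of_le_of_ne hcase (Ne.symm (hqne T le_rfl j))
      have hqT : 1/2 < q t j := by
        rcases lt_or_ge (1/2) (q t j) with h | h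
        · exact h
        · exfalso
          obtain ⟨s, hs, hqs⟩ := intermediate_value_Icc' ht hcont ⟨h, hTj.le⟩
          exact hqne s hs.1 j hqs
      rw [hyj]
      simpa [coord] using hqT
  -- entropy bounds for coordinate defects
  have hentp : ∀ t, T ≤ t → ∀ i', (1 - coord (p t) i' (x i')) * Real.log 2 ≤ binEnt (p t i') := by
    intro t ht i'
    have h0t : 0 ≤ t := le_trans hT0 ht
    have h12 := hpc t ht i'
    have hpi' := hpI t h0t i'
    have hmin : 1 - coord (p t) i' (x i') = min (p t i') (1 - p t i') := by
      cases hxi' : x i'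
      · rw [hxi'] at h12
        simp only [coord] at h12 ⊢
        simp only [Bool.false_eq_true, if_false] at h12 ⊢
        rw [min_eq_right (by linarith)]
      · rw [hxi'] at h12
        simp only [coord, if_true] at h12 ⊢
        rw [min_eq_left (by linarith)]
        ring
    rw [hmin]
    exact min_le_binEnt hpi'.1 hpi'.2
  have hentq : ∀ t, T ≤ t → ∀ j', (1 - coord (q t) j' (y j')) * Real.log 2 ≤ binEnt (q t j') := by
    intro t ht j'
    have h0t : 0 ≤ t := le_trans hT0 ht
    have h12 := hqc t ht j'
    have hqj' := hqI t h0t j'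
    have hmin : 1 - coord (q t) j' (y j') = min (q t j') (1 - q t j') := by
      cases hyj' : y j'
      · rw [hyj'] at h12
        simp only [coord] at h12 ⊢
        simp only [Bool.false_eq_true, if_false] at h12 ⊢
        rw [min_eq_right (by linarith)]
      · rw [hyj'] at h12
        simp only [coord, if_true] at h12 ⊢
        rw [min_eq_left (by linarith)]
        ring
    rw [hmin]
    exact min_le_binEnt hqj'.1 hqj'.2
  have hsump : ∀ t, T ≤ t → ∀ s : Finset (Fin n),
      (∑ i' ∈ s, (1 - coord (p t) i' (x i'))) * Real.log 2 ≤ ent (p t) := by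
    intro t ht s
    have h0t : 0 ≤ t := le_trans hT0 ht
    rw [Finset.sum_mul]
    calc ∑ i' ∈ s, (1 - coord (p t) i' (x i')) * Real.log 2
        ≤ ∑ i' ∈ s, binEnt (p t i') := Finset.sum_le_sum fun i' _ => hentp t ht i'
      _ ≤ ∑ i', binEnt (p t i') := Finset.sum_le_sum_of_subset_of_nonneg
          (Finset.subset_univ s)
          (fun i' _ _ => binEnt_nonneg (hpI t h0t i').1 (hpI t h0t i').2)
      _ = ent (p t) := rfl
  have hsumq : ∀ t, T ≤ t → ∀ s : Finset (Fin m),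
      (∑ j' ∈ s, (1 - coord (q t) j' (y j'))) * Real.log 2 ≤ ent (q t) := by
    intro t ht s
    have h0t : 0 ≤ t := le_trans hT0 ht
    rw [Finset.sum_mul]
    calc ∑ j' ∈ s, (1 - coord (q t) j' (y j')) * Real.log 2
        ≤ ∑ j' ∈ s, binEnt (q t j') := Finset.sum_le_sum fun j' _ => hentq t ht j'
      _ ≤ ∑ j', binEnt (q t j') := Finset.sum_le_sum_of_subset_of_nonneg
          (Finset.subset_univ s)
          (fun j' _ _ => binEnt_nonneg (hqI t h0t j').1 (hqI t h0t j').2)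
      _ = ent (q t) := rfl
  have hentP : ∀ t, 0 ≤ t → 0 ≤ ent (p t) := fun t ht =>
    Finset.sum_nonneg fun i _ => binEnt_nonneg (hpI t ht i).1 (hpI t ht i).2
  have hentQ : ∀ t, 0 ≤ t → 0 ≤ ent (q t) := fun t ht =>
    Finset.sum_nonneg fun j _ => binEnt_nonneg (hqI t ht j).1 (hqI t ht j).2
  set K : ℝ := 4 * M / Real.log 2 with hKdef
  have hK0 : 0 ≤ K := div_nonneg (by linarith) hlog2pos.le
  rcases hNoStrictNash x y with ⟨i, hi⟩ | ⟨j, hj⟩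
  · -- p-side improving direction
    set c : ℝ → ℝ := fun t => coord (p t) i (x i) with hcdef
    set Df : ℝ → ℝ := fun t =>
      uhatA u (p t) (q t) i (x i) - uhatA u (p t) (q t) i (!(x i)) with hDdef
    apply core (c := c) (D := Df) hT0 hK0 hH0 hHcont
    · -- interior values of c
      intro t ht
      have hmem := hpI t ht i
      cases hxi : x i
      · have hc1 : c t = p t i := by simp [hcdef, hxi, coord]
        rw [hc1]; exact hmem
      · have hc1 : c t = 1 - p t i := by simp [hcdef, hxi, coord]
        rw [hc1]
        exact ⟨by linarith [hmem.2], by linarith [hmem.1]⟩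
    · -- c ≥ 1/2 on [T,∞)
      intro t ht
      exact (hpc t ht i).le
    · -- derivative of c
      intro t ht
      have h0t : 0 ≤ t := le_trans hT0 ht
      have hder := hsolp t h0t i
      cases hxi : x i
      · have hfun : c = fun s => p s i := funext fun s => by simp [hcdef, hxi, coord]
        have hval : c t * (1 - c t) * Df t
            = p t i * (uhatA u (p t) (q t) i false - uhat u (p t) (q t)) := by
          have h1 : c t = p t i := by simp [hcdef, hxi, coord]
          have h2 : Df t = uhatA u (p t) (q t) i false - uhatA u (p t) (q t) i true := by
            simp [hDdef, hxi]
          rw [h1, h2, uhatA_diff u (p t) (q t) i]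
        rw [hval, hfun]
        exact hder
      · have hfun : c = fun s => 1 - p s i := funext fun s => by simp [hcdef, hxi, coord]
        have hval : c t * (1 - c t) * Df t
            = -(p t i * (uhatA u (p t) (q t) i false - uhat u (p t) (q t))) := by
          have h1 : c t = 1 - p t i := by simp [hcdef, hxi, coord]
          have h2 : Df t = uhatA u (p t) (q t) i true - uhatA u (p t) (q t) i false := by
            simp [hDdef, hxi]
          rw [h1, h2, uhatA_diff u (p t) (q t) i]
          ring
        rw [hval, hfun]
        simpa using (hasDerivAt_const t (1:ℝ)).fun_sub hder
    · -- binEnt (c t) ≤ H t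
      intro t ht
      have h0t : 0 ≤ t := le_trans hT0 ht
      have hbc : binEnt (c t) = binEnt (p t i) := by
        cases hxi : x i
        · simp [hcdef, hxi, coord]
        · simp [hcdef, hxi, coord, binEnt_one_sub]
      have h3 : binEnt (p t i) ≤ ent (p t) :=
        Finset.single_le_sum
          (fun i' _ => binEnt_nonneg (hpI t h0t i').1 (hpI t h0t i').2) (Finset.mem_univ i)
      have h5 : H t = ent (p t) + ent (q t) := rfl
      rw [hbc, h5]
      linarith [hentQ t h0t]
    · -- Df ≤ K * H
      intro t ht
      have h0t : 0 ≤ t := le_trans hT0 ht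
      have hA := uhatA_near u (hpIcc t h0t) (hqIcc t h0t) hMb x y i (x i)
      have hB := uhatA_near u (hpIcc t h0t) (hqIcc t h0t) hMb x y i (!(x i))
      rw [Function.update_eq_self] at hA
      have hbfl : Function.update x i (!(x i)) = bflip x i := rfl
      rw [hbfl] at hB
      set E : ℝ := (∑ i' ∈ Finset.univ.erase i, (1 - coord (p t) i' (x i')))
        + ∑ j', (1 - coord (q t) j' (y j')) with hEdef
      have hEH : E * Real.log 2 ≤ H t := by
        have h5 : H t = ent (p t) + ent (q t) := rfl
        have hmul : E * Real.log 2
            = (∑ i' ∈ Finset.univ.erase i, (1 - coord (p t) i' (x i'))) * Real.log 2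
              + (∑ j', (1 - coord (q t) j' (y j'))) * Real.log 2 := by
          rw [hEdef]; ring
        rw [hmul, h5]
        have hs1 := hsump t ht (Finset.univ.erase i)
        have hs2 := hsumq t ht Finset.univ
        linarith
      have ha := abs_le.1 hA
      have hb := abs_le.1 hB
      have hΔ : u x y - u (bflip x i) y ≤ 0 := by linarith [hi]
      have hDt : Df t = uhatA u (p t) (q t) i (x i) - uhatA u (p t) (q t) i (!(x i)) := rfl
      have hup : Df t ≤ 4 * M * E := by
        rw [hDt]
        linarith [ha.2, hb.1]
      have hElog : E ≤ H t / Real.log 2 := by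
        rw [le_div_iff₀ hlog2pos]
        exact hEH
      calc Df t ≤ 4 * M * E := hup
        _ ≤ 4 * M * (H t / Real.log 2) :=
            mul_le_mul_of_nonneg_left hElog (by linarith)
        _ = K * H t := by rw [hKdef]; ring
  · -- q-side improving direction
    set c : ℝ → ℝ := fun t => coord (q t) j (y j) with hcdef
    set Df : ℝ → ℝ := fun t =>
      uhatB u (p t) (q t) j (!(y j)) - uhatB u (p t) (q t) j (y j) with hDdef
    apply core (c := c) (D := Df) hT0 hK0 hH0 hHcont
    · intro t ht
      have hmem := hqI t ht j
      cases hyj : y j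
      · have hc1 : c t = q t j := by simp [hcdef, hyj, coord]
        rw [hc1]; exact hmem
      · have hc1 : c t = 1 - q t j := by simp [hcdef, hyj, coord]
        rw [hc1]
        exact ⟨by linarith [hmem.2], by linarith [hmem.1]⟩
    · intro t ht
      exact (hqc t ht j).le
    · intro t ht
      have h0t : 0 ≤ t := le_trans hT0 ht
      have hder := hsolq t h0t j
      cases hyj : y j
      · have hfun : c = fun s => q s j := funext fun s => by simp [hcdef, hyj, coord]
        have hval : c t * (1 - c t) * Df t
            = -(q t j * (uhatB u (p t) (q t) j false - uhat u (p t) (q t))) := by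
          have h1 : c t = q t j := by simp [hcdef, hyj, coord]
          have h2 : Df t = uhatB u (p t) (q t) j true - uhatB u (p t) (q t) j false := by
            simp [hDdef, hyj]
          rw [h1, h2, uhatB_diff u (p t) (q t) j]
          ring
        rw [hval, hfun]
        exact hder
      · have hfun : c = fun s => 1 - q s j := funext fun s => by simp [hcdef, hyj, coord]
        have hval : c t * (1 - c t) * Df t
            = q t j * (uhatB u (p t) (q t) j false - uhat u (p t) (q t)) := by
          have h1 : c t = 1 - q t j := by simp [hcdef, hyj, coord]
          have h2 : Df t = uhatB u (p t) (q t) j false - uhatB u (p t) (q t) j true := by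
            simp [hDdef, hyj]
          rw [h1, h2, uhatB_diff u (p t) (q t) j]
          ring
        rw [hval, hfun]
        simpa using (hasDerivAt_const t (1:ℝ)).fun_sub hder
    · intro t ht
      have h0t : 0 ≤ t := le_trans hT0 ht
      have hbc : binEnt (c t) = binEnt (q t j) := by
        cases hyj : y j
        · simp [hcdef, hyj, coord]
        · simp [hcdef, hyj, coord, binEnt_one_sub]
      have h3 : binEnt (q t j) ≤ ent (q t) :=
        Finset.single_le_sum
          (fun j' _ => binEnt_nonneg (hqI t h0t j').1 (hqI t h0t j').2) (Finset.mem_univ j)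
      have h5 : H t = ent (p t) + ent (q t) := rfl
      rw [hbc, h5]
      linarith [hentP t h0t]
    · intro t ht
      have h0t : 0 ≤ t := le_trans hT0 ht
      have hA := uhatB_near u (hpIcc t h0t) (hqIcc t h0t) hMb x y j (y j)
      have hB := uhatB_near u (hpIcc t h0t) (hqIcc t h0t) hMb x y j (!(y j))
      rw [Function.update_eq_self] at hA
      have hbfl : Function.update y j (!(y j)) = bflip y j := rfl
      rw [hbfl] at hB
      set E : ℝ := (∑ i', (1 - coord (p t) i' (x i')))
        + ∑ j' ∈ Finset.univ.erase j, (1 - coord (q t) j' (y j')) with hEdef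
      have hEH : E * Real.log 2 ≤ H t := by
        have h5 : H t = ent (p t) + ent (q t) := rfl
        have hmul : E * Real.log 2
            = (∑ i', (1 - coord (p t) i' (x i'))) * Real.log 2
              + (∑ j' ∈ Finset.univ.erase j, (1 - coord (q t) j' (y j'))) * Real.log 2 := by
          rw [hEdef]; ring
        rw [hmul, h5]
        have hs1 := hsump t ht Finset.univ
        have hs2 := hsumq t ht (Finset.univ.erase j)
        linarith
      have ha := abs_le.1 hA
      have hb := abs_le.1 hB
      have hΔ : u x (bflip y j) - u x y ≤ 0 := by linarith [hj]
      have hDt : Df t = uhatB u (p t) (q t) j (!(y j)) - uhatB u (p t) (q t) j (y j) := rfl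
      have hup : Df t ≤ 4 * M * E := by
        rw [hDt]
        linarith [ha.1, hb.2]
      have hElog : E ≤ H t / Real.log 2 := by
        rw [le_div_iff₀ hlog2pos]
        exact hEH
      calc Df t ≤ 4 * M * E := hup
        _ ≤ 4 * M * (H t / Real.log 2) :=
            mul_le_mul_of_nonneg_left hElog (by linarith)
        _ = K * H t := by rw [hKdef]; ring
end
end

section
/- Consider the planar ODE system on [−1,1]²: δ̇ = ¼(1−δ²)(δ+2ε), ε̇ = −¼(1−ε²)(2δ−ε). Let α ∈ (0,1) and let (δ(t),ε(t)) be the solution with initial condition δ(0) = −α, ε(0) = α. Then there exist a finite time t > 0 and β ∈ (0,1) such that δ(t) = ε(t) = β. -/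
set_option maxHeartbeats 1000000
open Set Filter Topology

noncomputable section

namespace Stmt4Aux

def A (x : ℝ) : ℝ := (Real.log (1 + x) - Real.log (1 - x)) / 2

lemma hasDerivAt_A {x : ℝ} (h1 : -1 < x) (h2 : x < 1) :
    HasDerivAt A (1 / (1 - x ^ 2)) x := by
  have hp : (0 : ℝ) < 1 + x := by linarith
  have hm : (0 : ℝ) < 1 - x := by linarith
  have l1 : HasDerivAt (fun y : ℝ => Real.log (1 + y)) (1 / (1 + x)) x := by
    have := ((hasDerivAt_id x).const_add 1).log (by positivity)
    simpa using this
  have l2 : HasDerivAt (fun y : ℝ => Real.log (1 - y)) ((-1) / (1 - x)) x := by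
    have h' : HasDerivAt (fun y : ℝ => 1 - y) (-1 : ℝ) x := by
      simpa using (hasDerivAt_id x).const_sub 1
    exact h'.log (by positivity)
  have heq : (1 / (1 + x) - -1 / (1 - x)) / 2 = 1 / (1 - x ^ 2) := by
    have h2 : (1:ℝ) - x ^ 2 = (1 + x) * (1 - x) := by ring
    rw [h2]
    field_simp
    ring
  have := (l1.sub l2).div_const 2
  rw [heq] at this
  exact this

lemma A_strictMonoOn : StrictMonoOn A (Ioo (-1 : ℝ) 1) := by
  apply strictMonoOn_of_deriv_pos (convex_Ioo _ _)
  · intro x hx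
    exact (hasDerivAt_A hx.1 hx.2).continuousAt.continuousWithinAt
  · intro x hx
    rw [interior_Ioo] at hx
    rw [(hasDerivAt_A hx.1 hx.2).deriv]
    have : (0:ℝ) < 1 - x ^ 2 := by nlinarith [hx.1, hx.2]
    positivity

lemma A_zero : A 0 = 0 := by simp [A]

lemma A_neg (x : ℝ) : A (-x) = - A x := by
  unfold A
  have e1 : (1 : ℝ) + -x = 1 - x := by ring
  have e2 : (1 : ℝ) - -x = 1 + x := by ring
  rw [e1, e2]; ring

lemma barrier {f : ℝ → ℝ} {t0 t1 : ℝ} (h01 : t0 ≤ t1)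
    (hc : ContinuousOn f (Icc t0 t1)) (h0 : 0 < f t0)
    (key : ∀ t ∈ Ioc t0 t1, (∀ s ∈ Icc t0 t, 0 ≤ f s) → f t = 0 → False) :
    ∀ t ∈ Icc t0 t1, 0 < f t := by
  by_contra hbad
  push_neg at hbad
  obtain ⟨tb, htb, hftb⟩ := hbad
  set B : Set ℝ := Icc t0 t1 ∩ f ⁻¹' (Iic 0) with hB
  have hBne : B.Nonempty := ⟨tb, htb, by simpa using hftb⟩
  have hBclosed : IsClosed B :=
    hc.preimage_isClosed_of_isClosed isClosed_Icc isClosed_Iic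
  have hBbdd : BddBelow B := ⟨t0, fun x hx => hx.1.1⟩
  set ts := sInf B with hts
  have htsB : ts ∈ B := hBclosed.csInf_mem hBne hBbdd
  have htsIcc : ts ∈ Icc t0 t1 := htsB.1
  have htsle : f ts ≤ 0 := htsB.2
  have hts0 : t0 < ts := by
    rcases lt_or_eq_of_le htsIcc.1 with h | h
    · exact h
    · exfalso; rw [← h] at htsle; linarith
  have hpos : ∀ s ∈ Ico t0 ts, 0 < f s := by
    intro s hs
    by_contra hns
    push_neg at hns
    have hsB : s ∈ B := ⟨⟨hs.1, hs.2.le.trans htsIcc.2⟩, hns⟩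
    exact absurd (csInf_le hBbdd hsB) (not_le.mpr hs.2)
  have hftsge : 0 ≤ f ts := by
    have hmem : Ico t0 ts ⊆ Icc t0 t1 :=
      fun x hx => ⟨hx.1, hx.2.le.trans htsIcc.2⟩
    have htend : Tendsto f (𝓝[Ico t0 ts] ts) (𝓝 (f ts)) :=
      (hc.continuousWithinAt htsIcc).mono hmem
    rw [nhdsWithin_Ico_eq_nhdsLT hts0] at htend
    refine ge_of_tendsto htend ?_
    filter_upwards [Ioo_mem_nhdsLT_of_mem (⟨hts0, le_refl ts⟩ : ts ∈ Ioc t0 ts)]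
      with s hs
    exact (hpos s ⟨hs.1.le, hs.2⟩).le
  have hge : ∀ s ∈ Icc t0 ts, 0 ≤ f s := by
    intro s hs
    rcases lt_or_eq_of_le hs.2 with h | h
    · exact (hpos s ⟨hs.1, h⟩).le
    · rw [h]; exact hftsge
  exact key ts ⟨hts0, htsIcc.2⟩ hge (le_antisymm htsle hftsge)

/-- If `f` has a (two-sided) derivative at `a` and `f a` is a minimum of `f`
on `[t0, a)` from the left, then the derivative is `≤ 0`. -/
lemma deriv_nonpos_of_left_min {f : ℝ → ℝ} {a t0 c : ℝ}
    (h : HasDerivAt f c a) (ht : t0 < a)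
    (hmin : ∀ s ∈ Ico t0 a, f a ≤ f s) : c ≤ 0 := by
  have hsl : Tendsto (slope f a) (𝓝[<] a) (𝓝 c) :=
    (hasDerivAt_iff_tendsto_slope.mp h).mono_left
      (nhdsWithin_mono _ (fun x hx => ne_of_lt hx))
  refine le_of_tendsto hsl ?_
  filter_upwards [Ioo_mem_nhdsLT_of_mem (⟨ht, le_refl a⟩ : a ∈ Ioc t0 a)]
    with s hs
  have h1 : f a ≤ f s := hmin s ⟨hs.1.le, hs.2⟩
  have h2 : s - a < 0 := by linarith [hs.2]
  rw [slope_def_field]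
  rw [div_nonpos_iff]
  left
  constructor
  · linarith
  · linarith


lemma alg1 (α d e : ℝ) (h1 : 0 < α) (hd : d ≤ 0)
    (hd2 : d^2 < 1) (he2 : e^2 < 1) (hm : d + 2*e = α/2) :
    0 < (1/4)*(1-d^2)*(d+2*e) + 2*(-((1/4)*(1-e^2)*(2*d-e))) := by
  nlinarith [mul_pos (show (0:ℝ) < 1 - d^2 by nlinarith) (show (0:ℝ) < α/2 by linarith),
    mul_nonneg (show (0:ℝ) ≤ 1 - e^2 by nlinarith) (show (0:ℝ) ≤ e - 2*d by nlinarith)]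

lemma alg2 (c d e : ℝ) (hc : 0 < c) (hc2 : c < 1/2) (hed : d ≤ e)
    (hd1 : -1 < d) (hd2 : d < 1) (he1 : -1 < e) (he2 : e < 1)
    (hphi : 3*d + e = c) :
    0 < 3*((1/4)*(1-d^2)*(d+2*e)) + (-((1/4)*(1-e^2)*(2*d-e))) := by
  nlinarith [sq_nonneg d, sq_nonneg e, sq_nonneg (d-e), sq_nonneg (d+e),
    mul_pos (show (0:ℝ) < 1-d^2 by nlinarith) hc, sq_nonneg (d*e), sq_nonneg c]

lemma mono_of_deriv {f f' : ℝ → ℝ} {t0 t1 : ℝ}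
    (h : ∀ t ∈ Icc t0 t1, HasDerivAt f (f' t) t)
    (h' : ∀ t ∈ Icc t0 t1, 0 ≤ f' t) : MonotoneOn f (Icc t0 t1) := by
  apply monotoneOn_of_deriv_nonneg (convex_Icc _ _)
  · exact fun t ht => (h t ht).continuousAt.continuousWithinAt
  · intro t ht
    rw [interior_Icc] at ht
    exact ((h t ⟨ht.1.le, ht.2.le⟩).differentiableAt).differentiableWithinAt
  · intro t ht
    rw [interior_Icc] at ht
    rw [(h t ⟨ht.1.le, ht.2.le⟩).deriv]
    exact h' t ⟨ht.1.le, ht.2.le⟩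

lemma anti_of_deriv {f f' : ℝ → ℝ} {t0 t1 : ℝ}
    (h : ∀ t ∈ Icc t0 t1, HasDerivAt f (f' t) t)
    (h' : ∀ t ∈ Icc t0 t1, f' t ≤ 0) : AntitoneOn f (Icc t0 t1) := by
  apply antitoneOn_of_deriv_nonpos (convex_Icc _ _)
  · exact fun t ht => (h t ht).continuousAt.continuousWithinAt
  · intro t ht
    rw [interior_Icc] at ht
    exact ((h t ⟨ht.1.le, ht.2.le⟩).differentiableAt).differentiableWithinAt
  · intro t ht
    rw [interior_Icc] at ht
    rw [(h t ⟨ht.1.le, ht.2.le⟩).deriv]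
    exact h' t ⟨ht.1.le, ht.2.le⟩

end Stmt4Aux

/-- (Claim 3.2 of the paper, arm-to-arm passage.) For the
planar system `δ̇ = ¼(1−δ²)(δ+2ε)`, `ε̇ = −¼(1−ε²)(2δ−ε)` on `[−1,1]²`, the
solution starting at `(δ(0),ε(0)) = (−α, α)` with `α ∈ (0,1)` reaches, at some
finite time `t > 0`, a point `(β,β)` with `β ∈ (0,1)`. -/
theorem stmt4 (α : ℝ) (hα : α ∈ Set.Ioo (0:ℝ) 1) (d e : ℝ → ℝ)
    (hval : ∀ t, 0 ≤ t → d t ∈ Set.Icc (-1:ℝ) 1 ∧ e t ∈ Set.Icc (-1:ℝ) 1)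
    (hd : ∀ t, 0 ≤ t → HasDerivAt d ((1/4) * (1 - d t ^ 2) * (d t + 2 * e t)) t)
    (he : ∀ t, 0 ≤ t → HasDerivAt e (-((1/4) * (1 - e t ^ 2) * (2 * d t - e t))) t)
    (hd0 : d 0 = -α) (he0 : e 0 = α) :
    ∃ t > (0:ℝ), ∃ β ∈ Set.Ioo (0:ℝ) 1, d t = β ∧ e t = β := by
  open Stmt4Aux in
  obtain ⟨hα0, hα1⟩ := hα
  -- ### Step 1: interior bound
  have hint : ∀ t, 0 ≤ t → d t ^ 2 < 1 ∧ e t ^ 2 < 1 := by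
    intro t ht
    set M : ℝ → ℝ := fun s => Real.exp s * ((1 - d s ^ 2) * (1 - e s ^ 2)) with hM
    have hMd : ∀ s, 0 ≤ s → HasDerivAt M
        (Real.exp s * ((1 - d s ^ 2) * (1 - e s ^ 2)) + Real.exp s *
          ((-(2 * d s * ((1/4) * (1 - d s ^ 2) * (d s + 2 * e s)))) * (1 - e s ^ 2)
            + (1 - d s ^ 2) * (-(2 * e s * (-((1/4) * (1 - e s ^ 2) * (2 * d s - e s))))))) s := by
      intro s hs
      have h1 : HasDerivAt (fun x => 1 - d x ^ 2)
          (-(2 * d s * ((1/4) * (1 - d s ^ 2) * (d s + 2 * e s)))) s := by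
        have := ((hd s hs).pow 2).const_sub 1
        refine this.congr_deriv ?_
        push_cast; ring
      have h2 : HasDerivAt (fun x => 1 - e x ^ 2)
          (-(2 * e s * (-((1/4) * (1 - e s ^ 2) * (2 * d s - e s))))) s := by
        have := ((he s hs).pow 2).const_sub 1
        refine this.congr_deriv ?_
        push_cast; ring
      exact (Real.hasDerivAt_exp s).mul (h1.mul h2)
    have hMmono : MonotoneOn M (Icc 0 t) := by
      apply mono_of_deriv (f' := fun s =>
        Real.exp s * ((1 - d s ^ 2) * (1 - e s ^ 2)) + Real.exp s *
          ((-(2 * d s * ((1/4) * (1 - d s ^ 2) * (d s + 2 * e s)))) * (1 - e s ^ 2)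
            + (1 - d s ^ 2) * (-(2 * e s * (-((1/4) * (1 - e s ^ 2) * (2 * d s - e s)))))))
      · exact fun s hs => hMd s hs.1
      · intro s hs
        obtain ⟨⟨hda, hdb⟩, ⟨hea, heb⟩⟩ := hval s hs.1
        have key : Real.exp s * ((1 - d s ^ 2) * (1 - e s ^ 2)) + Real.exp s *
            ((-(2 * d s * ((1/4) * (1 - d s ^ 2) * (d s + 2 * e s)))) * (1 - e s ^ 2)
              + (1 - d s ^ 2) * (-(2 * e s * (-((1/4) * (1 - e s ^ 2) * (2 * d s - e s))))))
            = Real.exp s * ((1 - d s ^ 2) * ((1 - e s ^ 2) *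
                (1 - (d s ^ 2 + e s ^ 2) / 2))) := by ring
        rw [key]
        have p1 : (0:ℝ) ≤ 1 - d s ^ 2 := by nlinarith
        have p2 : (0:ℝ) ≤ 1 - e s ^ 2 := by nlinarith
        have p3 : (0:ℝ) ≤ 1 - (d s ^ 2 + e s ^ 2) / 2 := by nlinarith
        positivity
    have hM0 : M 0 = (1 - α ^ 2) * (1 - α ^ 2) := by
      show Real.exp 0 * ((1 - d 0 ^ 2) * (1 - e 0 ^ 2)) = _
      rw [hd0, he0, Real.exp_zero]; ring
    have hMt : M 0 ≤ M t := hMmono ⟨le_refl 0, ht⟩ ⟨ht, le_refl t⟩ ht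
    have hM0pos : 0 < M 0 := by
      rw [hM0]
      nlinarith [mul_pos (show (0:ℝ) < 1 - α^2 by nlinarith) (show (0:ℝ) < 1 - α^2 by nlinarith)]
    have hLpos : 0 < (1 - d t ^ 2) * (1 - e t ^ 2) := by
      by_contra hn
      push_neg at hn
      have : M t ≤ 0 := mul_nonpos_of_nonneg_of_nonpos (Real.exp_pos t).le hn
      linarith
    obtain ⟨⟨hda, hdb⟩, ⟨hea, heb⟩⟩ := hval t ht
    have p1 : (0:ℝ) ≤ 1 - d t ^ 2 := by nlinarith
    have p2 : (0:ℝ) ≤ 1 - e t ^ 2 := by nlinarith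
    constructor
    · nlinarith
    · nlinarith
  have hdI : ∀ t, 0 ≤ t → d t ∈ Ioo (-1:ℝ) 1 := by
    intro t ht
    have := (hint t ht).1
    constructor <;> nlinarith
  have heI : ∀ t, 0 ≤ t → e t ∈ Ioo (-1:ℝ) 1 := by
    intro t ht
    have := (hint t ht).2
    constructor <;> nlinarith
  have hαI : α ∈ Ioo (-1:ℝ) 1 := ⟨by linarith, hα1⟩
  have h0I : (0:ℝ) ∈ Ioo (-1:ℝ) 1 := by constructor <;> norm_num
  -- ### derivative facts
  have hU : ∀ t, 0 ≤ t → HasDerivAt (fun s => A (d s)) ((d t + 2 * e t) / 4) t := by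
    intro t ht
    have h1 := (hasDerivAt_A (hdI t ht).1 (hdI t ht).2).comp t (hd t ht)
    have hne : (1:ℝ) - d t ^ 2 ≠ 0 := by have := (hint t ht).1; intro h; nlinarith
    refine h1.congr_deriv ?_
    field_simp
  have hV : ∀ t, 0 ≤ t → HasDerivAt (fun s => A (e s)) ((e t - 2 * d t) / 4) t := by
    intro t ht
    have h1 := (hasDerivAt_A (heI t ht).1 (heI t ht).2).comp t (he t ht)
    have hne : (1:ℝ) - e t ^ 2 ≠ 0 := by have := (hint t ht).2; intro h; nlinarith
    refine h1.congr_deriv ?_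
    field_simp
    ring
  set G : ℝ → ℝ := fun s => A (e s) - A (d s) with hGdef
  have hG : ∀ t, 0 ≤ t → HasDerivAt G (-(3 * d t + e t) / 4) t := by
    intro t ht
    have := (hV t ht).sub (hU t ht)
    refine this.congr_deriv ?_
    ring
  set m : ℝ → ℝ := fun s => d s + 2 * e s with hmdef
  have hm : ∀ t, 0 ≤ t → HasDerivAt m
      ((1/4) * (1 - d t ^ 2) * (d t + 2 * e t)
        + 2 * (-((1/4) * (1 - e t ^ 2) * (2 * d t - e t)))) t := by
    intro t ht
    exact (hd t ht).add ((he t ht).const_mul 2)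
  set φ : ℝ → ℝ := fun s => 3 * d s + e s with hφdef
  have hφ : ∀ t, 0 ≤ t → HasDerivAt φ
      (3 * ((1/4) * (1 - d t ^ 2) * (d t + 2 * e t))
        + (-((1/4) * (1 - e t ^ 2) * (2 * d t - e t)))) t := by
    intro t ht
    exact ((hd t ht).const_mul 3).add (he t ht)
  set a : ℝ := A α with hadef
  have ha : 0 < a := by
    have := A_strictMonoOn h0I hαI hα0
    rw [A_zero] at this
    exact this
  -- ### Phase 1 barrier
  have hP1 : ∀ T, 0 ≤ T → (∀ s ∈ Icc 0 T, d s ≤ 0) →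
      ∀ t ∈ Icc 0 T, 0 < min (G t) (m t - α / 2) := by
    intro T hT hside
    apply barrier hT
    · refine continuous_min.comp_continuousOn (ContinuousOn.prodMk ?_ ?_)
      · exact fun s hs => (hG s hs.1).continuousAt.continuousWithinAt
      · exact fun s hs =>
          (((hm s hs.1).continuousAt).sub continuousAt_const).continuousWithinAt
    · have hG0 : G 0 = 2 * a := by
        simp only [hGdef, hd0, he0, A_neg, hadef]; ring
      have hm0 : m 0 = α := by simp only [hmdef, hd0, he0]; ring
      rw [hG0, hm0]
      apply lt_min <;> linarith
    · intro ts hts hge h0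
      have hts0 : (0:ℝ) ≤ ts := hts.1.le
      have hGge : 0 ≤ G ts := le_min_iff.mp (hge ts ⟨hts0, le_refl _⟩) |>.1
      have hmge : 0 ≤ m ts - α / 2 := le_min_iff.mp (hge ts ⟨hts0, le_refl _⟩) |>.2
      have hdle : d ts ≤ 0 := hside ts ⟨hts0, hts.2⟩
      rcases le_total (G ts) (m ts - α / 2) with hc | hc
      · -- G ts = 0
        have hG0 : G ts = 0 := by rw [min_eq_left hc] at h0; exact h0
        have hede : e ts = d ts := by
          have : A (e ts) = A (d ts) := by
            have := sub_eq_zero.mp hG0; exact this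
          exact A_strictMonoOn.injOn (heI ts hts0) (hdI ts hts0) this
        have : m ts = 3 * d ts := by simp only [hmdef]; rw [hede]; ring
        rw [this] at hmge
        linarith
      · -- m ts = α/2
        have hm0 : m ts - α / 2 = 0 := by rw [min_eq_right hc] at h0; exact h0
        have hmin : ∀ s ∈ Ico 0 ts, (fun x => m x - α / 2) ts ≤ (fun x => m x - α / 2) s := by
          intro s hs
          have := le_min_iff.mp (hge s ⟨hs.1, hs.2.le⟩) |>.2
          simp only
          linarith
        have hle := deriv_nonpos_of_left_min ((hm ts hts0).sub_const (α / 2)) hts.1 hmin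
        have hmts : d ts + 2 * e ts = α / 2 := by
          have : m ts = α / 2 := by linarith
          simpa [hmdef] using this
        have hd2 := (hint ts hts0).1
        have he2 := (hint ts hts0).2
        have := alg1 α (d ts) (e ts) hα0 hdle hd2 he2 hmts
        linarith
  -- ### Existence of first time d ≥ 0
  set t₂ : ℝ := 8 * a / α with ht₂def
  have ht₂pos : 0 < t₂ := by positivity
  have hT0ex : ∃ t ∈ Icc (0:ℝ) t₂, 0 ≤ d t := by
    by_contra hno
    push_neg at hno
    have hside : ∀ s ∈ Icc (0:ℝ) t₂, d s ≤ 0 := fun s hs => (hno s hs).le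
    have hmge : ∀ s ∈ Icc (0:ℝ) t₂, 0 ≤ m s - α / 2 := by
      intro s hs
      exact (le_min_iff.mp (hP1 t₂ ht₂pos.le hside s hs).le).2
    have hWmono : MonotoneOn (fun s => A (d s) - α / 8 * s) (Icc 0 t₂) := by
      apply mono_of_deriv (f' := fun s => (d s + 2 * e s) / 4 - α / 8)
      · intro s hs
        refine (hU s hs.1).sub ?_
        simpa using (hasDerivAt_id s).const_mul (α / 8)
      · intro s hs
        have := hmge s hs
        simp only [hmdef] at this
        linarith
    have := hWmono (left_mem_Icc.mpr ht₂pos.le) (right_mem_Icc.mpr ht₂pos.le) ht₂pos.le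
    simp only [hd0, A_neg] at this
    have hU2 : 0 ≤ A (d t₂) := by
      have ht2 : α / 8 * t₂ = a := by
        rw [ht₂def]; field_simp
      rw [ht2] at this
      linarith [this]
    have hdneg : d t₂ < 0 := hno t₂ (right_mem_Icc.mpr ht₂pos.le)
    have : A (d t₂) < A 0 :=
      A_strictMonoOn (hdI t₂ ht₂pos.le) h0I hdneg
    rw [A_zero] at this
    linarith
  -- T₀ : first time d ≥ 0
  set S : Set ℝ := Icc 0 t₂ ∩ d ⁻¹' (Ici 0) with hSdef
  have hdcont : ContinuousOn d (Icc 0 t₂) :=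
    fun s hs => (hd s hs.1).continuousAt.continuousWithinAt
  have hSclosed : IsClosed S :=
    hdcont.preimage_isClosed_of_isClosed isClosed_Icc isClosed_Ici
  have hSne : S.Nonempty := by
    obtain ⟨t, ht, hdt⟩ := hT0ex; exact ⟨t, ht, hdt⟩
  have hSbdd : BddBelow S := ⟨0, fun x hx => hx.1.1⟩
  set T₀ : ℝ := sInf S with hT₀def
  have hT₀S : T₀ ∈ S := hSclosed.csInf_mem hSne hSbdd
  have hT₀Icc : T₀ ∈ Icc (0:ℝ) t₂ := hT₀S.1
  have hT₀0 : (0:ℝ) ≤ T₀ := hT₀Icc.1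
  have hdT₀ : 0 ≤ d T₀ := hT₀S.2
  have hT₀pos : 0 < T₀ := by
    rcases lt_or_eq_of_le hT₀0 with h | h
    · exact h
    · exfalso; rw [← h] at hdT₀; rw [hd0] at hdT₀; linarith
  have hdneg : ∀ s ∈ Ico (0:ℝ) T₀, d s < 0 := by
    intro s hs
    by_contra hn
    push_neg at hn
    have : s ∈ S := ⟨⟨hs.1, hs.2.le.trans hT₀Icc.2⟩, hn⟩
    exact absurd (csInf_le hSbdd this) (not_le.mpr hs.2)
  have hdT₀' : d T₀ ≤ 0 := by
    have hmem : Ico (0:ℝ) T₀ ⊆ Icc 0 t₂ :=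
      fun x hx => ⟨hx.1, hx.2.le.trans hT₀Icc.2⟩
    have htend : Tendsto d (𝓝[Ico (0:ℝ) T₀] T₀) (𝓝 (d T₀)) :=
      (hdcont.continuousWithinAt hT₀Icc).mono hmem
    rw [nhdsWithin_Ico_eq_nhdsLT hT₀pos] at htend
    refine le_of_tendsto htend ?_
    filter_upwards [Ioo_mem_nhdsLT_of_mem (⟨hT₀pos, le_refl T₀⟩ : T₀ ∈ Ioc 0 T₀)]
      with s hs
    exact (hdneg s ⟨hs.1.le, hs.2⟩).le
  have hdT₀0 : d T₀ = 0 := le_antisymm hdT₀' hdT₀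
  -- facts at T₀
  have hsideT₀ : ∀ s ∈ Icc (0:ℝ) T₀, d s ≤ 0 := by
    intro s hs
    rcases lt_or_eq_of_le hs.2 with h | h
    · exact (hdneg s ⟨hs.1, h⟩).le
    · rw [h, hdT₀0]
  have hminT₀ := hP1 T₀ hT₀0 hsideT₀ T₀ ⟨hT₀0, le_refl _⟩
  have hmT₀ : α / 2 < m T₀ := by
    have := (lt_min_iff.mp hminT₀).2; linarith
  set e₀ : ℝ := e T₀ with he₀def
  have he₀pos : α / 4 < e₀ := by
    simp only [hmdef, hdT₀0] at hmT₀
    simp only [he₀def]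
    linarith
  have he₀lt : e₀ < 1 := (heI T₀ hT₀0).2
  set c : ℝ := e₀ / 2 with hcdef
  have hcpos : 0 < c := by simp only [hcdef]; linarith
  have hc2 : c < 1 / 2 := by simp only [hcdef]; linarith
  set G₀ : ℝ := A e₀ with hG₀def
  have hG₀pos : 0 < G₀ := by
    have := A_strictMonoOn h0I (heI T₀ hT₀0) (by linarith : (0:ℝ) < e₀)
    rw [A_zero] at this
    exact this
  have hGT₀ : G T₀ = G₀ := by
    simp only [hGdef, hdT₀0, A_zero, hG₀def, he₀def]; ring
  set T₁ : ℝ := T₀ + 4 * G₀ / c + 1 with hT₁def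
  have hT₀T₁ : T₀ < T₁ := by
    have : 0 < 4 * G₀ / c := by positivity
    simp only [hT₁def]; linarith
  -- ### Phase 3 barrier
  have hP3 : ∀ T ∈ Icc T₀ T₁, (∀ s ∈ Icc T₀ T, 0 ≤ G s) →
      ∀ t ∈ Icc T₀ T, 0 < φ t - c := by
    intro T hT hside
    apply barrier hT.1
    · intro s hs
      have hs0 : (0:ℝ) ≤ s := hT₀0.trans hs.1
      exact (((hφ s hs0).continuousAt).sub continuousAt_const).continuousWithinAt
    · simp only [hφdef, hdT₀0]
      simp only [hcdef, ← he₀def]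
      linarith
    · intro ts hts hge h0
      have hts0 : (0:ℝ) ≤ ts := hT₀0.trans hts.1.le
      have hGts : 0 ≤ G ts := hside ts ⟨hts.1.le, hts.2⟩
      have hed : d ts ≤ e ts := by
        have : A (d ts) ≤ A (e ts) := by
          simp only [hGdef] at hGts; linarith
        exact (A_strictMonoOn.le_iff_le (hdI ts hts0) (heI ts hts0)).mp this
      have hφts : 3 * d ts + e ts = c := by
        simp only [hφdef] at h0 ⊢; linarith
      have hmin : ∀ s ∈ Ico T₀ ts, (fun x => φ x - c) ts ≤ (fun x => φ x - c) s := by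
        intro s hs
        have := hge s ⟨hs.1, hs.2.le⟩
        simp only
        linarith [h0]
      have hle := deriv_nonpos_of_left_min ((hφ ts hts0).sub_const c) hts.1 hmin
      have hd1 := (hdI ts hts0).1
      have hd2 := (hdI ts hts0).2
      have he1 := (heI ts hts0).1
      have he2 := (heI ts hts0).2
      have := alg2 c (d ts) (e ts) hcpos hc2 hed hd1 hd2 he1 he2 hφts
      linarith
  -- ### G crosses zero
  have hGcont : ContinuousOn G (Icc T₀ T₁) :=
    fun s hs => (hG s (hT₀0.trans hs.1)).continuousAt.continuousWithinAt
  have hGcross : ∃ t ∈ Icc T₀ T₁, G t ≤ 0 := by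
    by_contra hno
    push_neg at hno
    have hside : ∀ s ∈ Icc T₀ T₁, 0 ≤ G s := fun s hs => (hno s hs).le
    have hφge := hP3 T₁ (right_mem_Icc.mpr hT₀T₁.le) hside
    have hanti : AntitoneOn (fun s => G s + c / 4 * (s - T₀)) (Icc T₀ T₁) := by
      apply anti_of_deriv (f' := fun s => -(3 * d s + e s) / 4 + c / 4)
      · intro s hs
        refine (hG s (hT₀0.trans hs.1)).add ?_
        simpa using ((hasDerivAt_id s).sub_const T₀).const_mul (c / 4)
      · intro s hs
        have := hφge s hs
        simp only [hφdef] at this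
        linarith
    have h1 := hanti (left_mem_Icc.mpr hT₀T₁.le) (right_mem_Icc.mpr hT₀T₁.le) hT₀T₁.le
    simp only [hGT₀] at h1
    have h2 : c / 4 * (T₁ - T₀) = G₀ + c / 4 := by
      simp only [hT₁def]
      field_simp
      ring
    have h1' : G T₁ + c / 4 * (T₁ - T₀) ≤ G₀ := by
      have hz : c / 4 * (T₀ - T₀) = 0 := by ring
      rw [hz] at h1; linarith
    have h3 : G T₁ ≤ -c/4 := by linarith [h1', h2]
    have hgt := hno T₁ (right_mem_Icc.mpr hT₀T₁.le)
    have hfin : (0:ℝ) < -c/4 := lt_of_lt_of_le hgt h3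
    linarith [hfin, hcpos]
  -- T₂ : first zero of G
  set S2 : Set ℝ := Icc T₀ T₁ ∩ G ⁻¹' (Iic 0) with hS2def
  have hS2closed : IsClosed S2 :=
    hGcont.preimage_isClosed_of_isClosed isClosed_Icc isClosed_Iic
  have hS2ne : S2.Nonempty := by
    obtain ⟨t, ht, hGt⟩ := hGcross; exact ⟨t, ht, hGt⟩
  have hS2bdd : BddBelow S2 := ⟨T₀, fun x hx => hx.1.1⟩
  set T₂ : ℝ := sInf S2 with hT₂def
  have hT₂S : T₂ ∈ S2 := hS2closed.csInf_mem hS2ne hS2bdd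
  have hT₂Icc : T₂ ∈ Icc T₀ T₁ := hT₂S.1
  have hGT₂le : G T₂ ≤ 0 := hT₂S.2
  have hT₂pos' : T₀ < T₂ := by
    rcases lt_or_eq_of_le hT₂Icc.1 with h | h
    · exact h
    · exfalso; rw [← h] at hGT₂le; rw [hGT₀] at hGT₂le; linarith
  have hT₂0 : (0:ℝ) ≤ T₂ := hT₀0.trans hT₂Icc.1
  have hGpos : ∀ s ∈ Ico T₀ T₂, 0 < G s := by
    intro s hs
    by_contra hn
    push_neg at hn
    have : s ∈ S2 := ⟨⟨hs.1, hs.2.le.trans hT₂Icc.2⟩, hn⟩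
    exact absurd (csInf_le hS2bdd this) (not_le.mpr hs.2)
  have hGT₂ge : 0 ≤ G T₂ := by
    have hmem : Ico T₀ T₂ ⊆ Icc T₀ T₁ :=
      fun x hx => ⟨hx.1, hx.2.le.trans hT₂Icc.2⟩
    have htend : Tendsto G (𝓝[Ico T₀ T₂] T₂) (𝓝 (G T₂)) :=
      (hGcont.continuousWithinAt hT₂Icc).mono hmem
    rw [nhdsWithin_Ico_eq_nhdsLT hT₂pos'] at htend
    refine ge_of_tendsto htend ?_
    filter_upwards [Ioo_mem_nhdsLT_of_mem (⟨hT₂pos', le_refl T₂⟩ : T₂ ∈ Ioc T₀ T₂)]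
      with s hs
    exact (hGpos s ⟨hs.1.le, hs.2⟩).le
  have hGT₂0 : G T₂ = 0 := le_antisymm hGT₂le hGT₂ge
  have hede : e T₂ = d T₂ := by
    have : A (e T₂) = A (d T₂) := by
      simp only [hGdef] at hGT₂0; linarith
    exact A_strictMonoOn.injOn (heI T₂ hT₂0) (hdI T₂ hT₂0) this
  -- φ at T₂
  have hsideG : ∀ s ∈ Icc T₀ T₂, 0 ≤ G s := by
    intro s hs
    rcases lt_or_eq_of_le hs.2 with h | h
    · exact (hGpos s ⟨hs.1, h⟩).le
    · rw [h, hGT₂0]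
  have hφT₂ := hP3 T₂ hT₂Icc hsideG T₂ ⟨hT₂Icc.1, le_refl _⟩
  set β : ℝ := d T₂ with hβdef
  have hβpos : 0 < β := by
    simp only [hφdef, hede, ← hβdef] at hφT₂
    linarith
  have hβlt : β < 1 := (hdI T₂ hT₂0).2
  exact ⟨T₂, lt_of_le_of_lt hT₀0 hT₂pos' |>.trans_le (le_refl T₂) |>.trans_le (le_refl T₂),
    β, ⟨hβpos, hβlt⟩, rfl, hede⟩
end
end

section
/- Consider the ODE system on [−1,1]^4: δ̇ᵢ = ¼(1−δᵢ²)(δ_{3−i}+ε₁+ε₂), ε̇ᵢ = −¼(1−εᵢ²)(δ₁+δ₂−ε_{3−i}), i=1,2. Along any solution, the function π(t) := (1−δ₁(t)²)(1−δ₂(t)²)(1−ε₁(t)²)(1−ε₂(t)²) satisfies π̇(t) = −(δ₁(t)δ₂(t) + ε₁(t)ε₂(t))·π(t) for all t. -/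
noncomputable section

/-- Along any solution of the Red Queen dynamics of the
four-gene game (in the coordinates `(δ₁,δ₂,ε₁,ε₂)` on `[−1,1]⁴`), the potential
`π(t) = (1−δ₁²)(1−δ₂²)(1−ε₁²)(1−ε₂²)` satisfies
`π̇ = −(δ₁δ₂ + ε₁ε₂)·π`. -/
theorem stmt5 (d1 d2 e1 e2 : ℝ → ℝ)
    (hval : ∀ t, d1 t ∈ Set.Icc (-1:ℝ) 1 ∧ d2 t ∈ Set.Icc (-1:ℝ) 1 ∧
      e1 t ∈ Set.Icc (-1:ℝ) 1 ∧ e2 t ∈ Set.Icc (-1:ℝ) 1)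
    (hd1 : ∀ t, HasDerivAt d1 ((1/4) * (1 - d1 t ^ 2) * (d2 t + e1 t + e2 t)) t)
    (hd2 : ∀ t, HasDerivAt d2 ((1/4) * (1 - d2 t ^ 2) * (d1 t + e1 t + e2 t)) t)
    (he1 : ∀ t, HasDerivAt e1 (-((1/4) * (1 - e1 t ^ 2) * (d1 t + d2 t - e2 t))) t)
    (he2 : ∀ t, HasDerivAt e2 (-((1/4) * (1 - e2 t ^ 2) * (d1 t + d2 t - e1 t))) t) :
    ∀ t, HasDerivAt
      (fun s => (1 - d1 s ^ 2) * (1 - d2 s ^ 2) * (1 - e1 s ^ 2) * (1 - e2 s ^ 2))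
      (-(d1 t * d2 t + e1 t * e2 t) *
        ((1 - d1 t ^ 2) * (1 - d2 t ^ 2) * (1 - e1 t ^ 2) * (1 - e2 t ^ 2))) t := by
  intro t
  have h1 := ((hd1 t).pow 2).const_sub 1
  have h2 := ((hd2 t).pow 2).const_sub 1
  have h3 := ((he1 t).pow 2).const_sub 1
  have h4 := ((he2 t).pow 2).const_sub 1
  have := ((h1.mul h2).mul h3).mul h4
  convert this using 1
  · rfl
  · rfl
  · rfl
  · simp only [Pi.mul_apply, Pi.pow_apply]
    ring
end
end

section
/- Consider the ODE system on (−1,1)^4: δ̇ᵢ = ¼(1−δᵢ²)(δ_{3−i}+ε₁+ε₂), ε̇ᵢ = −¼(1−εᵢ²)(δ₁+δ₂−ε_{3−i}), i=1,2. Along any solution with values in (−1,1)^4, the function μ_A(t) := (δ₁(t)−δ₂(t))² / ((1−δ₁(t)²)(1−δ₂(t)²)) satisfies μ̇_A(t) = −½(1−δ₁(t)δ₂(t))·μ_A(t) ≤ 0, and the function μ_B(t) := (ε₁(t)−ε₂(t))² / ((1−ε₁(t)²)(1−ε₂(t)²)) satisfies μ̇_B(t) = −½(1−ε₁(t)ε₂(t))·μ_B(t)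 ≤ 0; in particular both μ_A and μ_B are nonincreasing in t. -/
noncomputable section

lemma rq_aux (u v c : ℝ → ℝ)
    (hu1 : ∀ t, u t ∈ Set.Ioo (-1:ℝ) 1) (hv1 : ∀ t, v t ∈ Set.Ioo (-1:ℝ) 1)
    (hu : ∀ t, HasDerivAt u ((1/4) * (1 - u t ^ 2) * (v t + c t)) t)
    (hv : ∀ t, HasDerivAt v ((1/4) * (1 - v t ^ 2) * (u t + c t)) t) :
    (∀ t, HasDerivAt (fun s => (u s - v s) ^ 2 / ((1 - u s ^ 2) * (1 - v s ^ 2)))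
        (-(1/2) * (1 - u t * v t) * ((u t - v t) ^ 2 / ((1 - u t ^ 2) * (1 - v t ^ 2)))) t ∧
      -(1/2) * (1 - u t * v t) * ((u t - v t) ^ 2 / ((1 - u t ^ 2) * (1 - v t ^ 2))) ≤ 0) ∧
    Antitone (fun s => (u s - v s) ^ 2 / ((1 - u s ^ 2) * (1 - v s ^ 2))) := by
  have hu2 : ∀ t, (1 : ℝ) - u t ^ 2 > 0 := by
    intro t
    have h := hu1 t
    nlinarith [h.1, h.2]
  have hv2 : ∀ t, (1 : ℝ) - v t ^ 2 > 0 := by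
    intro t
    have h := hv1 t
    nlinarith [h.1, h.2]
  have huv : ∀ t, (1 : ℝ) - u t * v t > 0 := by
    intro t
    nlinarith [hu2 t, hv2 t, sq_nonneg (u t - v t), sq_nonneg (u t + v t)]
  have key : ∀ t, HasDerivAt (fun s => (u s - v s) ^ 2 / ((1 - u s ^ 2) * (1 - v s ^ 2)))
      (-(1/2) * (1 - u t * v t) * ((u t - v t) ^ 2 / ((1 - u t ^ 2) * (1 - v t ^ 2)))) t := by
    intro t
    have hD : (1 - u t ^ 2) * (1 - v t ^ 2) ≠ 0 := ne_of_gt (mul_pos (hu2 t) (hv2 t))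
    have hN : HasDerivAt (fun s => (u s - v s) ^ 2)
        (2 * (u t - v t) * ((1/4) * (1 - u t ^ 2) * (v t + c t) -
          (1/4) * (1 - v t ^ 2) * (u t + c t))) t := by
      have := ((hu t).sub (hv t)).fun_pow 2
      simpa [mul_comm, mul_assoc, mul_left_comm] using this
    have hDu : HasDerivAt (fun s => 1 - u s ^ 2)
        (-(2 * u t * ((1/4) * (1 - u t ^ 2) * (v t + c t)))) t := by
      have := ((hu t).pow 2).const_sub 1
      simpa [mul_comm, mul_assoc, mul_left_comm] using this
    have hDv : HasDerivAt (fun s => 1 - v s ^ 2)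
        (-(2 * v t * ((1/4) * (1 - v t ^ 2) * (u t + c t)))) t := by
      have := ((hv t).pow 2).const_sub 1
      simpa [mul_comm, mul_assoc, mul_left_comm] using this
    have hq := hN.fun_div (hDu.fun_mul hDv) hD
    refine hq.congr_deriv ?_
    have h1 : (1 : ℝ) - u t ^ 2 ≠ 0 := ne_of_gt (hu2 t)
    have h2 : (1 : ℝ) - v t ^ 2 ≠ 0 := ne_of_gt (hv2 t)
    field_simp
    ring
  refine ⟨fun t => ⟨key t, ?_⟩, ?_⟩
  · have hμ : (0:ℝ) ≤ (u t - v t) ^ 2 / ((1 - u t ^ 2) * (1 - v t ^ 2)) := div_nonneg (sq_nonneg _) (le_of_lt (mul_pos (hu2 t) (hv2 t)))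
    nlinarith [huv t, hμ, mul_nonneg (le_of_lt (huv t)) hμ]
  · apply antitone_of_deriv_nonpos
    · intro t
      exact (key t).differentiableAt
    · intro t
      rw [(key t).deriv]
      have hμ : (0:ℝ) ≤ (u t - v t) ^ 2 / ((1 - u t ^ 2) * (1 - v t ^ 2)) := div_nonneg (sq_nonneg _) (le_of_lt (mul_pos (hu2 t) (hv2 t)))
      nlinarith [huv t, hμ, mul_nonneg (le_of_lt (huv t)) hμ]

/-- Along any solution of the Red Queen dynamics of the
four-gene game with values in `(−1,1)⁴`, the potentials
`μ_A = (δ₁−δ₂)²/((1−δ₁²)(1−δ₂²))` and `μ_B = (ε₁−ε₂)²/((1−ε₁²)(1−ε₂²))`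
satisfy `μ̇_A = −½(1−δ₁δ₂)μ_A ≤ 0` and `μ̇_B = −½(1−ε₁ε₂)μ_B ≤ 0`; in
particular both are nonincreasing. -/
theorem stmt6 (d1 d2 e1 e2 : ℝ → ℝ)
    (hval : ∀ t, d1 t ∈ Set.Ioo (-1:ℝ) 1 ∧ d2 t ∈ Set.Ioo (-1:ℝ) 1 ∧
      e1 t ∈ Set.Ioo (-1:ℝ) 1 ∧ e2 t ∈ Set.Ioo (-1:ℝ) 1)
    (hd1 : ∀ t, HasDerivAt d1 ((1/4) * (1 - d1 t ^ 2) * (d2 t + e1 t + e2 t)) t)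
    (hd2 : ∀ t, HasDerivAt d2 ((1/4) * (1 - d2 t ^ 2) * (d1 t + e1 t + e2 t)) t)
    (he1 : ∀ t, HasDerivAt e1 (-((1/4) * (1 - e1 t ^ 2) * (d1 t + d2 t - e2 t))) t)
    (he2 : ∀ t, HasDerivAt e2 (-((1/4) * (1 - e2 t ^ 2) * (d1 t + d2 t - e1 t))) t) :
    (∀ t, HasDerivAt
        (fun s => (d1 s - d2 s) ^ 2 / ((1 - d1 s ^ 2) * (1 - d2 s ^ 2)))
        (-(1/2) * (1 - d1 t * d2 t) *
          ((d1 t - d2 t) ^ 2 / ((1 - d1 t ^ 2) * (1 - d2 t ^ 2)))) t ∧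
      -(1/2) * (1 - d1 t * d2 t) *
          ((d1 t - d2 t) ^ 2 / ((1 - d1 t ^ 2) * (1 - d2 t ^ 2))) ≤ 0) ∧
    (∀ t, HasDerivAt
        (fun s => (e1 s - e2 s) ^ 2 / ((1 - e1 s ^ 2) * (1 - e2 s ^ 2)))
        (-(1/2) * (1 - e1 t * e2 t) *
          ((e1 t - e2 t) ^ 2 / ((1 - e1 t ^ 2) * (1 - e2 t ^ 2)))) t ∧
      -(1/2) * (1 - e1 t * e2 t) *
          ((e1 t - e2 t) ^ 2 / ((1 - e1 t ^ 2) * (1 - e2 t ^ 2))) ≤ 0) ∧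
    Antitone (fun s => (d1 s - d2 s) ^ 2 / ((1 - d1 s ^ 2) * (1 - d2 s ^ 2))) ∧
    Antitone (fun s => (e1 s - e2 s) ^ 2 / ((1 - e1 s ^ 2) * (1 - e2 s ^ 2))) := by
  have hA := rq_aux d1 d2 (fun t => e1 t + e2 t)
    (fun t => (hval t).1) (fun t => (hval t).2.1)
    (fun t => by convert hd1 t using 1; ring)
    (fun t => by convert hd2 t using 1; ring)
  have hB := rq_aux e1 e2 (fun t => -(d1 t + d2 t))
    (fun t => (hval t).2.2.1) (fun t => (hval t).2.2.2)
    (fun t => by convert he1 t using 1; ring)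
    (fun t => by convert he2 t using 1; ring)
  exact ⟨hA.1, hB.1, hA.2, hB.2⟩
end
end

section
/- Consider the ODE system δ̇ᵢ = ¼(1−δᵢ²)(δ_{3−i}+ε₁+ε₂), ε̇ᵢ = −¼(1−εᵢ²)(δ₁+δ₂−ε_{3−i}), i=1,2. For every solution defined for all t ≥ 0 with values in (−1,1)^4, the quantities μ_A(t) := (δ₁(t)−δ₂(t))² / ((1−δ₁(t)²)(1−δ₂(t)²)) and μ_B(t) := (ε₁(t)−ε₂(t))² / ((1−ε₁(t)²)(1−ε₂(t)²)) both tend to 0 as t → ∞. -/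
open Filter

noncomputable section

open Set


lemma antitone_Ici_of_deriv {f f' : ℝ → ℝ} {T : ℝ}
    (hd : ∀ t, T ≤ t → HasDerivAt f (f' t) t)
    (h0 : ∀ t, T ≤ t → f' t ≤ 0) :
    ∀ ⦃a b : ℝ⦄, T ≤ a → a ≤ b → f b ≤ f a := by
  have hA : AntitoneOn f (Set.Ici T) := by
    apply antitoneOn_of_deriv_nonpos (convex_Ici T)
    · intro x hx; exact (hd x hx).continuousAt.continuousWithinAt
    · intro x hx
      have hx' : T ≤ x := le_of_lt (by simpa using hx)
      exact (hd x hx').differentiableAt.differentiableWithinAt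
    · intro x hx
      have hx' : T ≤ x := le_of_lt (by simpa using hx)
      rw [(hd x hx').deriv]; exact h0 x hx'
  intro a b ha hab; exact hA ha (le_trans ha hab) hab

lemma reach_below {f f' : ℝ → ℝ} {T b : ℝ} (hb : -1 < b)
    (hmem : ∀ t, T ≤ t → f t ∈ Set.Ioo (-1:ℝ) 1)
    (hd : ∀ t, T ≤ t → HasDerivAt f (f' t) t)
    (hle : ∀ t, T ≤ t → f' t ≤ -(1/8) * (1 - f t ^ 2)) :
    ∃ T', T ≤ T' ∧ ∀ t, T' ≤ t → f t ≤ b := by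
  rcases le_or_gt 1 b with hb1 | hb1
  · exact ⟨T, le_rfl, fun t ht => le_trans (hmem t ht).2.le hb1⟩
  have hanti : ∀ ⦃a c : ℝ⦄, T ≤ a → a ≤ c → f c ≤ f a := by
    refine antitone_Ici_of_deriv hd fun t ht => ?_
    have h1 := (hmem t ht).1; have h2 := (hmem t ht).2
    nlinarith [hle t ht]
  by_cases hex : ∃ t0, T ≤ t0 ∧ f t0 ≤ b
  · obtain ⟨t0, ht0, hf0⟩ := hex
    exact ⟨t0, ht0, fun t ht => le_trans (hanti ht0 ht) hf0⟩
  · exfalso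
    push_neg at hex
    set c : ℝ := 1 - max (b ^ 2) (f T ^ 2) with hc
    have hcpos : 0 < c := by
      have h1 := (hmem T le_rfl).1; have h2 := (hmem T le_rfl).2
      have : max (b ^ 2) (f T ^ 2) < 1 := by
        apply max_lt <;> nlinarith
      linarith
    have hkey : ∀ t, T ≤ t → f t ^ 2 ≤ max (b ^ 2) (f T ^ 2) := by
      intro t ht
      have hgt : b < f t := hex t ht
      have hle' : f t ≤ f T := hanti le_rfl ht
      rcases le_or_gt 0 (f t) with h | h
      · exact le_trans (by nlinarith) (le_max_right _ _)
      · exact le_trans (by nlinarith) (le_max_left _ _)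
    have hanti2 : ∀ ⦃a d : ℝ⦄, T ≤ a → a ≤ d →
        f d + c/8 * d ≤ f a + c/8 * a := by
      refine antitone_Ici_of_deriv (f' := fun s => f' s + c/8)
        (fun t ht => (hd t ht).add (((hasDerivAt_id t).const_mul (c/8)).congr_deriv (by ring)))
        (fun t ht => ?_)
      have h1 := hle t ht
      have h2 := hkey t ht
      nlinarith
    have hfTb : b < f T := hex T le_rfl
    have hdiv : 0 ≤ 8 * (f T - b) / c := div_nonneg (by linarith) hcpos.le
    set t1 : ℝ := T + 8 * (f T - b) / c + 8 with ht1
    have hT1 : T ≤ t1 := by rw [ht1]; linarith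
    have h1 := hanti2 le_rfl hT1
    have hgt : b < f t1 := hex t1 hT1
    have h2 : f t1 ≤ f T - c/8 * (t1 - T) := by linarith
    have h3 : t1 - T = 8*(f T - b)/c + 8 := by rw [ht1]; ring
    rw [h3] at h2
    have hexp : c/8 * (8*(f T - b)/c + 8) = (f T - b) + c := by
      field_simp
    nlinarith

lemma reach_above {f f' : ℝ → ℝ} {T b : ℝ} (hb : b < 1)
    (hmem : ∀ t, T ≤ t → f t ∈ Set.Ioo (-1:ℝ) 1)
    (hd : ∀ t, T ≤ t → HasDerivAt f (f' t) t)
    (hle : ∀ t, T ≤ t → (1/8) * (1 - f t ^ 2) ≤ f' t) :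
    ∃ T', T ≤ T' ∧ ∀ t, T' ≤ t → b ≤ f t := by
  have := reach_below (f := fun t => -f t) (f' := fun t => -f' t) (T := T) (b := -b)
    (by linarith)
    (fun t ht => by have := hmem t ht; simp at this ⊢; constructor <;> linarith [this.1, this.2])
    (fun t ht => (hd t ht).neg)
    (fun t ht => by have := hle t ht; nlinarith)
  obtain ⟨T', hT', h⟩ := this
  exact ⟨T', hT', fun t ht => by have := h t ht; simp at this; linarith⟩

/-- the key derivative identity for the synchronization potential. -/
lemma mu_hasDerivAt {f g E : ℝ → ℝ} {t : ℝ}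
    (hf : f t ∈ Set.Ioo (-1:ℝ) 1) (hg : g t ∈ Set.Ioo (-1:ℝ) 1)
    (hdf : HasDerivAt f ((1/4) * (1 - f t ^ 2) * (g t + E t)) t)
    (hdg : HasDerivAt g ((1/4) * (1 - g t ^ 2) * (f t + E t)) t) :
    HasDerivAt (fun s => (f s - g s) ^ 2 / ((1 - f s ^ 2) * (1 - g s ^ 2)))
      (-(1/2) * (1 - f t * g t) *
        ((f t - g t) ^ 2 / ((1 - f t ^ 2) * (1 - g t ^ 2)))) t := by
  have hf1 : (0:ℝ) < 1 - f t ^ 2 := by nlinarith [hf.1, hf.2]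
  have hg1 : (0:ℝ) < 1 - g t ^ 2 := by nlinarith [hg.1, hg.2]
  have hden : (1 - f t ^ 2) * (1 - g t ^ 2) ≠ 0 := by positivity
  have hN : HasDerivAt (fun s => (f s - g s) ^ 2)
      (2 * (f t - g t) *
        ((1/4) * (1 - f t ^ 2) * (g t + E t) - (1/4) * (1 - g t ^ 2) * (f t + E t))) t := by
    have := (hdf.sub hdg).pow 2
    exact this.congr_deriv (by simp only [Nat.reduceSub, pow_one, Nat.cast_ofNat, Pi.sub_apply])
  have hD : HasDerivAt (fun s => (1 - f s ^ 2) * (1 - g s ^ 2))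
      ((-(2 * f t * ((1/4) * (1 - f t ^ 2) * (g t + E t)))) * (1 - g t ^ 2)
        + (1 - f t ^ 2) * (-(2 * g t * ((1/4) * (1 - g t ^ 2) * (f t + E t))))) t := by
    have h1 : HasDerivAt (fun s => 1 - f s ^ 2)
        (-(2 * f t * ((1/4) * (1 - f t ^ 2) * (g t + E t)))) t := by
      have := (hasDerivAt_const t (1:ℝ)).sub (hdf.pow 2)
      exact this.congr_deriv (by simp only [Nat.reduceSub, pow_one, Nat.cast_ofNat]; ring)
    have h2 : HasDerivAt (fun s => 1 - g s ^ 2)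
        (-(2 * g t * ((1/4) * (1 - g t ^ 2) * (f t + E t)))) t := by
      have := (hasDerivAt_const t (1:ℝ)).sub (hdg.pow 2)
      exact this.congr_deriv (by simp only [Nat.reduceSub, pow_one, Nat.cast_ofNat]; ring)
    exact h1.mul h2
  have := hN.div hD hden
  refine this.congr_deriv ?_
  field_simp
  ring


lemma tendsto_of_antitone_Ici {f : ℝ → ℝ} {T B : ℝ}
    (hA : ∀ ⦃a b : ℝ⦄, T ≤ a → a ≤ b → f b ≤ f a)
    (hB : ∀ t, T ≤ t → B ≤ f t) :
    ∃ m, B ≤ m ∧ Tendsto f atTop (nhds m) ∧ ∀ t, T ≤ t → m ≤ f t := by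
  set F : ℝ → ℝ := fun t => f (max t T) with hF
  have hFA : Antitone F := fun a b hab => hA (le_max_right a T) (max_le_max hab le_rfl)
  have hFB : BddBelow (Set.range F) := ⟨B, by rintro x ⟨t, rfl⟩; exact hB _ (le_max_right t T)⟩
  have htend : Tendsto F atTop (nhds (⨅ t, F t)) := tendsto_atTop_ciInf hFA hFB
  refine ⟨⨅ t, F t, le_ciInf fun t => hB _ (le_max_right t T), ?_, ?_⟩
  · refine htend.congr' ?_
    filter_upwards [eventually_ge_atTop T] with t ht
    simp [hF, max_eq_left ht]
  · intro t ht
    simpa [hF, max_eq_left ht] using ciInf_le hFB t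

/-- Barbalat-type lemma. -/
lemma eventually_small {g g' : ℝ → ℝ} {C : ℝ}
    (h0 : ∀ t, (0:ℝ) ≤ t → 0 ≤ g t)
    (hd : ∀ t, (0:ℝ) ≤ t → HasDerivAt g (g' t) t)
    (hlip : ∀ t, (0:ℝ) ≤ t → -(3/2) ≤ g' t)
    (hI : ∀ t, (0:ℝ) ≤ t → (∫ s in (0:ℝ)..t, g s) ≤ C)
    {ε : ℝ} (hε : 0 < ε) :
    ∃ T, 0 ≤ T ∧ ∀ t, T ≤ t → g t < ε := by
  have hcont : ∀ ⦃a b : ℝ⦄, 0 ≤ a → IntervalIntegrable g MeasureTheory.volume a b → True := fun _ _ _ _ => trivial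
  have hgint : ∀ a b : ℝ, 0 ≤ a → 0 ≤ b → IntervalIntegrable g MeasureTheory.volume a b := by
    intro a b ha hb
    apply ContinuousOn.intervalIntegrable
    intro x hx
    have hx0 : 0 ≤ x := by
      rcases Set.mem_uIcc.mp hx with h | h
      · exact le_trans ha h.1
      · exact le_trans hb h.1
    exact (hd x hx0).continuousAt.continuousWithinAt
  set G : ℝ → ℝ := fun t => ∫ s in (0:ℝ)..t, g s with hG
  have hGadd : ∀ a b : ℝ, 0 ≤ a → a ≤ b → G b - G a = ∫ s in a..b, g s := by
    intro a b ha hab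
    have := intervalIntegral.integral_add_adjacent_intervals
      (hgint 0 a le_rfl ha) (hgint a b ha (le_trans ha hab))
    simp only [hG]
    linarith [this]
  have hGmono : ∀ ⦃a b : ℝ⦄, 0 ≤ a → a ≤ b → G a ≤ G b := by
    intro a b ha hab
    have h := hGadd a b ha hab
    have hnn : 0 ≤ ∫ s in a..b, g s := by
      apply intervalIntegral.integral_nonneg hab
      intro u hu; exact h0 u (le_trans ha hu.1)
    linarith
  obtain ⟨m, _, htend, hle⟩ := tendsto_of_antitone_Ici (f := fun t => -G t) (T := 0) (B := -C)
    (fun a b ha hab => by simpa using hGmono ha hab)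
    (fun t ht => by simpa using hI t ht)
  set A : ℝ := -m with hA
  have htendG : Tendsto G atTop (nhds A) := by
    have := htend.neg
    simpa [hA] using this
  have hGleA : ∀ t, 0 ≤ t → G t ≤ A := fun t ht => by
    have := hle t ht; simp [hA] at this ⊢; linarith
  -- choose T
  have hev : ∀ᶠ t in atTop, A - ε^2/13 < G t :=
    htendG.eventually (eventually_gt_nhds (by nlinarith))
  obtain ⟨T, hT⟩ := eventually_atTop.mp (hev.and (eventually_ge_atTop (0:ℝ)))
  refine ⟨max T 0, le_max_right _ _, fun t ht => ?_⟩
  have ht0 : (0:ℝ) ≤ t := le_trans (le_max_right T 0) ht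
  have htT : T ≤ t := le_trans (le_max_left T 0) ht
  by_contra hge
  push_neg at hge
  -- g ≥ ε/2 on [t, t+ε/3]
  have hmono2 : ∀ ⦃a b : ℝ⦄, 0 ≤ a → a ≤ b → -(g b) - 3/2*b ≤ -(g a) - 3/2*a := by
    refine antitone_Ici_of_deriv (f' := fun s => -(g' s) - 3/2) (fun s hs => ?_) (fun s hs => ?_)
    · exact ((hd s hs).neg).sub (((hasDerivAt_id s).const_mul (3/2)).congr_deriv (by ring))
    · have := hlip s hs; linarith
  have hlow : ∀ s, s ∈ Set.Icc t (t + ε/3) → ε/2 ≤ g s := by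
    intro s hs
    have := hmono2 ht0 hs.1
    have hs2 := hs.2
    nlinarith
  have hint1 : IntervalIntegrable (fun _ => ε/2) MeasureTheory.volume t (t + ε/3) :=
    intervalIntegrable_const
  have hint2 : IntervalIntegrable g MeasureTheory.volume t (t + ε/3) :=
    hgint t (t + ε/3) ht0 (by linarith)
  have hmon := intervalIntegral.integral_mono_on (by linarith : t ≤ t + ε/3) hint1 hint2 hlow
  have hconst : (∫ _ in t..(t + ε/3), (ε/2 : ℝ)) = ε/3 * (ε/2) := by
    simp [intervalIntegral.integral_const]
    ring
  have heq := hGadd t (t + ε/3) ht0 (by linarith)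
  have h1 := (hT t htT).1
  have h2 := hGleA (t + ε/3) (by linarith)
  nlinarith

lemma sign_dichotomy {f : ℝ → ℝ} {T : ℝ}
    (hcont : ∀ t, T ≤ t → ContinuousAt f t)
    (hsq : ∀ t, T ≤ t → 49/64 ≤ f t ^ 2) :
    (∀ t, T ≤ t → 7/8 ≤ f t) ∨ (∀ t, T ≤ t → f t ≤ -(7/8)) := by
  have hdich : ∀ t, T ≤ t → 7/8 ≤ f t ∨ f t ≤ -(7/8) := by
    intro t ht
    rcases le_or_gt 0 (f t) with h | h
    · left; nlinarith [hsq t ht]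
    · right; nlinarith [hsq t ht]
  have hIVT : ∀ a b : ℝ, T ≤ a → a ≤ b → ¬ (f b ≤ -(7/8) ∧ 7/8 ≤ f a) := by
    intro a b ha hab ⟨h1, h2⟩
    have hco : ContinuousOn f (Set.Icc a b) := fun x hx =>
      (hcont x (le_trans ha hx.1)).continuousWithinAt
    have := intermediate_value_Icc' hab hco (a := a) (b := b)
    have h0 : (0:ℝ) ∈ Set.Icc (f b) (f a) := ⟨by linarith, by linarith⟩
    obtain ⟨s, hs, hfs⟩ := this h0
    have := hsq s (le_trans ha hs.1)
    rw [hfs] at this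
    norm_num at this
  have hIVT' : ∀ a b : ℝ, T ≤ a → a ≤ b → ¬ (7/8 ≤ f b ∧ f a ≤ -(7/8)) := by
    intro a b ha hab ⟨h1, h2⟩
    have hco : ContinuousOn f (Set.Icc a b) := fun x hx =>
      (hcont x (le_trans ha hx.1)).continuousWithinAt
    have := intermediate_value_Icc hab hco (a := a) (b := b)
    have h0 : (0:ℝ) ∈ Set.Icc (f a) (f b) := ⟨by linarith, by linarith⟩
    obtain ⟨s, hs, hfs⟩ := this h0
    have := hsq s (le_trans ha hs.1)
    rw [hfs] at this
    norm_num at this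
  rcases hdich T le_rfl with hT | hT
  · left; intro t ht
    rcases hdich t ht with h | h
    · exact h
    · exact absurd ⟨h, hT⟩ (hIVT T t le_rfl ht)
  · right; intro t ht
    rcases hdich t ht with h | h
    · exact absurd ⟨h, hT⟩ (hIVT' T t le_rfl ht)
    · exact h

lemma aux_sign {x y : ℝ} (h2 : 49/64 ≤ y^2) (hxy : 0 < x*y) :
    (7/8 ≤ x → 7/8 ≤ y) ∧ (x ≤ -(7/8) → y ≤ -(7/8)) := by
  rcases mul_pos_iff.mp hxy with ⟨hx, hy⟩ | ⟨hx, hy⟩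
  · constructor <;> intro h <;> nlinarith
  · constructor <;> intro h <;> nlinarith

lemma mu_main {f g E : ℝ → ℝ}
    (hmemf : ∀ t, (0:ℝ) ≤ t → f t ∈ Set.Ioo (-1:ℝ) 1)
    (hmemg : ∀ t, (0:ℝ) ≤ t → g t ∈ Set.Ioo (-1:ℝ) 1)
    (hE : ∀ t, (0:ℝ) ≤ t → |E t| ≤ 2)
    (hdf : ∀ t, (0:ℝ) ≤ t → HasDerivAt f ((1/4) * (1 - f t ^ 2) * (g t + E t)) t)
    (hdg : ∀ t, (0:ℝ) ≤ t → HasDerivAt g ((1/4) * (1 - g t ^ 2) * (f t + E t)) t) :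
    Tendsto (fun t => (f t - g t) ^ 2 / ((1 - f t ^ 2) * (1 - g t ^ 2)))
      atTop (nhds 0) ∨
    ∃ T, 0 ≤ T ∧ ((∀ t, T ≤ t → 7/8 ≤ f t ∧ 7/8 ≤ g t) ∨
      (∀ t, T ≤ t → f t ≤ -(7/8) ∧ g t ≤ -(7/8))) := by
  set μ : ℝ → ℝ := fun t => (f t - g t) ^ 2 / ((1 - f t ^ 2) * (1 - g t ^ 2)) with hμ
  have hdmu : ∀ t, (0:ℝ) ≤ t →
      HasDerivAt μ (-(1/2) * (1 - f t * g t) * μ t) t := fun t ht =>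
    mu_hasDerivAt (hmemf t ht) (hmemg t ht) (hdf t ht) (hdg t ht)
  have hgfnn : ∀ t, (0:ℝ) ≤ t → 0 ≤ 1 - f t * g t := by
    intro t ht
    have h1 := (hmemf t ht).1; have h2 := (hmemf t ht).2
    have h3 := (hmemg t ht).1; have h4 := (hmemg t ht).2
    nlinarith
  have hmunn : ∀ t, (0:ℝ) ≤ t → 0 ≤ μ t := by
    intro t ht
    have h1 := (hmemf t ht).1; have h2 := (hmemf t ht).2
    have h3 := (hmemg t ht).1; have h4 := (hmemg t ht).2
    have : (0:ℝ) < (1 - f t ^ 2) * (1 - g t ^ 2) :=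
      mul_pos (by nlinarith) (by nlinarith)
    positivity
  have hanti : ∀ ⦃a b : ℝ⦄, (0:ℝ) ≤ a → a ≤ b → μ b ≤ μ a := by
    refine antitone_Ici_of_deriv hdmu fun t ht => ?_
    have := hgfnn t ht; have := hmunn t ht
    nlinarith
  obtain ⟨m, hm0, hmt, hmlb⟩ := tendsto_of_antitone_Ici hanti hmunn
  rcases hm0.lt_or_eq with hm | hm
  swap
  · left; exact hm ▸ hmt
  right
  -- FTC and integral bound
  have hφc : ∀ s, (0:ℝ) ≤ s →
      ContinuousAt (fun s => -(1/2) * (1 - f s * g s) * μ s) s := fun s hs =>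
    (continuousAt_const.mul (continuousAt_const.sub
      ((hdf s hs).continuousAt.mul (hdg s hs).continuousAt))).mul (hdmu s hs).continuousAt
  have hφint : ∀ t, (0:ℝ) ≤ t →
      IntervalIntegrable (fun s => -(1/2) * (1 - f s * g s) * μ s)
        MeasureTheory.volume 0 t := by
    intro t ht
    apply ContinuousOn.intervalIntegrable
    intro x hx
    rw [Set.uIcc_of_le ht] at hx
    exact (hφc x hx.1).continuousWithinAt
  have hftc : ∀ t, (0:ℝ) ≤ t →
      (∫ s in (0:ℝ)..t, -(1/2) * (1 - f s * g s) * μ s) = μ t - μ 0 := by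
    intro t ht
    apply intervalIntegral.integral_eq_sub_of_hasDerivAt
    · intro x hx
      rw [Set.uIcc_of_le ht] at hx
      exact hdmu x hx.1
    · exact hφint t ht
  have hC : ∀ t, (0:ℝ) ≤ t → (∫ s in (0:ℝ)..t, (1 - f s * g s)) ≤ 2 * μ 0 / m := by
    intro t ht
    have hint2 : IntervalIntegrable (fun s => (1/2) * (1 - f s * g s) * μ s)
        MeasureTheory.volume 0 t := by
      apply ContinuousOn.intervalIntegrable
      intro x hx
      rw [Set.uIcc_of_le ht] at hx
      exact ((continuousAt_const.mul (continuousAt_const.sub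
        ((hdf x hx.1).continuousAt.mul (hdg x hx.1).continuousAt))).mul
        (hdmu x hx.1).continuousAt).continuousWithinAt
    have hint1 : IntervalIntegrable (fun s => (m/2) * (1 - f s * g s))
        MeasureTheory.volume 0 t := by
      apply ContinuousOn.intervalIntegrable
      intro x hx
      rw [Set.uIcc_of_le ht] at hx
      exact (continuousAt_const.mul (continuousAt_const.sub
        ((hdf x hx.1).continuousAt.mul (hdg x hx.1).continuousAt))).continuousWithinAt
    have hmono := intervalIntegral.integral_mono_on ht hint1 hint2 (fun x hx => by
      have h1 := hgfnn x hx.1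
      have h2 := hmlb x hx.1
      nlinarith)
    have heq : (∫ s in (0:ℝ)..t, (1/2) * (1 - f s * g s) * μ s)
        = -(μ t - μ 0) := by
      rw [← hftc t ht, ← intervalIntegral.integral_neg]
      congr 1; funext s; ring
    have heq1 : (∫ s in (0:ℝ)..t, (m/2) * (1 - f s * g s))
        = (m/2) * ∫ s in (0:ℝ)..t, (1 - f s * g s) := by
      exact intervalIntegral.integral_const_mul _ _
    rw [heq, heq1] at hmono
    have hmut := hmunn t ht
    rw [le_div_iff₀ hm]
    nlinarith
  -- Barbalat
  set gd : ℝ → ℝ := fun s =>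
    -((1/4) * (1 - f s ^ 2) * (g s + E s) * g s
      + f s * ((1/4) * (1 - g s ^ 2) * (f s + E s))) with hgd_def
  have hgd : ∀ s, (0:ℝ) ≤ s → HasDerivAt (fun u => 1 - f u * g u) (gd s) s := by
    intro s hs
    have := (hasDerivAt_const s (1:ℝ)).sub ((hdf s hs).mul (hdg s hs))
    refine this.congr_deriv ?_
    simp only [hgd_def]
    ring
  have hlip : ∀ s, (0:ℝ) ≤ s → -(3/2) ≤ gd s := by
    intro s hs
    have h1 := (hmemf s hs).1; have h2 := (hmemf s hs).2
    have h3 := (hmemg s hs).1; have h4 := (hmemg s hs).2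
    have h5 := abs_le.mp (hE s hs)
    have hX1 : (g s + E s) * g s ≤ 3 := by nlinarith
    have hX2 : -3 ≤ (g s + E s) * g s := by nlinarith
    have hY1 : (f s + E s) * f s ≤ 3 := by nlinarith
    have hY2 : -3 ≤ (f s + E s) * f s := by nlinarith
    have ha1 : (0:ℝ) ≤ 1 - f s ^ 2 := by nlinarith
    have ha2 : 1 - f s ^ 2 ≤ 1 := by nlinarith
    have hb1 : (0:ℝ) ≤ 1 - g s ^ 2 := by nlinarith
    have hb2 : 1 - g s ^ 2 ≤ 1 := by nlinarith
    simp only [hgd_def]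
    nlinarith [mul_nonneg ha1 (by linarith : (0:ℝ) ≤ 3 - (g s + E s) * g s),
      mul_nonneg ha1 (by linarith : (0:ℝ) ≤ (g s + E s) * g s + 3),
      mul_nonneg hb1 (by linarith : (0:ℝ) ≤ 3 - (f s + E s) * f s),
      mul_nonneg hb1 (by linarith : (0:ℝ) ≤ (f s + E s) * f s + 3)]
  obtain ⟨T, hT0, hsmall⟩ := eventually_small hgfnn hgd hlip hC
    (ε := 15/128) (by norm_num)
  have hfacts : ∀ t, T ≤ t → 49/64 ≤ f t ^ 2 ∧ 49/64 ≤ g t ^ 2 ∧ 0 < f t * g t := by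
    intro t ht
    have h0t : (0:ℝ) ≤ t := le_trans hT0 ht
    have hs := hsmall t ht
    have h1 := (hmemf t h0t).1; have h2 := (hmemf t h0t).2
    have h3 := (hmemg t h0t).1; have h4 := (hmemg t h0t).2
    refine ⟨by nlinarith [sq_nonneg (f t - g t)], by nlinarith [sq_nonneg (f t - g t)],
      by nlinarith⟩
  rcases sign_dichotomy (f := f) (T := T)
      (fun t ht => (hdf t (le_trans hT0 ht)).continuousAt)
      (fun t ht => (hfacts t ht).1) with hpos | hneg
  · exact ⟨T, hT0, Or.inl fun t ht => ⟨hpos t ht,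
      (aux_sign (hfacts t ht).2.1 (hfacts t ht).2.2).1 (hpos t ht)⟩⟩
  · exact ⟨T, hT0, Or.inr fun t ht => ⟨hneg t ht,
      (aux_sign (hfacts t ht).2.1 (hfacts t ht).2.2).2 (hneg t ht)⟩⟩

set_option maxHeartbeats 2000000 in
/-- For every solution of the Red Queen dynamics of the
four-gene game defined for all `t ≥ 0` with values in `(−1,1)⁴`, the potentials
`μ_A(t) = (δ₁−δ₂)²/((1−δ₁²)(1−δ₂²))` and `μ_B(t) = (ε₁−ε₂)²/((1−ε₁²)(1−ε₂²))`
both tend to `0` as `t → ∞`. -/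
theorem stmt7 (d1 d2 e1 e2 : ℝ → ℝ)
    (hval : ∀ t, 0 ≤ t → d1 t ∈ Set.Ioo (-1:ℝ) 1 ∧ d2 t ∈ Set.Ioo (-1:ℝ) 1 ∧
      e1 t ∈ Set.Ioo (-1:ℝ) 1 ∧ e2 t ∈ Set.Ioo (-1:ℝ) 1)
    (hd1 : ∀ t, 0 ≤ t →
      HasDerivAt d1 ((1/4) * (1 - d1 t ^ 2) * (d2 t + e1 t + e2 t)) t)
    (hd2 : ∀ t, 0 ≤ t →
      HasDerivAt d2 ((1/4) * (1 - d2 t ^ 2) * (d1 t + e1 t + e2 t)) t)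
    (he1 : ∀ t, 0 ≤ t →
      HasDerivAt e1 (-((1/4) * (1 - e1 t ^ 2) * (d1 t + d2 t - e2 t))) t)
    (he2 : ∀ t, 0 ≤ t →
      HasDerivAt e2 (-((1/4) * (1 - e2 t ^ 2) * (d1 t + d2 t - e1 t))) t) :
    Tendsto (fun t => (d1 t - d2 t) ^ 2 / ((1 - d1 t ^ 2) * (1 - d2 t ^ 2)))
      atTop (nhds 0) ∧
    Tendsto (fun t => (e1 t - e2 t) ^ 2 / ((1 - e1 t ^ 2) * (1 - e2 t ^ 2)))
      atTop (nhds 0) := by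
  have hval1 := fun t ht => (hval t ht).1
  have hval2 := fun t ht => (hval t ht).2.1
  have hval3 := fun t ht => (hval t ht).2.2.1
  have hval4 := fun t ht => (hval t ht).2.2.2
  constructor
  · rcases mu_main (f := d1) (g := d2) (E := fun t => e1 t + e2 t) hval1 hval2
      (fun t ht => by
        have h3 := hval3 t ht; have h4 := hval4 t ht
        beta_reduce
        exact abs_le.mpr ⟨by linarith [h3.1, h4.1], by linarith [h3.2, h4.2]⟩)
      (fun t ht => by have := hd1 t ht; convert this using 1; ring)
      (fun t ht => by have := hd2 t ht; convert this using 1; ring)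
      with h | ⟨T, hT0, hcase⟩
    · exact h
    exfalso
    rcases hcase with hc | hc
    · -- d1, d2 ≥ 7/8 eventually
      obtain ⟨T1, hTT1, h1⟩ := reach_below (f := e1)
        (f' := fun t => -((1/4) * (1 - e1 t ^ 2) * (d1 t + d2 t - e2 t)))
        (T := T) (b := -(3/4)) (by norm_num)
        (fun t ht => hval3 t (le_trans hT0 ht))
        (fun t ht => he1 t (le_trans hT0 ht))
        (fun t ht => by
          have h4 := hval1 t (le_trans hT0 ht)
          have h5 := hval2 t (le_trans hT0 ht)
          have h6 := hval3 t (le_trans hT0 ht)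
          have h7 := hval4 t (le_trans hT0 ht)
          have hcc := hc t ht
          have hcc1 := hcc.1; have hcc2 := hcc.2
          have h41 := h4.1; have h42 := h4.2
          have h51 := h5.1; have h52 := h5.2
          have h61 := h6.1; have h62 := h6.2
          have h71 := h7.1; have h72 := h7.2
          have hsq : (0:ℝ) ≤ 1 - e1 t ^ 2 := by nlinarith [h6.1, h6.2]
          have hlin : (0:ℝ) ≤ (d1 t + d2 t - e2 t) - 1/2 := by linarith
          beta_reduce
          nlinarith [mul_nonneg hsq hlin])
      obtain ⟨T2, hTT2, h2⟩ := reach_below (f := e2)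
        (f' := fun t => -((1/4) * (1 - e2 t ^ 2) * (d1 t + d2 t - e1 t)))
        (T := T) (b := -(3/4)) (by norm_num)
        (fun t ht => hval4 t (le_trans hT0 ht))
        (fun t ht => he2 t (le_trans hT0 ht))
        (fun t ht => by
          have h4 := hval1 t (le_trans hT0 ht)
          have h5 := hval2 t (le_trans hT0 ht)
          have h6 := hval3 t (le_trans hT0 ht)
          have h7 := hval4 t (le_trans hT0 ht)
          have hcc := hc t ht
          have hcc1 := hcc.1; have hcc2 := hcc.2
          have h41 := h4.1; have h42 := h4.2
          have h51 := h5.1; have h52 := h5.2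
          have h61 := h6.1; have h62 := h6.2
          have h71 := h7.1; have h72 := h7.2
          have hsq : (0:ℝ) ≤ 1 - e2 t ^ 2 := by nlinarith [h7.1, h7.2]
          have hlin : (0:ℝ) ≤ (d1 t + d2 t - e1 t) - 1/2 := by linarith
          beta_reduce
          nlinarith [mul_nonneg hsq hlin])
      obtain ⟨T4, hTT4, h4'⟩ := reach_below (f := d1)
        (f' := fun t => (1/4) * (1 - d1 t ^ 2) * (d2 t + e1 t + e2 t))
        (T := max T1 T2) (b := 0) (by norm_num)
        (fun t ht => hval1 t (le_trans hT0 (le_trans hTT1 (le_trans (le_max_left T1 T2) ht))))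
        (fun t ht => hd1 t (le_trans hT0 (le_trans hTT1 (le_trans (le_max_left T1 T2) ht))))
        (fun t ht => by
          have h0t : (0:ℝ) ≤ t := le_trans hT0 (le_trans hTT1 (le_trans (le_max_left T1 T2) ht))
          have hh1 := h1 t (le_trans (le_max_left T1 T2) ht)
          have hh2 := h2 t (le_trans (le_max_right T1 T2) ht)
          have h4 := hval1 t h0t
          have h5 := hval2 t h0t
          have h6 := hval3 t h0t
          have h7 := hval4 t h0t
          have h41 := h4.1; have h42 := h4.2
          have h51 := h5.1; have h52 := h5.2
          have h61 := h6.1; have h62 := h6.2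
          have h71 := h7.1; have h72 := h7.2
          have hsq : (0:ℝ) ≤ 1 - d1 t ^ 2 := by nlinarith [h4.1, h4.2]
          have hlin : (0:ℝ) ≤ -(d2 t + e1 t + e2 t) - 1/2 := by linarith
          beta_reduce
          nlinarith [mul_nonneg hsq hlin])
      have hcfin := (hc (max T4 (max T1 T2)) (le_trans hTT1 (le_trans (le_max_left T1 T2) (le_max_right T4 _)))).1
      have hfin := h4' (max T4 (max T1 T2)) (le_max_left _ _)
      have hfin2 := hcfin
      linarith
    · -- d1, d2 ≤ -7/8 eventually
      obtain ⟨T1, hTT1, h1⟩ := reach_above (f := e1)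
        (f' := fun t => -((1/4) * (1 - e1 t ^ 2) * (d1 t + d2 t - e2 t)))
        (T := T) (b := 3/4) (by norm_num)
        (fun t ht => hval3 t (le_trans hT0 ht))
        (fun t ht => he1 t (le_trans hT0 ht))
        (fun t ht => by
          have h4 := hval1 t (le_trans hT0 ht)
          have h5 := hval2 t (le_trans hT0 ht)
          have h6 := hval3 t (le_trans hT0 ht)
          have h7 := hval4 t (le_trans hT0 ht)
          have hcc := hc t ht
          have hcc1 := hcc.1; have hcc2 := hcc.2
          have h41 := h4.1; have h42 := h4.2
          have h51 := h5.1; have h52 := h5.2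
          have h61 := h6.1; have h62 := h6.2
          have h71 := h7.1; have h72 := h7.2
          have hsq : (0:ℝ) ≤ 1 - e1 t ^ 2 := by nlinarith [h6.1, h6.2]
          have hlin : (0:ℝ) ≤ -(d1 t + d2 t - e2 t) - 1/2 := by linarith
          beta_reduce
          nlinarith [mul_nonneg hsq hlin])
      obtain ⟨T2, hTT2, h2⟩ := reach_above (f := e2)
        (f' := fun t => -((1/4) * (1 - e2 t ^ 2) * (d1 t + d2 t - e1 t)))
        (T := T) (b := 3/4) (by norm_num)
        (fun t ht => hval4 t (le_trans hT0 ht))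
        (fun t ht => he2 t (le_trans hT0 ht))
        (fun t ht => by
          have h4 := hval1 t (le_trans hT0 ht)
          have h5 := hval2 t (le_trans hT0 ht)
          have h6 := hval3 t (le_trans hT0 ht)
          have h7 := hval4 t (le_trans hT0 ht)
          have hcc := hc t ht
          have hcc1 := hcc.1; have hcc2 := hcc.2
          have h41 := h4.1; have h42 := h4.2
          have h51 := h5.1; have h52 := h5.2
          have h61 := h6.1; have h62 := h6.2
          have h71 := h7.1; have h72 := h7.2
          have hsq : (0:ℝ) ≤ 1 - e2 t ^ 2 := by nlinarith [h7.1, h7.2]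
          have hlin : (0:ℝ) ≤ -(d1 t + d2 t - e1 t) - 1/2 := by linarith
          beta_reduce
          nlinarith [mul_nonneg hsq hlin])
      obtain ⟨T4, hTT4, h4'⟩ := reach_above (f := d1)
        (f' := fun t => (1/4) * (1 - d1 t ^ 2) * (d2 t + e1 t + e2 t))
        (T := max T1 T2) (b := 0) (by norm_num)
        (fun t ht => hval1 t (le_trans hT0 (le_trans hTT1 (le_trans (le_max_left T1 T2) ht))))
        (fun t ht => hd1 t (le_trans hT0 (le_trans hTT1 (le_trans (le_max_left T1 T2) ht))))
        (fun t ht => by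
          have h0t : (0:ℝ) ≤ t := le_trans hT0 (le_trans hTT1 (le_trans (le_max_left T1 T2) ht))
          have hh1 := h1 t (le_trans (le_max_left T1 T2) ht)
          have hh2 := h2 t (le_trans (le_max_right T1 T2) ht)
          have h4 := hval1 t h0t
          have h5 := hval2 t h0t
          have h6 := hval3 t h0t
          have h7 := hval4 t h0t
          have h41 := h4.1; have h42 := h4.2
          have h51 := h5.1; have h52 := h5.2
          have h61 := h6.1; have h62 := h6.2
          have h71 := h7.1; have h72 := h7.2
          have hsq : (0:ℝ) ≤ 1 - d1 t ^ 2 := by nlinarith [h4.1, h4.2]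
          have hlin : (0:ℝ) ≤ (d2 t + e1 t + e2 t) - 1/2 := by linarith
          beta_reduce
          nlinarith [mul_nonneg hsq hlin])
      have hcfin := (hc (max T4 (max T1 T2)) (le_trans hTT1 (le_trans (le_max_left T1 T2) (le_max_right T4 _)))).1
      have hfin := h4' (max T4 (max T1 T2)) (le_max_left _ _)
      linarith
  · rcases mu_main (f := e1) (g := e2) (E := fun t => -(d1 t + d2 t)) hval3 hval4
      (fun t ht => by
        have h3 := hval1 t ht; have h4 := hval2 t ht
        beta_reduce
        exact abs_le.mpr ⟨by linarith [h3.2, h4.2], by linarith [h3.1, h4.1]⟩)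
      (fun t ht => by have := he1 t ht; convert this using 1; ring)
      (fun t ht => by have := he2 t ht; convert this using 1; ring)
      with h | ⟨T, hT0, hcase⟩
    · exact h
    exfalso
    rcases hcase with hc | hc
    · -- e1, e2 ≥ 7/8 eventually
      obtain ⟨T1, hTT1, h1⟩ := reach_above (f := d1)
        (f' := fun t => (1/4) * (1 - d1 t ^ 2) * (d2 t + e1 t + e2 t))
        (T := T) (b := 3/4) (by norm_num)
        (fun t ht => hval1 t (le_trans hT0 ht))
        (fun t ht => hd1 t (le_trans hT0 ht))
        (fun t ht => by
          have h4 := hval1 t (le_trans hT0 ht)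
          have h5 := hval2 t (le_trans hT0 ht)
          have h6 := hval3 t (le_trans hT0 ht)
          have h7 := hval4 t (le_trans hT0 ht)
          have hcc := hc t ht
          have hcc1 := hcc.1; have hcc2 := hcc.2
          have h41 := h4.1; have h42 := h4.2
          have h51 := h5.1; have h52 := h5.2
          have h61 := h6.1; have h62 := h6.2
          have h71 := h7.1; have h72 := h7.2
          have hsq : (0:ℝ) ≤ 1 - d1 t ^ 2 := by nlinarith [h4.1, h4.2]
          have hlin : (0:ℝ) ≤ (d2 t + e1 t + e2 t) - 1/2 := by linarith
          beta_reduce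
          nlinarith [mul_nonneg hsq hlin])
      obtain ⟨T2, hTT2, h2⟩ := reach_above (f := d2)
        (f' := fun t => (1/4) * (1 - d2 t ^ 2) * (d1 t + e1 t + e2 t))
        (T := T) (b := 3/4) (by norm_num)
        (fun t ht => hval2 t (le_trans hT0 ht))
        (fun t ht => hd2 t (le_trans hT0 ht))
        (fun t ht => by
          have h4 := hval1 t (le_trans hT0 ht)
          have h5 := hval2 t (le_trans hT0 ht)
          have h6 := hval3 t (le_trans hT0 ht)
          have h7 := hval4 t (le_trans hT0 ht)
          have hcc := hc t ht
          have hcc1 := hcc.1; have hcc2 := hcc.2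
          have h41 := h4.1; have h42 := h4.2
          have h51 := h5.1; have h52 := h5.2
          have h61 := h6.1; have h62 := h6.2
          have h71 := h7.1; have h72 := h7.2
          have hsq : (0:ℝ) ≤ 1 - d2 t ^ 2 := by nlinarith [h5.1, h5.2]
          have hlin : (0:ℝ) ≤ (d1 t + e1 t + e2 t) - 1/2 := by linarith
          beta_reduce
          nlinarith [mul_nonneg hsq hlin])
      obtain ⟨T4, hTT4, h4'⟩ := reach_below (f := e1)
        (f' := fun t => -((1/4) * (1 - e1 t ^ 2) * (d1 t + d2 t - e2 t)))
        (T := max T1 T2) (b := 0) (by norm_num)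
        (fun t ht => hval3 t (le_trans hT0 (le_trans hTT1 (le_trans (le_max_left T1 T2) ht))))
        (fun t ht => he1 t (le_trans hT0 (le_trans hTT1 (le_trans (le_max_left T1 T2) ht))))
        (fun t ht => by
          have h0t : (0:ℝ) ≤ t := le_trans hT0 (le_trans hTT1 (le_trans (le_max_left T1 T2) ht))
          have hh1 := h1 t (le_trans (le_max_left T1 T2) ht)
          have hh2 := h2 t (le_trans (le_max_right T1 T2) ht)
          have h4 := hval1 t h0t
          have h5 := hval2 t h0t
          have h6 := hval3 t h0t
          have h7 := hval4 t h0t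
          have h41 := h4.1; have h42 := h4.2
          have h51 := h5.1; have h52 := h5.2
          have h61 := h6.1; have h62 := h6.2
          have h71 := h7.1; have h72 := h7.2
          have hsq : (0:ℝ) ≤ 1 - e1 t ^ 2 := by nlinarith [h6.1, h6.2]
          have hlin : (0:ℝ) ≤ (d1 t + d2 t - e2 t) - 1/2 := by linarith
          beta_reduce
          nlinarith [mul_nonneg hsq hlin])
      have hcfin := (hc (max T4 (max T1 T2)) (le_trans hTT1 (le_trans (le_max_left T1 T2) (le_max_right T4 _)))).1
      have hfin := h4' (max T4 (max T1 T2)) (le_max_left _ _)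
      have hfin2 := hcfin
      linarith
    · -- e1, e2 ≤ -7/8 eventually
      obtain ⟨T1, hTT1, h1⟩ := reach_below (f := d1)
        (f' := fun t => (1/4) * (1 - d1 t ^ 2) * (d2 t + e1 t + e2 t))
        (T := T) (b := -(3/4)) (by norm_num)
        (fun t ht => hval1 t (le_trans hT0 ht))
        (fun t ht => hd1 t (le_trans hT0 ht))
        (fun t ht => by
          have h4 := hval1 t (le_trans hT0 ht)
          have h5 := hval2 t (le_trans hT0 ht)
          have h6 := hval3 t (le_trans hT0 ht)
          have h7 := hval4 t (le_trans hT0 ht)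
          have hcc := hc t ht
          have hcc1 := hcc.1; have hcc2 := hcc.2
          have h41 := h4.1; have h42 := h4.2
          have h51 := h5.1; have h52 := h5.2
          have h61 := h6.1; have h62 := h6.2
          have h71 := h7.1; have h72 := h7.2
          have hsq : (0:ℝ) ≤ 1 - d1 t ^ 2 := by nlinarith [h4.1, h4.2]
          have hlin : (0:ℝ) ≤ -(d2 t + e1 t + e2 t) - 1/2 := by linarith
          beta_reduce
          nlinarith [mul_nonneg hsq hlin])
      obtain ⟨T2, hTT2, h2⟩ := reach_below (f := d2)
        (f' := fun t => (1/4) * (1 - d2 t ^ 2) * (d1 t + e1 t + e2 t))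
        (T := T) (b := -(3/4)) (by norm_num)
        (fun t ht => hval2 t (le_trans hT0 ht))
        (fun t ht => hd2 t (le_trans hT0 ht))
        (fun t ht => by
          have h4 := hval1 t (le_trans hT0 ht)
          have h5 := hval2 t (le_trans hT0 ht)
          have h6 := hval3 t (le_trans hT0 ht)
          have h7 := hval4 t (le_trans hT0 ht)
          have hcc := hc t ht
          have hcc1 := hcc.1; have hcc2 := hcc.2
          have h41 := h4.1; have h42 := h4.2
          have h51 := h5.1; have h52 := h5.2
          have h61 := h6.1; have h62 := h6.2
          have h71 := h7.1; have h72 := h7.2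
          have hsq : (0:ℝ) ≤ 1 - d2 t ^ 2 := by nlinarith [h5.1, h5.2]
          have hlin : (0:ℝ) ≤ -(d1 t + e1 t + e2 t) - 1/2 := by linarith
          beta_reduce
          nlinarith [mul_nonneg hsq hlin])
      obtain ⟨T4, hTT4, h4'⟩ := reach_above (f := e1)
        (f' := fun t => -((1/4) * (1 - e1 t ^ 2) * (d1 t + d2 t - e2 t)))
        (T := max T1 T2) (b := 0) (by norm_num)
        (fun t ht => hval3 t (le_trans hT0 (le_trans hTT1 (le_trans (le_max_left T1 T2) ht))))
        (fun t ht => he1 t (le_trans hT0 (le_trans hTT1 (le_trans (le_max_left T1 T2) ht))))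
        (fun t ht => by
          have h0t : (0:ℝ) ≤ t := le_trans hT0 (le_trans hTT1 (le_trans (le_max_left T1 T2) ht))
          have hh1 := h1 t (le_trans (le_max_left T1 T2) ht)
          have hh2 := h2 t (le_trans (le_max_right T1 T2) ht)
          have h4 := hval1 t h0t
          have h5 := hval2 t h0t
          have h6 := hval3 t h0t
          have h7 := hval4 t h0t
          have h41 := h4.1; have h42 := h4.2
          have h51 := h5.1; have h52 := h5.2
          have h61 := h6.1; have h62 := h6.2
          have h71 := h7.1; have h72 := h7.2
          have hsq : (0:ℝ) ≤ 1 - e1 t ^ 2 := by nlinarith [h6.1, h6.2]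
          have hlin : (0:ℝ) ≤ -(d1 t + d2 t - e2 t) - 1/2 := by linarith
          beta_reduce
          nlinarith [mul_nonneg hsq hlin])
      have hcfin := (hc (max T4 (max T1 T2)) (le_trans hTT1 (le_trans (le_max_left T1 T2) (le_max_right T4 _)))).1
      have hfin := h4' (max T4 (max T1 T2)) (le_max_left _ _)
      linarith
end
end

section
/- Consider the ODE system δ̇ᵢ = ¼(1−δᵢ²)(δ_{3−i}+ε₁+ε₂), ε̇ᵢ = −¼(1−εᵢ²)(δ₁+δ₂−ε_{3−i}), i=1,2. Let (δ₁(t),δ₂(t),ε₁(t),ε₂(t)) be a solution defined for all t ≥ 0 with values in (−1,1)^4 whose initial condition satisfies δ₁(0) ≥ δ₂(0) and ε₁(0) ≥ ε₂(0). Then for every η > 0 there exists a time t₀ ≥ 0 such that for all t ≥ t₀: δ₂(t) ≤ δ₁(t) ≤ δ₂(t) + η and ε₂(t) ≤ ε₁(t) ≤ ε₂(t) + η. -/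
noncomputable section

open Set Real

/-- The potential function `L x = log(1+x) - log(1-x) = 2 artanh x`. -/
def Lfun (x : ℝ) : ℝ := Real.log (1 + x) - Real.log (1 - x)

lemma one_sub_sq_pos {x : ℝ} (hx : x ∈ Set.Ioo (-1:ℝ) 1) : 0 < 1 - x ^ 2 := by
  nlinarith [hx.1, hx.2]

lemma hasDerivAt_Lfun {x : ℝ} (hx : x ∈ Set.Ioo (-1:ℝ) 1) :
    HasDerivAt Lfun (2 / (1 - x ^ 2)) x := by
  have h1 : (0:ℝ) < 1 + x := by linarith [hx.1]
  have h2 : (0:ℝ) < 1 - x := by linarith [hx.2]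
  have ha : HasDerivAt (fun y : ℝ => Real.log (1 + y)) ((1 + x)⁻¹ * 1) x :=
    (Real.hasDerivAt_log h1.ne').comp x ((hasDerivAt_id x).const_add 1)
  have hb : HasDerivAt (fun y : ℝ => Real.log (1 - y)) ((1 - x)⁻¹ * (-1)) x :=
    (Real.hasDerivAt_log h2.ne').comp x ((hasDerivAt_id x).const_sub 1)
  have := ha.sub hb
  refine this.congr_deriv ?_
  have h3 : (1:ℝ) - x ^ 2 ≠ 0 := (one_sub_sq_pos hx).ne'
  field_simp [h1.ne', h2.ne']
  ring

/-- Expansion property: `L a - L b ≥ 2 (a - b)` for `b ≤ a` in `(-1,1)`. -/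
lemma Lfun_expand {a b : ℝ} (ha : a ∈ Set.Ioo (-1:ℝ) 1) (hb : b ∈ Set.Ioo (-1:ℝ) 1)
    (hba : b ≤ a) : 2 * (a - b) ≤ Lfun a - Lfun b := by
  set φ : ℝ → ℝ := fun x => Lfun x - 2 * x with hφ
  have hlin : ∀ (c x : ℝ), HasDerivAt (fun y : ℝ => c * y) c x := fun c x => by
    simpa using (hasDerivAt_id x).const_mul c
  have hd : ∀ x ∈ Set.Ioo (-1:ℝ) 1, HasDerivAt φ (2 / (1 - x ^ 2) - 2) x := fun x hx =>
    (hasDerivAt_Lfun hx).sub (hlin 2 x)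
  have hmono : MonotoneOn φ (Set.Ioo (-1:ℝ) 1) := by
    apply monotoneOn_of_deriv_nonneg (convex_Ioo _ _)
    · intro x hx; exact (hd x hx).continuousAt.continuousWithinAt
    · intro x hx
      rw [interior_Ioo] at hx
      exact (hd x hx).differentiableAt.differentiableWithinAt
    · intro x hx
      rw [interior_Ioo] at hx
      rw [(hd x hx).deriv]
      have h1 := one_sub_sq_pos hx
      have h2 : x ^ 2 ≥ 0 := sq_nonneg x
      have : (2:ℝ) ≤ 2 / (1 - x ^ 2) := by
        rw [le_div_iff₀ h1]; nlinarith
      linarith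
  have := hmono hb ha hba
  simp only [hφ] at this
  linarith

/-- Key abstract lemma. -/
lemma key (p q A : ℝ → ℝ)
    (hmem : ∀ t, 0 ≤ t → p t ∈ Set.Ioo (-1:ℝ) 1 ∧ q t ∈ Set.Ioo (-1:ℝ) 1)
    (hA : ∀ t, 0 ≤ t → |A t| ≤ 2)
    (hp : ∀ t, 0 ≤ t → HasDerivAt p ((1/4) * (1 - p t ^ 2) * (q t + A t)) t)
    (hq : ∀ t, 0 ≤ t → HasDerivAt q ((1/4) * (1 - q t ^ 2) * (p t + A t)) t)
    (h0 : q 0 ≤ p 0) {η : ℝ} (hη : 0 < η) :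
    ∃ t₀ ≥ (0:ℝ), ∀ t ≥ t₀, q t ≤ p t ∧ p t ≤ q t + η := by
  set u : ℝ → ℝ := fun t => Lfun (p t) - Lfun (q t) with hu_def
  -- derivative of u
  have hu : ∀ t, 0 ≤ t → HasDerivAt u ((1/2) * (q t - p t)) t := by
    intro t ht
    obtain ⟨hpt, hqt⟩ := hmem t ht
    have h1 : HasDerivAt (fun s => Lfun (p s))
        ((2 / (1 - p t ^ 2)) * ((1/4) * (1 - p t ^ 2) * (q t + A t))) t :=
      (hasDerivAt_Lfun hpt).comp t (hp t ht)
    have h2 : HasDerivAt (fun s => Lfun (q s))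
        ((2 / (1 - q t ^ 2)) * ((1/4) * (1 - q t ^ 2) * (p t + A t))) t :=
      (hasDerivAt_Lfun hqt).comp t (hq t ht)
    have e1 : (2 / (1 - p t ^ 2)) * ((1/4) * (1 - p t ^ 2) * (q t + A t))
        = (1/2) * (q t + A t) := by
      field_simp [(one_sub_sq_pos hpt).ne']
      ring
    have e2 : (2 / (1 - q t ^ 2)) * ((1/4) * (1 - q t ^ 2) * (p t + A t))
        = (1/2) * (p t + A t) := by
      field_simp [(one_sub_sq_pos hqt).ne']
      ring
    rw [e1] at h1; rw [e2] at h2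
    have := h1.sub h2
    refine this.congr_deriv ?_
    ring
  -- |p - q| ≤ |u|/2
  have habs : ∀ t, 0 ≤ t → 2 * |p t - q t| ≤ |u t| := by
    intro t ht
    obtain ⟨hpt, hqt⟩ := hmem t ht
    rcases le_total (q t) (p t) with h | h
    · have := Lfun_expand hpt hqt h
      rw [abs_of_nonneg (by linarith : (0:ℝ) ≤ p t - q t)]
      calc 2 * (p t - q t) ≤ Lfun (p t) - Lfun (q t) := this
        _ ≤ |u t| := le_abs_self _
    · have := Lfun_expand hqt hpt h
      rw [abs_of_nonpos (by linarith : p t - q t ≤ 0)]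
      have h2 : u t ≤ -(2 * (q t - p t)) := by
        simp only [hu_def]; linarith
      calc 2 * -(p t - q t) = 2 * (q t - p t) := by ring
        _ ≤ -(u t) := by linarith
        _ ≤ |u t| := neg_le_abs _
  have hsign : ∀ t, 0 ≤ t → p t < q t → u t < 0 := by
    intro t ht hlt
    obtain ⟨hpt, hqt⟩ := hmem t ht
    have := Lfun_expand hqt hpt hlt.le
    simp only [hu_def]
    nlinarith
  have hu0 : 0 ≤ u 0 := by
    have h := Lfun_expand (hmem 0 le_rfl).1 (hmem 0 le_rfl).2 h0
    simp only [hu_def]; linarith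
  clear_value u
  -- Grönwall: |u b| ≤ |u a| * exp((b-a)/4)
  have gron : ∀ a b : ℝ, 0 ≤ a → a ≤ b → |u b| ≤ |u a| * Real.exp ((1/4) * (b - a)) := by
    intro a b ha hab
    have hcont : ContinuousOn u (Set.Icc a b) := fun x hx =>
      (hu x (le_trans ha hx.1)).continuousAt.continuousWithinAt
    have hderiv : ∀ x ∈ Set.Ico a b,
        HasDerivWithinAt u ((fun s => (1/2) * (q s - p s)) x) (Set.Ici x) x := fun x hx =>
      (hu x (le_trans ha hx.1)).hasDerivWithinAt
    have hbound : ∀ x ∈ Set.Ico a b,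
        ‖(fun s => (1/2) * (q s - p s)) x‖ ≤ (1/4) * ‖u x‖ + 0 := by
      intro x hx
      have := habs x (le_trans ha hx.1)
      simp only [Real.norm_eq_abs, add_zero]
      rw [abs_mul, abs_of_nonneg (by norm_num : (0:ℝ) ≤ (1/2:ℝ))]
      have : |q x - p x| = |p x - q x| := abs_sub_comm _ _
      rw [this]
      have h2 := habs x (le_trans ha hx.1)
      linarith
    have := norm_le_gronwallBound_of_norm_deriv_right_le hcont hderiv
      (le_refl ‖u a‖) hbound b ⟨hab, le_refl b⟩
    rw [gronwallBound_ε0] at this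
    simpa [Real.norm_eq_abs] using this
  -- u is nonnegative for all t ≥ 0
  have hupos : ∀ t, 0 ≤ t → 0 ≤ u t := by
    intro T hT
    by_contra hneg
    push_neg at hneg
    -- IVT: there is r ∈ [0,T] with u r = 0
    have hcont : ContinuousOn u (Set.Icc 0 T) := fun x hx =>
      (hu x hx.1).continuousAt.continuousWithinAt
    have h0T : (0:ℝ) ∈ Set.Icc (u T) (u 0) := ⟨le_of_lt hneg, hu0⟩
    have := intermediate_value_Icc' hT hcont h0T
    obtain ⟨r, hr, hur⟩ := this
    have hle := gron r T hr.1 hr.2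
    rw [hur] at hle
    have h0' : |u T| ≤ 0 := by simpa using hle
    have : u T = 0 := abs_eq_zero.mp (le_antisymm h0' (abs_nonneg _))
    linarith
  -- q t ≤ p t for all t ≥ 0
  have hqp : ∀ t, 0 ≤ t → q t ≤ p t := by
    intro t ht
    by_contra h
    push_neg at h
    have h2 := hsign t ht h
    linarith [hupos t ht]
  -- u is antitone on [0, ∞)
  have hanti : AntitoneOn u (Set.Ici (0:ℝ)) := by
    apply antitoneOn_of_deriv_nonpos (convex_Ici 0)
    · intro x hx; exact (hu x hx).continuousAt.continuousWithinAt
    · intro x hx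
      rw [interior_Ici] at hx
      exact (hu x hx.le).differentiableAt.differentiableWithinAt
    · intro x hx
      rw [interior_Ici] at hx
      rw [(hu x hx.le).deriv]
      have := hqp x hx.le
      linarith
  -- main conclusion via contradiction
  by_contra hbad
  push_neg at hbad
  have hbad' : ∀ t₀, 0 ≤ t₀ → ∃ t, t₀ ≤ t ∧ η < p t - q t := by
    intro t₀ ht₀
    obtain ⟨t, ht, hcon⟩ := hbad t₀ ht₀
    refine ⟨t, ht, ?_⟩
    have hq' := hqp t (le_trans ht₀ ht)
    have := hcon hq'
    linarith
  have hlin2 : ∀ (c x : ℝ), HasDerivAt (fun y : ℝ => c * y) c x := fun c x => by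
    simpa using (hasDerivAt_id x).const_mul c
  -- derivative bound on g = p - q
  have hg : ∀ t, 0 ≤ t → HasDerivAt (fun s => p s - q s)
      ((1/4) * (1 - p t ^ 2) * (q t + A t) - (1/4) * (1 - q t ^ 2) * (p t + A t)) t :=
    fun t ht => (hp t ht).sub (hq t ht)
  have hgbound : ∀ t, 0 ≤ t →
      |(1/4) * (1 - p t ^ 2) * (q t + A t) - (1/4) * (1 - q t ^ 2) * (p t + A t)| ≤ 2 := by
    intro t ht
    obtain ⟨hpt, hqt⟩ := hmem t ht
    have hAt := abs_le.mp (hA t ht)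
    have h1 := one_sub_sq_pos hpt
    have h2 := one_sub_sq_pos hqt
    have h3 : p t ^ 2 ≥ 0 := sq_nonneg _
    have h4 : q t ^ 2 ≥ 0 := sq_nonneg _
    rw [abs_le]
    constructor <;> nlinarith [hpt.1, hpt.2, hqt.1, hqt.2, hAt.1, hAt.2]
  -- on [t, t+η/4], if g t > η then g ≥ η/2
  have step : ∀ t, 0 ≤ t → η < p t - q t → u (t + η/4) ≤ u t - η^2/16 := by
    intro t ht hgt
    have hge : ∀ r ∈ Set.Icc t (t + η/4), η/2 ≤ p r - q r := by
      intro r hr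
      have hmono2 : MonotoneOn (fun s => (p s - q s) + 2 * s) (Set.Icc t (t + η/4)) := by
        apply monotoneOn_of_deriv_nonneg (convex_Icc _ _)
        · intro x hx
          exact (((hg x (le_trans ht hx.1)).add
            (hlin2 2 x)).continuousAt).continuousWithinAt
        · intro x hx
          rw [interior_Icc] at hx
          exact ((hg x (le_trans ht hx.1.le)).add
            (hlin2 2 x)).differentiableAt.differentiableWithinAt
        · intro x hx
          rw [interior_Icc] at hx
          have hx0 : 0 ≤ x := le_trans ht hx.1.le
          rw [HasDerivAt.deriv (f := fun s => p s - q s + 2 * s) ((hg x hx0).add (hlin2 2 x))]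
          have := abs_le.mp (hgbound x hx0)
          linarith [this.1]
      have h5 : p t - q t + 2 * t ≤ p r - q r + 2 * r :=
        hmono2 (Set.left_mem_Icc.mpr (by linarith)) hr hr.1
      have hr2 : r ≤ t + η/4 := hr.2
      have hr1 : t ≤ r := hr.1
      nlinarith
    -- u decreases by η²/16 on [t, t+η/4]
    have hanti2 : AntitoneOn (fun s => u s + (η/4) * s) (Set.Icc t (t + η/4)) := by
      apply antitoneOn_of_deriv_nonpos (convex_Icc _ _)
      · intro x hx
        exact (((hu x (le_trans ht hx.1)).add
          (hlin2 (η/4) x)).continuousAt).continuousWithinAt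
      · intro x hx
        rw [interior_Icc] at hx
        exact ((hu x (le_trans ht hx.1.le)).add
          (hlin2 (η/4) x)).differentiableAt.differentiableWithinAt
      · intro x hx
        rw [interior_Icc] at hx
        have hx0 : 0 ≤ x := le_trans ht hx.1.le
        rw [HasDerivAt.deriv (f := fun s => u s + η / 4 * s) ((hu x hx0).add (hlin2 (η/4) x))]
        have := hge x ⟨hx.1.le, hx.2.le⟩
        linarith
    have h6 : u (t + η/4) + (η/4) * (t + η/4) ≤ u t + (η/4) * t :=
      hanti2 (Set.left_mem_Icc.mpr (by linarith))
        (Set.right_mem_Icc.mpr (by linarith)) (by linarith)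
    nlinarith
  -- induction: u drops below any bound
  have hind : ∀ n : ℕ, ∃ s, 0 ≤ s ∧ u s ≤ u 0 - n * (η^2/16) := by
    intro n
    induction n with
    | zero => exact ⟨0, le_rfl, by simp⟩
    | succ n ih =>
      obtain ⟨s, hs0, hsu⟩ := ih
      obtain ⟨t, hts, hgt⟩ := hbad' s hs0
      have ht0 : 0 ≤ t := le_trans hs0 hts
      have h1 := step t ht0 hgt
      have h2 : u t ≤ u s := hanti (Set.mem_Ici.mpr hs0) (Set.mem_Ici.mpr ht0) hts
      refine ⟨t + η/4, by linarith, le_trans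
        (by linarith : u (t + η/4) ≤ u 0 - ((n:ℝ) * (η^2/16) + η^2/16))
        (le_of_eq (by push_cast; ring))⟩
  obtain ⟨n, hn⟩ := exists_nat_gt (u 0 / (η^2/16))
  obtain ⟨s, hs0, hsu⟩ := hind n
  have hc : (0:ℝ) < η^2/16 := by positivity
  have h8 : u 0 < (n:ℝ) * (η^2/16) := by
    rw [div_lt_iff₀ hc] at hn
    linarith
  have h9 := hupos s hs0
  nlinarith



/-- For every solution of the Red Queen dynamics of the
four-gene game defined for all `t ≥ 0` with values in `(−1,1)⁴` whose initial
condition satisfies `δ₁(0) ≥ δ₂(0)` and `ε₁(0) ≥ ε₂(0)`: for every `η > 0`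
there is a time `t₀ ≥ 0` after which `δ₂ ≤ δ₁ ≤ δ₂ + η` and
`ε₂ ≤ ε₁ ≤ ε₂ + η`. -/
theorem stmt8 (d1 d2 e1 e2 : ℝ → ℝ)
    (hval : ∀ t, 0 ≤ t → d1 t ∈ Set.Ioo (-1:ℝ) 1 ∧ d2 t ∈ Set.Ioo (-1:ℝ) 1 ∧
      e1 t ∈ Set.Ioo (-1:ℝ) 1 ∧ e2 t ∈ Set.Ioo (-1:ℝ) 1)
    (hd1 : ∀ t, 0 ≤ t →
      HasDerivAt d1 ((1/4) * (1 - d1 t ^ 2) * (d2 t + e1 t + e2 t)) t)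
    (hd2 : ∀ t, 0 ≤ t →
      HasDerivAt d2 ((1/4) * (1 - d2 t ^ 2) * (d1 t + e1 t + e2 t)) t)
    (he1 : ∀ t, 0 ≤ t →
      HasDerivAt e1 (-((1/4) * (1 - e1 t ^ 2) * (d1 t + d2 t - e2 t))) t)
    (he2 : ∀ t, 0 ≤ t →
      HasDerivAt e2 (-((1/4) * (1 - e2 t ^ 2) * (d1 t + d2 t - e1 t))) t)
    (hinit : d2 0 ≤ d1 0 ∧ e2 0 ≤ e1 0) :
    ∀ η > (0:ℝ), ∃ t₀ ≥ (0:ℝ), ∀ t ≥ t₀,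
      (d2 t ≤ d1 t ∧ d1 t ≤ d2 t + η) ∧ (e2 t ≤ e1 t ∧ e1 t ≤ e2 t + η) := by
  intro η hη
  obtain ⟨t₁, ht₁, H1⟩ := key d1 d2 (fun t => e1 t + e2 t)
    (fun t ht => ⟨(hval t ht).1, (hval t ht).2.1⟩)
    (fun t ht => by
      obtain ⟨_, _, h3, h4⟩ := hval t ht
      have : |e1 t + e2 t| ≤ 2 := by
        rw [abs_le]; constructor <;> [linarith [h3.1, h4.1]; linarith [h3.2, h4.2]]
      exact this)
    (fun t ht => by
      have h := hd1 t ht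
      rwa [show d2 t + e1 t + e2 t = d2 t + (e1 t + e2 t) from by ring] at h)
    (fun t ht => by
      have h := hd2 t ht
      rwa [show d1 t + e1 t + e2 t = d1 t + (e1 t + e2 t) from by ring] at h)
    hinit.1 hη
  obtain ⟨t₂, ht₂, H2⟩ := key e1 e2 (fun t => -(d1 t + d2 t))
    (fun t ht => ⟨(hval t ht).2.2.1, (hval t ht).2.2.2⟩)
    (fun t ht => by
      obtain ⟨h1, h2, _, _⟩ := hval t ht
      have : |(-(d1 t + d2 t))| ≤ 2 := by
        rw [abs_le]; constructor <;> [linarith [h1.2, h2.2]; linarith [h1.1, h2.1]]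
      exact this)
    (fun t ht => by
      have h := he1 t ht
      rwa [show -((1/4) * (1 - e1 t ^ 2) * (d1 t + d2 t - e2 t))
        = (1/4) * (1 - e1 t ^ 2) * (e2 t + -(d1 t + d2 t)) from by ring] at h)
    (fun t ht => by
      have h := he2 t ht
      rwa [show -((1/4) * (1 - e2 t ^ 2) * (d1 t + d2 t - e1 t))
        = (1/4) * (1 - e2 t ^ 2) * (e1 t + -(d1 t + d2 t)) from by ring] at h)
    hinit.2 hη
  exact ⟨max t₁ t₂, le_trans ht₁ (le_max_left _ _), fun t ht =>
    ⟨H1 t (le_trans (le_max_left _ _) ht), H2 t (le_trans (le_max_right _ _) ht)⟩⟩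
end
end

section
/- Let η ∈ (0, 1/(3√2)] and let (δ₁,δ₂,ε₁,ε₂) ∈ [−1,1]^4 satisfy 0 ≤ δ₁ − δ₂ ≤ η, 0 ≤ ε₁ − ε₂ ≤ η, and 0 < λ ≤ 1/2, where λ := ½((δ₁+δ₂)² + (ε₁+ε₂)²). Then ¼[(1−δ₁δ₂)(δ₁+δ₂)² + (1−ε₁ε₂)(ε₁+ε₂)² − (δ₁+δ₂)(ε₁+ε₂)(δ₁²+δ₂²−ε₁²−ε₂²)] > 0. (This expression equals λ̇ along solutions of the ODE system δ̇ᵢ = ¼(1−δᵢ²)(δ_{3−i}+ε₁+ε₂), ε̇ᵢ = −¼(1−εᵢ²)(δ₁+δ₂−ε_{3−i}).) -/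
/-!
In the coordinates `S = δ₁ + δ₂`, `T = ε₁ + ε₂`, `u = δ₁ - δ₂`, `v = ε₁ - ε₂` we have `2λ = S² + T²`, and
`4 λ̇ = S² + T² - Q/4 + (u²S² + v²T²)/4 - ST(u² - v²)/2` with `Q = S⁴ + T⁴ + 2ST(S² - T²) ≤ 3/2 (S² + T²)²`.
For `S² + T² ≤ 1` the quartic part costs at most `3/8 (S² + T²)`, and as soon as `u², v² ≤ 2` the cross
term costs at most `(S² + T²)/2`, so `4 λ̇ ≥ (S² + T²)/8 > 0`.
-/

theorem quartic_le_three_halves_mul_sq (S T : ℝ) :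
    S ^ 4 + T ^ 4 + 2 * S * T * (S ^ 2 - T ^ 2) ≤ 3 / 2 * (S ^ 2 + T ^ 2) ^ 2 := by
  nlinarith [sq_nonneg (S ^ 2 - T ^ 2 - 2 * S * T), sq_nonneg (S * T)]

theorem mul_mul_le_sq_add_sq {S T w : ℝ} (hw₁ : -2 ≤ w) (hw₂ : w ≤ 2) :
    S * T * w ≤ S ^ 2 + T ^ 2 := by
  -- `S² + T² - STw = ((S - T)²(2 + w) + (S + T)²(2 - w)) / 4`
  nlinarith [mul_nonneg (sq_nonneg (S - T)) (by linarith : 0 ≤ 2 + w),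
    mul_nonneg (sq_nonneg (S + T)) (by linarith : 0 ≤ 2 - w)]

theorem sumDiff_lambdaDot_pos {S T u v : ℝ} (hr₀ : 0 < S ^ 2 + T ^ 2) (hr₁ : S ^ 2 + T ^ 2 ≤ 1)
    (hu : u ^ 2 ≤ 2) (hv : v ^ 2 ≤ 2) :
    0 < S ^ 2 + T ^ 2 - (S ^ 4 + T ^ 4 + 2 * S * T * (S ^ 2 - T ^ 2)) / 4
      + (u ^ 2 * S ^ 2 + v ^ 2 * T ^ 2) / 4 - S * T * (u ^ 2 - v ^ 2) / 2 := by
  have hQ := quartic_le_three_halves_mul_sq S T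
  have hr_sq : (S ^ 2 + T ^ 2) ^ 2 ≤ S ^ 2 + T ^ 2 := by nlinarith
  have hcross : S * T * (u ^ 2 - v ^ 2) ≤ S ^ 2 + T ^ 2 :=
    mul_mul_le_sq_add_sq (by nlinarith [sq_nonneg u]) (by nlinarith [sq_nonneg v])
  have hdiag : 0 ≤ u ^ 2 * S ^ 2 + v ^ 2 * T ^ 2 := by positivity
  linarith

theorem one_div_three_mul_sqrt_two_le_one : 1 / (3 * √2) ≤ 1 := by
  rw [div_le_one (by positivity)]
  linarith [Real.one_lt_sqrt_two]

theorem stmt9_general (η d1 d2 e1 e2 : ℝ)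
    (hη : 0 < η ∧ η ≤ 1 / (3 * Real.sqrt 2))
    (hdd : 0 ≤ d1 - d2 ∧ d1 - d2 ≤ η)
    (hee : 0 ≤ e1 - e2 ∧ e1 - e2 ≤ η)
    (hlampos : 0 < (1/2) * ((d1 + d2) ^ 2 + (e1 + e2) ^ 2))
    (hlamle : (1/2) * ((d1 + d2) ^ 2 + (e1 + e2) ^ 2) ≤ 1/2) :
    0 < (1/4) * ((1 - d1 * d2) * (d1 + d2) ^ 2 + (1 - e1 * e2) * (e1 + e2) ^ 2 -
      (d1 + d2) * (e1 + e2) * (d1 ^ 2 + d2 ^ 2 - e1 ^ 2 - e2 ^ 2)) := by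
  have hη₁ : η ≤ 1 := hη.2.trans one_div_three_mul_sqrt_two_le_one
  have hu : (d1 - d2) ^ 2 ≤ 2 := by nlinarith [hdd.1, hdd.2]
  have hv : (e1 - e2) ^ 2 ≤ 2 := by nlinarith [hee.1, hee.2]
  linear_combination (1 / 4) * sumDiff_lambdaDot_pos (S := d1 + d2) (T := e1 + e2)
    (by linarith) (by linarith) hu hv

/-- (Lemma on `λ̇ > 0`.) Let `η ∈ (0, 1/(3√2)]` and let
`(δ₁,δ₂,ε₁,ε₂) ∈ [−1,1]⁴` satisfy `0 ≤ δ₁ − δ₂ ≤ η`, `0 ≤ ε₁ − ε₂ ≤ η`, and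
`0 < λ ≤ 1/2` where `λ = ½((δ₁+δ₂)² + (ε₁+ε₂)²)`. Then
`¼[(1−δ₁δ₂)(δ₁+δ₂)² + (1−ε₁ε₂)(ε₁+ε₂)² − (δ₁+δ₂)(ε₁+ε₂)(δ₁²+δ₂²−ε₁²−ε₂²)] > 0`. -/
theorem stmt9 (η d1 d2 e1 e2 : ℝ)
    (hη : 0 < η ∧ η ≤ 1 / (3 * Real.sqrt 2))
    (hd1 : d1 ∈ Set.Icc (-1:ℝ) 1) (hd2 : d2 ∈ Set.Icc (-1:ℝ) 1)
    (he1 : e1 ∈ Set.Icc (-1:ℝ) 1) (he2 : e2 ∈ Set.Icc (-1:ℝ) 1)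
    (hdd : 0 ≤ d1 - d2 ∧ d1 - d2 ≤ η)
    (hee : 0 ≤ e1 - e2 ∧ e1 - e2 ≤ η)
    (hlampos : 0 < (1/2) * ((d1 + d2) ^ 2 + (e1 + e2) ^ 2))
    (hlamle : (1/2) * ((d1 + d2) ^ 2 + (e1 + e2) ^ 2) ≤ 1/2) :
    0 < (1/4) * ((1 - d1 * d2) * (d1 + d2) ^ 2 + (1 - e1 * e2) * (e1 + e2) ^ 2 -
      (d1 + d2) * (e1 + e2) * (d1 ^ 2 + d2 ^ 2 - e1 ^ 2 - e2 ^ 2)) :=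
  stmt9_general η d1 d2 e1 e2 hη hdd hee hlampos hlamle
end

section
/- Consider the ODE system δ̇ᵢ = ¼(1−δᵢ²)(δ_{3−i}+ε₁+ε₂), ε̇ᵢ = −¼(1−εᵢ²)(δ₁+δ₂−ε_{3−i}), i=1,2, and let λ(t) := ½((δ₁(t)+δ₂(t))² + (ε₁(t)+ε₂(t))²). For every solution defined for all t ≥ 0 with values in (−1,1)^4 whose initial condition does not lie in the skew-symmetric subspace Š = {δ₁ = −δ₂ and ε₁ = −ε₂}, there exists a finite time t₀ ≥ 0 such that λ(t) ≥ min{1/2, λ(t₀)} > 0 for all t ≥ t₀. -/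
noncomputable section

theorem lemF (S E : ℝ) (hS : 0 ≤ S) (hE : 0 ≤ E) (hb : S^2 + E^2 ≤ 1) :
    0 ≤ S^2 + E^2 - (S^4 + E^4)/4 + (1/2)*S*E*(E^2 - S^2) := by
  nlinarith [mul_nonneg hS hE, sq_nonneg (S-E), sq_nonneg (S+E), mul_nonneg (mul_nonneg hS hE) (sq_nonneg (S-E)), mul_nonneg (mul_nonneg hS hE) (sq_nonneg (S+E)), sq_nonneg (S*E), sq_nonneg (S^2-E^2), sq_nonneg (S^2+E^2)]

theorem lemH (S E : ℝ) (hS : 0 ≤ S) (hSE : S ≤ 2*E) (hb : S^2 + E^2 ≤ 1) :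
    0 ≤ S^2 + E^2 - (S^4 + E^4)/4 + (1/2)*S*E*(E^2 - S^2) - (1/4)*(2-S)^2*S*(2*E-S) := by
  nlinarith [mul_nonneg hS (by linarith : (0:ℝ) ≤ 2*E - S), sq_nonneg (S-E), sq_nonneg (S+E), mul_nonneg (mul_nonneg hS (by linarith : (0:ℝ) ≤ 2*E-S)) (sq_nonneg (S-E)), mul_nonneg (mul_nonneg hS (by linarith : (0:ℝ) ≤ 2*E-S)) (sq_nonneg (S+E)), sq_nonneg (S*E), sq_nonneg (S^2-E^2), mul_nonneg hS (by linarith : (0:ℝ) ≤ E), sq_nonneg (S-2*E), sq_nonneg (S*(2*E-S))]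

theorem keyQuad (d1 d2 e1 e2 : ℝ) (h1 : -1 ≤ d1) (h1' : d1 ≤ 1) (h2 : -1 ≤ d2) (h2' : d2 ≤ 1)
    (h3 : -1 ≤ e1) (h3' : e1 ≤ 1) (h4 : -1 ≤ e2) (h4' : e2 ≤ 1)
    (hS : 0 ≤ d1 + d2) (hE : 0 ≤ e1 + e2)
    (hball : (d1+d2)^2 + (e1+e2)^2 ≤ 1) :
    0 ≤ (d1+d2) * ((1/4) * (1 - d1 ^ 2) * (d2 + e1 + e2) + (1/4) * (1 - d2 ^ 2) * (d1 + e1 + e2))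
      + (e1+e2) * (-((1/4) * (1 - e1 ^ 2) * (d1 + d2 - e2)) + -((1/4) * (1 - e2 ^ 2) * (d1 + d2 - e1))) := by
  have hS2 : 0 ≤ d1 + d2 := hS
  have hq : 0 ≤ (e1-e2)^2 * ((e1+e2) * ((e1+e2) + 2*(d1+d2))) :=
    mul_nonneg (sq_nonneg _) (mul_nonneg hE (by linarith))
  rcases le_total (d1+d2) (2*(e1+e2)) with hc | hc
  · have hH := lemH (d1+d2) (e1+e2) hS hc hball
    have hw : 0 ≤ (4*(1-d1)*(1-d2)) * ((d1+d2)*(2*(e1+e2)-(d1+d2))) := by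
      apply mul_nonneg
      · nlinarith
      · exact mul_nonneg hS (by linarith)
    have hid : (d1+d2) * ((1/4) * (1 - d1 ^ 2) * (d2 + e1 + e2) + (1/4) * (1 - d2 ^ 2) * (d1 + e1 + e2))
      + (e1+e2) * (-((1/4) * (1 - e1 ^ 2) * (d1 + d2 - e2)) + -((1/4) * (1 - e2 ^ 2) * (d1 + d2 - e1)))
      = ((((d1+d2)^2 + (e1+e2)^2 - ((d1+d2)^4 + (e1+e2)^4)/4 + (1/2)*(d1+d2)*(e1+e2)*((e1+e2)^2 - (d1+d2)^2) - (1/4)*(2-(d1+d2))^2*(d1+d2)*(2*(e1+e2)-(d1+d2)))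
        + (1/4)*((4*(1-d1)*(1-d2)) * ((d1+d2)*(2*(e1+e2)-(d1+d2))))
        + (1/4)*((e1-e2)^2 * ((e1+e2) * ((e1+e2) + 2*(d1+d2)))))/4) := by ring
    rw [hid]; linarith [hH, hw, hq]
  · have hF := lemF (d1+d2) (e1+e2) hS hE hball
    have hp : 0 ≤ (d1-d2)^2 * ((d1+d2) * ((d1+d2) - 2*(e1+e2))) :=
      mul_nonneg (sq_nonneg _) (mul_nonneg hS (by linarith))
    have hid : (d1+d2) * ((1/4) * (1 - d1 ^ 2) * (d2 + e1 + e2) + (1/4) * (1 - d2 ^ 2) * (d1 + e1 + e2))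
      + (e1+e2) * (-((1/4) * (1 - e1 ^ 2) * (d1 + d2 - e2)) + -((1/4) * (1 - e2 ^ 2) * (d1 + d2 - e1)))
      = ((((d1+d2)^2 + (e1+e2)^2 - ((d1+d2)^4 + (e1+e2)^4)/4 + (1/2)*(d1+d2)*(e1+e2)*((e1+e2)^2 - (d1+d2)^2))
        + (1/4)*((d1-d2)^2 * ((d1+d2) * ((d1+d2) - 2*(e1+e2))))
        + (1/4)*((e1-e2)^2 * ((e1+e2) * ((e1+e2) + 2*(d1+d2)))))/4) := by ring
    rw [hid]; linarith [hF, hp, hq]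

theorem key_s10 (d1 d2 e1 e2 : ℝ) (h1 : -1 ≤ d1) (h1' : d1 ≤ 1) (h2 : -1 ≤ d2) (h2' : d2 ≤ 1)
    (h3 : -1 ≤ e1) (h3' : e1 ≤ 1) (h4 : -1 ≤ e2) (h4' : e2 ≤ 1)
    (hball : (d1+d2)^2 + (e1+e2)^2 ≤ 1) :
    0 ≤ (d1+d2) * ((1/4) * (1 - d1 ^ 2) * (d2 + e1 + e2) + (1/4) * (1 - d2 ^ 2) * (d1 + e1 + e2))
      + (e1+e2) * (-((1/4) * (1 - e1 ^ 2) * (d1 + d2 - e2)) + -((1/4) * (1 - e2 ^ 2) * (d1 + d2 - e1))) := by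
  rcases le_total 0 (d1+d2) with hS | hS <;> rcases le_total 0 (e1+e2) with hE | hE
  · exact keyQuad d1 d2 e1 e2 h1 h1' h2 h2' h3 h3' h4 h4' hS hE hball
  · -- S ≥ 0, E ≤ 0 : use (−e1,−e2,d1,d2)
    have := keyQuad (-e1) (-e2) d1 d2 (by linarith) (by linarith) (by linarith) (by linarith)
      h1 h1' h2 h2' (by linarith) hS (by nlinarith)
    nlinarith [this]
  · -- S ≤ 0, E ≥ 0 : use (e1,e2,−d1,−d2)
    have := keyQuad e1 e2 (-d1) (-d2) h3 h3' h4 h4' (by linarith) (by linarith) (by linarith) (by linarith)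
      hE (by linarith) (by nlinarith)
    nlinarith [this]
  · have := keyQuad (-d1) (-d2) (-e1) (-e2) (by linarith) (by linarith) (by linarith) (by linarith)
      (by linarith) (by linarith) (by linarith) (by linarith) (by linarith) (by linarith) (by nlinarith)
    nlinarith [this]


/-- For every solution of the Red Queen dynamics of the
four-gene game defined for all `t ≥ 0` with values in `(−1,1)⁴` whose initial
condition is outside the skew-symmetric subspace `{δ₁ = −δ₂, ε₁ = −ε₂}`, there
is a finite time `t₀ ≥ 0` such that
`λ(t) ≥ min{1/2, λ(t₀)} > 0` for all `t ≥ t₀`, where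
`λ(t) = ½((δ₁+δ₂)² + (ε₁+ε₂)²)`. -/
theorem stmt10 (d1 d2 e1 e2 : ℝ → ℝ)
    (hval : ∀ t, 0 ≤ t → d1 t ∈ Set.Ioo (-1:ℝ) 1 ∧ d2 t ∈ Set.Ioo (-1:ℝ) 1 ∧
      e1 t ∈ Set.Ioo (-1:ℝ) 1 ∧ e2 t ∈ Set.Ioo (-1:ℝ) 1)
    (hd1 : ∀ t, 0 ≤ t →
      HasDerivAt d1 ((1/4) * (1 - d1 t ^ 2) * (d2 t + e1 t + e2 t)) t)
    (hd2 : ∀ t, 0 ≤ t →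
      HasDerivAt d2 ((1/4) * (1 - d2 t ^ 2) * (d1 t + e1 t + e2 t)) t)
    (he1 : ∀ t, 0 ≤ t →
      HasDerivAt e1 (-((1/4) * (1 - e1 t ^ 2) * (d1 t + d2 t - e2 t))) t)
    (he2 : ∀ t, 0 ≤ t →
      HasDerivAt e2 (-((1/4) * (1 - e2 t ^ 2) * (d1 t + d2 t - e1 t))) t)
    (hskew : ¬ (d1 0 = -d2 0 ∧ e1 0 = -e2 0)) :
    ∃ t₀ ≥ (0:ℝ),
      0 < min (1/2 : ℝ)
        ((1/2) * ((d1 t₀ + d2 t₀) ^ 2 + (e1 t₀ + e2 t₀) ^ 2)) ∧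
      ∀ t ≥ t₀,
        min (1/2 : ℝ) ((1/2) * ((d1 t₀ + d2 t₀) ^ 2 + (e1 t₀ + e2 t₀) ^ 2)) ≤
          (1/2) * ((d1 t + d2 t) ^ 2 + (e1 t + e2 t) ^ 2) := by
  set lam : ℝ → ℝ := fun t => (1/2) * ((d1 t + d2 t) ^ 2 + (e1 t + e2 t) ^ 2) with hlamdef
  set D : ℝ → ℝ := fun t =>
    (d1 t + d2 t) * ((1/4) * (1 - d1 t ^ 2) * (d2 t + e1 t + e2 t)
      + (1/4) * (1 - d2 t ^ 2) * (d1 t + e1 t + e2 t))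
    + (e1 t + e2 t) * (-((1/4) * (1 - e1 t ^ 2) * (d1 t + d2 t - e2 t))
      + -((1/4) * (1 - e2 t ^ 2) * (d1 t + d2 t - e1 t))) with hDdef
  have hlam : ∀ t, 0 ≤ t → HasDerivAt lam (D t) t := by
    intro t ht
    have h12 := (hd1 t ht).add (hd2 t ht)
    have h34 := (he1 t ht).add (he2 t ht)
    have := ((h12.pow 2).add (h34.pow 2)).const_mul (1/2 : ℝ)
    refine HasDerivAt.congr_deriv this ?_
    simp only [Pi.add_apply]
    push_cast
    ring
  have hDnonneg : ∀ t, 0 ≤ t → lam t ≤ 1/2 → 0 ≤ D t := by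
    intro t ht hle
    obtain ⟨hv1, hv2, hv3, hv4⟩ := hval t ht
    exact key_s10 (d1 t) (d2 t) (e1 t) (e2 t) hv1.1.le hv1.2.le hv2.1.le hv2.2.le
      hv3.1.le hv3.2.le hv4.1.le hv4.2.le (by simp only [hlamdef] at hle; linarith)
  have hlam0 : 0 < lam 0 := by
    rcases not_and_or.mp hskew with h | h
    · have h' : d1 0 + d2 0 ≠ 0 := fun hc => h (by linarith)
      have := pow_pos (abs_pos.mpr h') 2
      simp only [hlamdef]
      nlinarith [sq_nonneg (e1 0 + e2 0), sq_abs (d1 0 + d2 0)]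
    · have h' : e1 0 + e2 0 ≠ 0 := fun hc => h (by linarith)
      simp only [hlamdef]
      nlinarith [sq_nonneg (d1 0 + d2 0), sq_abs (e1 0 + e2 0),
        pow_pos (abs_pos.mpr h') 2]
  refine ⟨0, le_refl 0, lt_min (by norm_num) hlam0, ?_⟩
  intro T hT
  show min (1/2 : ℝ) (lam 0) ≤ lam T
  by_contra hcon
  push_neg at hcon
  set m := min (1/2 : ℝ) (lam 0) with hmdef
  have hm12 : m ≤ 1/2 := min_le_left _ _
  have hm0 : m ≤ lam 0 := min_le_right _ _
  -- the set of good times in [0, T]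
  set A : Set ℝ := Set.Icc 0 T ∩ lam ⁻¹' Set.Ici m with hAdef
  have hA0 : (0:ℝ) ∈ A := ⟨⟨le_refl 0, hT⟩, hm0⟩
  have hAne : A.Nonempty := ⟨0, hA0⟩
  have hAbdd : BddAbove A := ⟨T, fun x hx => hx.1.2⟩
  have hcontOn : ContinuousOn lam (Set.Icc 0 T) := fun t ht =>
    (hlam t ht.1).continuousAt.continuousWithinAt
  have hAclosed : IsClosed A :=
    hcontOn.preimage_isClosed_of_isClosed isClosed_Icc isClosed_Ici
  set s := sSup A with hsdef
  have hsA : s ∈ A := hAclosed.csSup_mem hAne hAbdd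
  have hs0 : 0 ≤ s := hsA.1.1
  have hsT : s ≤ T := hsA.1.2
  have hms : m ≤ lam s := hsA.2
  have hsT' : s < T := by
    rcases lt_or_eq_of_le hsT with h | h
    · exact h
    · exfalso; rw [h] at hms; exact absurd hms (not_le.mpr hcon)
  -- for t in (s, T], lam t < m
  have hlt : ∀ t, s < t → t ≤ T → lam t < m := by
    intro t hst htT
    by_contra hge
    push_neg at hge
    have : t ∈ A := ⟨⟨le_trans hs0 hst.le, htT⟩, hge⟩
    exact absurd (le_csSup hAbdd this) (not_le.mpr hst)
  -- lam monotone on [s, T]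
  have hmono : MonotoneOn lam (Set.Icc s T) := by
    apply monotoneOn_of_deriv_nonneg (convex_Icc s T)
      (hcontOn.mono (Set.Icc_subset_Icc hs0 (le_refl T)))
    · intro x hx
      rw [interior_Icc] at hx
      exact (hlam x (le_trans hs0 hx.1.le)).differentiableAt.differentiableWithinAt
    · intro x hx
      rw [interior_Icc] at hx
      have hx0 : 0 ≤ x := le_trans hs0 hx.1.le
      rw [(hlam x hx0).deriv]
      exact hDnonneg x hx0 (le_trans (hlt x hx.1 hx.2.le).le hm12)
  have := hmono (Set.left_mem_Icc.mpr hsT) (Set.right_mem_Icc.mpr hsT) hsT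
  linarith [hcon, hms]
end
end
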